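/- arXiv:2004.06097 — 11 statements merged into one kernel-verified Lean document; each statement's English description precedes it below -/
import Mathlib

section
/- Let k, l ≥ 2 be integers and let χ be a 2-coloring of the complete graph on a finite vertex set V that is (k,l)-semisaturated, i.e., every one-vertex extension of χ contains a monochromatic K_k of color 1 containing the new vertex or a monochromatic K_l of color 2 containing the new vertex. Then |V| ≥ (k−1)(l−1). -/
/-- `S` is a monochromatic complete subgraph of color `i` under the coloring `χ`. -/
def MonoClique {β : Type*} {c : ℕ} (χ : β → β → Fin c) (i : Fin c) (S : Finset β) : Prop :=
  ∀ u ∈ S, ∀ v ∈ S, u ≠ v → χ u v = i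

/-- If a symmetric 2-coloring of the complete graph on a finite vertex set `V` is
`(k,l)`-semisaturated (every one-vertex extension contains a monochromatic `K_k` of
color `0` or a monochromatic `K_l` of color `1` containing the new vertex `none`),
then `|V| ≥ (k-1)(l-1)`. -/
theorem sat_two_colors_lower_bound {V : Type} [Fintype V] (k l : ℕ) (hk : 2 ≤ k) (hl : 2 ≤ l)
    (χ : V → V → Fin 2) (hsym : ∀ u v, χ u v = χ v u)
    (hsat : ∀ χ' : Option V → Option V → Fin 2,
      (∀ u v, χ' u v = χ' v u) →
      (∀ u v : V, χ' (some u) (some v) = χ u v) →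
      (∃ S : Finset (Option V), none ∈ S ∧ S.card = k ∧ MonoClique χ' 0 S) ∨
      (∃ S : Finset (Option V), none ∈ S ∧ S.card = l ∧ MonoClique χ' 1 S)) :
    (k - 1) * (l - 1) ≤ Fintype.card V := by
  classical
  have key : ∀ j, j ≤ l - 1 → ∃ T : Finset V, T.card = (k - 1) * j ∧
      ∀ S : Finset V, S ⊆ T → MonoClique χ 1 S → S.card ≤ j := by
    intro j
    induction j with
    | zero =>
      intro _
      exact ⟨∅, by simp, fun S hS _ => by simp [Finset.subset_empty.mp hS]⟩
    | succ j ih =>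
      intro hjl
      obtain ⟨T, hTcard, hTprop⟩ := ih (by omega)
      -- extension coloring: edges from `none` to `T` get color 1, else 0
      set χ' : Option V → Option V → Fin 2 := fun u v =>
        match u, v with
        | some u, some v => χ u v
        | none, some v => if v ∈ T then 1 else 0
        | some u, none => if u ∈ T then 1 else 0
        | none, none => 0 with hχ'
      have hsym' : ∀ u v, χ' u v = χ' v u := by
        rintro (_ | u) (_ | v) <;> simp [χ', hsym]
      have hagree : ∀ u v : V, χ' (some u) (some v) = χ u v := fun u v => rfl
      rcases hsat χ' hsym' hagree with ⟨S, hnS, hScard, hmono⟩ | ⟨S, hnS, hScard, hmono⟩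
      · -- mono color-0 K_k containing none: gives a new (k-1)-clique disjoint from T
        set C : Finset V := S.eraseNone with hC
        have hmemC : ∀ v, v ∈ C ↔ some v ∈ S := fun v => Finset.mem_eraseNone
        have hCcard : C.card = k - 1 := by
          have : C.map Function.Embedding.some = S.erase none :=
            Finset.map_some_eraseNone S
          have h2 := congrArg Finset.card this
          rw [Finset.card_map, Finset.card_erase_of_mem hnS, hScard] at h2
          exact h2
        have hCT : ∀ v ∈ C, v ∉ T := by
          intro v hv hvT
          have := hmono none hnS (some v) ((hmemC v).mp hv) (by simp)
          simp [χ', hvT] at this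
        have hCmono : MonoClique χ 0 C := by
          intro u hu v hv huv
          have := hmono (some u) ((hmemC u).mp hu) (some v) ((hmemC v).mp hv)
            (by simpa using huv)
          simpa [χ'] using this
        have hdisj : Disjoint T C := Finset.disjoint_left.mpr fun a ha hb => hCT a hb ha
        refine ⟨T ∪ C, ?_, ?_⟩
        · rw [Finset.card_union_of_disjoint hdisj, hTcard, hCcard, Nat.mul_succ]
        · intro S' hS' hS'mono
          have h1 : (S' ∩ T).card ≤ j :=
            hTprop _ Finset.inter_subset_right fun u hu v hv huv =>
              hS'mono u (Finset.mem_of_mem_inter_left hu) v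
                (Finset.mem_of_mem_inter_left hv) huv
          have h2 : (S' ∩ C).card ≤ 1 := by
            rw [Finset.card_le_one]
            intro u hu v hv
            by_contra huv
            have e1 := hS'mono u (Finset.mem_of_mem_inter_left hu) v
              (Finset.mem_of_mem_inter_left hv) huv
            have e0 := hCmono u (Finset.mem_of_mem_inter_right hu) v
              (Finset.mem_of_mem_inter_right hv) huv
            rw [e1] at e0
            exact absurd e0 (by decide)
          calc S'.card = (S' ∩ (T ∪ C)).card := by
                rw [Finset.inter_eq_left.mpr hS']
            _ = ((S' ∩ T) ∪ (S' ∩ C)).card := by rw [Finset.inter_union_distrib_left]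
            _ ≤ (S' ∩ T).card + (S' ∩ C).card := Finset.card_union_le _ _
            _ ≤ j + 1 := Nat.add_le_add h1 h2
      · -- mono color-1 K_l containing none: contradiction with hTprop
        exfalso
        set C : Finset V := S.eraseNone with hC
        have hmemC : ∀ v, v ∈ C ↔ some v ∈ S := fun v => Finset.mem_eraseNone
        have hCcard : C.card = l - 1 := by
          have : C.map Function.Embedding.some = S.erase none :=
            Finset.map_some_eraseNone S
          have h2 := congrArg Finset.card this
          rw [Finset.card_map, Finset.card_erase_of_mem hnS, hScard] at h2
          exact h2
        have hCT : C ⊆ T := by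
          intro v hv
          have := hmono none hnS (some v) ((hmemC v).mp hv) (by simp)
          by_contra hvT
          simp [χ', hvT] at this
        have hCmono : MonoClique χ 1 C := by
          intro u hu v hv huv
          have := hmono (some u) ((hmemC u).mp hu) (some v) ((hmemC v).mp hv)
            (by simpa using huv)
          simpa [χ'] using this
        have := hTprop C hCT hCmono
        omega
  obtain ⟨T, hTcard, _⟩ := key (l - 1) le_rfl
  calc (k - 1) * (l - 1) = T.card := hTcard.symm
    _ ≤ Fintype.card V := Finset.card_le_univ T
end

section
/- For all integers k, l ≥ 2 there exists a 2-coloring of the complete graph on a vertex set of size (k−1)(l−1) containing no monochromatic K_k of color 1 and no monochromatic K_l of color 2, such that every one-vertex extension of the coloring contains a monochromatic K_k of color 1 or a monochromatic K_l of color 2. -/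
/-- For all `k, l ≥ 2` there is a symmetric 2-coloring of the complete graph on
`(k-1)(l-1)` vertices with no monochromatic `K_k` of color `0` and no monochromatic
`K_l` of color `1`, such that every one-vertex extension contains a monochromatic
`K_k` of color `0` or a monochromatic `K_l` of color `1`. -/
theorem sat_two_colors_upper_bound (k l : ℕ) (hk : 2 ≤ k) (hl : 2 ≤ l) :
    ∃ χ : Fin ((k - 1) * (l - 1)) → Fin ((k - 1) * (l - 1)) → Fin 2,
      (∀ u v, χ u v = χ v u) ∧
      (¬ ∃ S : Finset (Fin ((k - 1) * (l - 1))), S.card = k ∧ MonoClique χ 0 S) ∧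
      (¬ ∃ S : Finset (Fin ((k - 1) * (l - 1))), S.card = l ∧ MonoClique χ 1 S) ∧
      (∀ χ' : Option (Fin ((k - 1) * (l - 1))) → Option (Fin ((k - 1) * (l - 1))) → Fin 2,
        (∀ u v, χ' u v = χ' v u) →
        (∀ u v, χ' (some u) (some v) = χ u v) →
        (∃ S : Finset (Option (Fin ((k - 1) * (l - 1)))), S.card = k ∧ MonoClique χ' 0 S) ∨
        (∃ S : Finset (Option (Fin ((k - 1) * (l - 1)))), S.card = l ∧ MonoClique χ' 1 S)) := by
  have hk1 : 1 ≤ k - 1 := by omega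
  have hl1 : 1 ≤ l - 1 := by omega
  set N := (k - 1) * (l - 1) with hN
  set χ : Fin N → Fin N → Fin 2 :=
    fun u v => if u.val / (k - 1) = v.val / (k - 1) then 0 else 1 with hχ
  have hdivlt : ∀ x : Fin N, x.val / (k - 1) < l - 1 := by
    intro x
    rw [Nat.div_lt_iff_lt_mul (by omega)]
    calc x.val < N := x.isLt
    _ = (l - 1) * (k - 1) := by rw [hN]; ring
  have hsame : ∀ u v : Fin N, χ u v = 0 → u.val / (k - 1) = v.val / (k - 1) := by
    intro u v h
    by_contra hc
    simp only [hχ, if_neg hc] at h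
    exact absurd h (by decide)
  have hdiff : ∀ u v : Fin N, χ u v = 1 → u.val / (k - 1) ≠ v.val / (k - 1) := by
    intro u v h hc
    simp only [hχ, if_pos hc] at h
    exact absurd h (by decide)
  refine ⟨χ, ?_, ?_, ?_, ?_⟩
  · intro u v
    rcases eq_or_ne (u.val / (k - 1)) (v.val / (k - 1)) with h | h
    · simp [hχ, h]
    · simp [hχ, h, Ne.symm h]
  · rintro ⟨S, hcard, hmono⟩
    have hle : S.card ≤ k - 1 := by
      have := Finset.card_le_card_of_injOn
        (f := fun x : Fin N => (⟨x.val % (k - 1), Nat.mod_lt _ (by omega)⟩ : Fin (k - 1)))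
        (s := S) (t := Finset.univ) (fun _ _ => Finset.mem_univ _) ?_
      · simpa using this
      · intro a ha b hb hab
        simp only [Fin.mk.injEq] at hab
        by_contra hne
        have hdiv := hsame a b (hmono a ha b hb hne)
        have h1 := Nat.div_add_mod a.val (k - 1)
        have h2 := Nat.div_add_mod b.val (k - 1)
        rw [hdiv] at h1
        exact hne (Fin.ext (by omega))
    omega
  · rintro ⟨S, hcard, hmono⟩
    have hle : S.card ≤ l - 1 := by
      have := Finset.card_le_card_of_injOn
        (f := fun x : Fin N => (⟨x.val / (k - 1), hdivlt x⟩ : Fin (l - 1)))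
        (s := S) (t := Finset.univ) (fun _ _ => Finset.mem_univ _) ?_
      · simpa using this
      · intro a ha b hb hab
        simp only [Fin.mk.injEq] at hab
        by_contra hne
        exact hdiff a b (hmono a ha b hb hne) hab
    omega
  · intro χ' hsymm hext
    classical
    -- group g as a finset
    set G : Fin (l - 1) → Finset (Fin N) :=
      fun g => Finset.univ.filter (fun x => x.val / (k - 1) = g.val) with hG
    have hmemG : ∀ g x, x ∈ G g ↔ x.val / (k - 1) = g.val := by
      intro g x; simp [hG]
    have hGcard : ∀ g, (G g).card = k - 1 := by
      intro g
      have hemb : ∀ r : Fin (k - 1), g.val * (k - 1) + r.val < N := by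
        intro r
        have h1 : g.val * (k - 1) + r.val < (g.val + 1) * (k - 1) := by
          have := r.isLt; nlinarith
        have h2 : (g.val + 1) * (k - 1) ≤ (l - 1) * (k - 1) :=
          Nat.mul_le_mul_right _ (by have := g.isLt; omega)
        calc g.val * (k - 1) + r.val < (g.val + 1) * (k - 1) := h1
        _ ≤ (l - 1) * (k - 1) := h2
        _ = N := by rw [hN]; ring
      have : G g = Finset.univ.image
          (fun r : Fin (k - 1) => (⟨g.val * (k - 1) + r.val, hemb r⟩ : Fin N)) := by
        ext x
        simp only [hmemG, Finset.mem_image, Finset.mem_univ, true_and]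
        constructor
        · intro hx
          refine ⟨⟨x.val % (k - 1), Nat.mod_lt _ (by omega)⟩, ?_⟩
          apply Fin.ext
          have h := Nat.div_add_mod x.val (k - 1)
          rw [hx] at h
          simp only
          rw [mul_comm]
          exact h
        · rintro ⟨r, rfl⟩
          simp only
          rw [add_comm, Nat.add_mul_div_right _ _ (by omega : 0 < k - 1),
            Nat.div_eq_of_lt r.isLt, Nat.zero_add]
      rw [this, Finset.card_image_of_injective _ ?_, Finset.card_univ, Fintype.card_fin]
      intro a b hab
      simp only [Fin.mk.injEq] at hab
      exact Fin.ext (by omega)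
    by_cases hcase : ∃ g : Fin (l - 1), ∀ x ∈ G g, χ' (some x) none = 0
    · obtain ⟨g, hg⟩ := hcase
      left
      refine ⟨insert none ((G g).image some), ?_, ?_⟩
      · rw [Finset.card_insert_of_notMem (by simp),
          Finset.card_image_of_injective _ (Option.some_injective _), hGcard]
        omega
      · intro u hu v hv huv
        simp only [Finset.mem_insert, Finset.mem_image] at hu hv
        rcases hu with rfl | ⟨a, ha, rfl⟩
        · rcases hv with rfl | ⟨b, hb, rfl⟩
          · exact absurd rfl huv
          · rw [hsymm]; exact hg b hb
        · rcases hv with rfl | ⟨b, hb, rfl⟩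
          · exact hg a ha
          · rw [hext]
            simp only [hχ, if_pos (((hmemG g a).mp ha).trans ((hmemG g b).mp hb).symm)]
    · push_neg at hcase
      right
      have hpick : ∀ g : Fin (l - 1), ∃ x, x ∈ G g ∧ χ' (some x) none = 1 := by
        intro g
        obtain ⟨x, hx, hx1⟩ := hcase g
        exact ⟨x, hx, by omega⟩
      choose f hfG hf1 using hpick
      refine ⟨insert none (Finset.univ.image (fun g => some (f g))), ?_, ?_⟩
      · rw [Finset.card_insert_of_notMem (by simp),
          Finset.card_image_of_injective, Finset.card_univ, Fintype.card_fin]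
        · omega
        · intro a b hab
          have ha := (hmemG a (f a)).mp (hfG a)
          have hb := (hmemG b (f b)).mp (hfG b)
          have : f a = f b := Option.some_injective _ hab
          rw [this, hb] at ha
          exact Fin.ext ha.symm
      · intro u hu v hv huv
        simp only [Finset.mem_insert, Finset.mem_image, Finset.mem_univ, true_and] at hu hv
        rcases hu with rfl | ⟨a, rfl⟩
        · rcases hv with rfl | ⟨b, rfl⟩
          · exact absurd rfl huv
          · rw [hsymm]; exact hf1 b
        · rcases hv with rfl | ⟨b, rfl⟩
          · exact hf1 a
          · rw [hext]
            have hab : f a ≠ f b := fun h => huv (by rw [h])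
            have hgab : a ≠ b := fun h => hab (by rw [h])
            have ha := (hmemG a (f a)).mp (hfG a)
            have hb := (hmemG b (f b)).mp (hfG b)
            simp only [hχ]
            rw [if_neg]
            rw [ha, hb]
            exact fun h => hgab (Fin.ext h)
end

section
/- Let c ≥ 2 and let k_1, …, k_c ≥ 2 be integers. Let χ be a c-coloring of the complete graph on a finite vertex set V that is (k_1,…,k_c)-semisaturated. Then |V| ≥ (k_1 − 1)·(k_2 + k_3 + ⋯ + k_c − 2c + 3). -/
/-- If a symmetric `c`-coloring (`c ≥ 2`) of the complete graph on a finite vertex set `V` is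
`(k_1, …, k_c)`-semisaturated (every one-vertex extension contains, for some color `i`, a
monochromatic `K_{k_i}` of color `i` containing the new vertex `none`), then
`|V| ≥ (k_1 - 1)(k_2 + ⋯ + k_c - 2c + 3)`. -/
theorem sat_many_colors_lower_bound {V : Type} [Fintype V] (c : ℕ) (hc : 2 ≤ c)
    (k : Fin c → ℕ) (hk : ∀ i, 2 ≤ k i)
    (χ : V → V → Fin c) (hsym : ∀ u v, χ u v = χ v u)
    (hsat : ∀ χ' : Option V → Option V → Fin c,
      (∀ u v, χ' u v = χ' v u) →
      (∀ u v : V, χ' (some u) (some v) = χ u v) →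
      ∃ i, ∃ S : Finset (Option V), none ∈ S ∧ S.card = k i ∧ MonoClique χ' i S) :
    (k ⟨0, by omega⟩ - 1) *
      ((∑ i ∈ Finset.univ.erase (⟨0, by omega⟩ : Fin c), k i) + 3 - 2 * c) ≤
      Fintype.card V := by
  classical
  set z : Fin c := ⟨0, by omega⟩ with hz
  set m : ℕ := k z - 1 with hm
  set t : ℕ := ∑ i ∈ Finset.univ.erase z, (k i - 2) with ht
  -- arithmetic: the target factor equals t + 1
  have hcarderase : (Finset.univ.erase z).card = c - 1 := by
    rw [Finset.card_erase_of_mem (Finset.mem_univ z), Finset.card_univ, Fintype.card_fin]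
  have hsum : ∑ i ∈ Finset.univ.erase z, k i = t + 2 * (c - 1) := by
    have : ∑ i ∈ Finset.univ.erase z, k i = ∑ i ∈ Finset.univ.erase z, ((k i - 2) + 2) :=
      Finset.sum_congr rfl fun i _ => (Nat.sub_add_cancel (hk i)).symm
    rw [this, Finset.sum_add_distrib, Finset.sum_const, hcarderase, smul_eq_mul]
    omega
  have hfac : (∑ i ∈ Finset.univ.erase z, k i) + 3 - 2 * c = t + 1 := by omega
  rw [hfac]
  -- the family of "good" packings: pairwise disjoint color-z monochromatic m-sets
  set Good : Finset (Finset V) → Prop := fun P =>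
    (∀ T ∈ P, T.card = m ∧ MonoClique χ z T) ∧
      (∀ T₁ ∈ P, ∀ T₂ ∈ P, T₁ ≠ T₂ → Disjoint T₁ T₂) with hGood
  have hne : ((Finset.univ : Finset (Finset (Finset V))).filter Good).Nonempty := by
    refine ⟨∅, Finset.mem_filter.2 ⟨Finset.mem_univ _, ?_, ?_⟩⟩ <;> simp
  obtain ⟨P, hPmem, hPmax⟩ :=
    Finset.exists_max_image ((Finset.univ : Finset (Finset (Finset V))).filter Good)
      Finset.card hne
  have hPgood : Good P := (Finset.mem_filter.1 hPmem).2
  obtain ⟨hPmono, hPdisj⟩ := hPgood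
  -- main claim: P has at least t+1 members
  have hν : t + 1 ≤ P.card := by
    by_contra hν'
    push_neg at hν'
    have hνt : P.card ≤ t := by omega
    -- allocate the cliques of P to colors ≠ z, at most k i - 2 cliques per color i
    set B : Finset ((_ : Fin c) × ℕ) :=
      (Finset.univ.erase z).sigma (fun i => Finset.range (k i - 2)) with hB
    have hBcard : B.card = t := by
      rw [hB, Finset.card_sigma]
      exact Finset.sum_congr rfl fun i _ => Finset.card_range _
    have hcardle : Fintype.card ↥P ≤ Fintype.card ↥B := by
      rw [Fintype.card_coe, Fintype.card_coe, hBcard]; exact hνt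
    obtain ⟨E⟩ := Function.Embedding.nonempty_of_card_le hcardle
    set gcol : ↥P → Fin c := fun x => ((E x : ↥B) : (_ : Fin c) × ℕ).1 with hgcol
    have hgne : ∀ x : ↥P, gcol x ≠ z := fun x =>
      (Finset.mem_erase.1 (Finset.mem_sigma.1 (E x).2).1).1
    -- the extension: new vertex gets color gcol Q towards Q ∈ P, color z elsewhere
    set f : V → Fin c := fun v =>
      if hv : ∃ Q ∈ P, v ∈ Q then gcol ⟨hv.choose, hv.choose_spec.1⟩ else z with hf
    have hfQ : ∀ Q (hQ : Q ∈ P), ∀ v ∈ Q, f v = gcol ⟨Q, hQ⟩ := by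
      intro Q hQ v hv
      have hex : ∃ Q ∈ P, v ∈ Q := ⟨Q, hQ, hv⟩
      have hch : hex.choose = Q := by
        by_contra hne
        exact Finset.disjoint_left.1 (hPdisj _ hex.choose_spec.1 _ hQ hne)
          hex.choose_spec.2 hv
      simp only [hf]
      rw [dif_pos hex]
      exact congrArg gcol (Subtype.ext hch)
    set χ' : Option V → Option V → Fin c := fun x y =>
      x.elim (y.elim z f) (fun u => y.elim (f u) (fun v => χ u v)) with hχ'
    have hχ'sym : ∀ x y, χ' x y = χ' y x := by
      intro x y
      cases x <;> cases y <;> simp [hχ', hsym]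
    have hχ'res : ∀ u v : V, χ' (some u) (some v) = χ u v := by
      intro u v; simp [hχ']
    obtain ⟨i, S, hnS, hScard, hSmono⟩ := hsat χ' hχ'sym hχ'res
    set T : Finset V := S.eraseNone with hT
    have hTmem : ∀ v : V, v ∈ T ↔ some v ∈ S := fun v => Finset.mem_eraseNone
    have hTmono : ∀ u ∈ T, ∀ v ∈ T, u ≠ v → χ u v = i := by
      intro u hu v hv huv
      have := hSmono (some u) ((hTmem u).1 hu) (some v) ((hTmem v).1 hv)
        (by simpa using huv)
      simpa [hχ'] using this
    have hTf : ∀ v ∈ T, f v = i := by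
      intro v hv
      have := hSmono (some v) ((hTmem v).1 hv) none hnS (by simp)
      simpa [hχ'] using this
    have hST : S = insert none (T.map Function.Embedding.some) := by
      ext x
      cases x with
      | none => simp [hnS]
      | some a => simp [hT, Finset.mem_eraseNone]
    have hTcard : T.card + 1 = k i := by
      rw [hST, Finset.card_insert_of_notMem (by simp), Finset.card_map] at hScard
      exact hScard
    by_cases hi : i = z
    · -- color-z threat: contradicts maximality of P
      subst hi
      have hkz := hk z
      have hTm : T.card = m := by omega
      have hTdisj : ∀ Q ∈ P, Disjoint T Q := by
        intro Q hQ
        rw [Finset.disjoint_left]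
        intro v hvT hvQ
        exact hgne ⟨Q, hQ⟩ ((hfQ Q hQ v hvQ).symm.trans (hTf v hvT))
      have hTnotP : T ∉ P := by
        intro hTP
        have hTne : T.Nonempty := Finset.card_pos.1 (by omega)
        obtain ⟨v, hv⟩ := hTne
        exact (Finset.disjoint_left.1 (hTdisj T hTP) hv) hv
      have hGins : Good (insert T P) := by
        constructor
        · intro Q hQ
          rcases Finset.mem_insert.1 hQ with h | h
          · subst h; exact ⟨hTm, hTmono⟩
          · exact hPmono Q h
        · intro Q₁ h₁ Q₂ h₂ hne12
          rcases Finset.mem_insert.1 h₁ with h₁' | h₁' <;>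
            rcases Finset.mem_insert.1 h₂ with h₂' | h₂'
          · exact absurd (h₁'.trans h₂'.symm) hne12
          · subst h₁'; exact hTdisj _ h₂'
          · subst h₂'; exact (hTdisj _ h₁').symm
          · exact hPdisj _ h₁' _ h₂' hne12
      have hle := hPmax _ (Finset.mem_filter.2 ⟨Finset.mem_univ _, hGins⟩)
      rw [Finset.card_insert_of_notMem hTnotP] at hle
      omega
    · -- color-i threat, i ≠ z: T injects into the cliques assigned color i
      have hex : ∀ v ∈ T, ∃ Q ∈ P, v ∈ Q := by
        intro v hv
        by_contra hno
        push_neg at hno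
        have hvz : f v = z := by
          simp only [hf]
          exact dif_neg (by rintro ⟨Q, hQ, hvQ⟩; exact hno Q hQ hvQ)
        exact hi ((hTf v hv).symm.trans hvz)
      set Qf : ↥T → ↥P := fun v => ⟨(hex v v.2).choose, (hex v v.2).choose_spec.1⟩ with hQfdef
      have hQf : ∀ v : ↥T, (v : V) ∈ ((Qf v : ↥P) : Finset V) := fun v =>
        (hex v v.2).choose_spec.2
      have hQfi : ∀ v : ↥T, gcol (Qf v) = i := by
        intro v
        have := hfQ ((Qf v : ↥P) : Finset V) (Qf v).2 v (hQf v)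
        rw [hTf v v.2] at this
        exact this.symm
      set Φ : ↥T → {x : ↥P // gcol x = i} := fun v => ⟨Qf v, hQfi v⟩ with hΦdef
      have hΦinj : Function.Injective Φ := by
        intro u v huv
        have hQQ : Qf u = Qf v := congrArg Subtype.val huv
        by_contra hne2
        have hne3 : (u : V) ≠ (v : V) := fun h => hne2 (Subtype.ext h)
        have hzuv : χ u v = z :=
          (hPmono _ (Qf u).2).2 u (hQf u) v (by rw [hQQ]; exact hQf v) hne3
        rw [hTmono u u.2 v v.2 hne3] at hzuv
        exact hi hzuv
      set Ψ : {x : ↥P // gcol x = i} → ↥(Finset.range (k i - 2)) := fun x =>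
        ⟨((E x.1 : ↥B) : (_ : Fin c) × ℕ).2, by
          have hm2 := (Finset.mem_sigma.1 (E x.1).2).2
          have hxx : ((E x.1 : ↥B) : (_ : Fin c) × ℕ).1 = i := x.2
          rwa [hxx] at hm2⟩ with hΨdef
      have hΨinj : Function.Injective Ψ := by
        intro x y hxy
        have h2 : ((E x.1 : ↥B) : (_ : Fin c) × ℕ).2 = ((E y.1 : ↥B) : (_ : Fin c) × ℕ).2 :=
          congrArg Subtype.val hxy
        have h1 : ((E x.1 : ↥B) : (_ : Fin c) × ℕ).1 = ((E y.1 : ↥B) : (_ : Fin c) × ℕ).1 := by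
          have hx2 : ((E x.1 : ↥B) : (_ : Fin c) × ℕ).1 = i := x.2
          have hy2 : ((E y.1 : ↥B) : (_ : Fin c) × ℕ).1 = i := y.2
          rw [hx2, hy2]
        have hσ : ((E x.1 : ↥B) : (_ : Fin c) × ℕ) = ((E y.1 : ↥B) : (_ : Fin c) × ℕ) :=
          Sigma.ext h1 (heq_of_eq h2)
        exact Subtype.ext (E.injective (Subtype.ext hσ))
      have hcardT : T.card = Fintype.card ↥T := (Fintype.card_coe T).symm
      have hc1 := Fintype.card_le_of_injective Φ hΦinj
      have hc2 := Fintype.card_le_of_injective Ψ hΨinj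
      rw [Fintype.card_coe, Finset.card_range] at hc2
      have hki := hk i
      omega
  -- conclude the cardinality bound
  have hsumcard : ∑ Q ∈ P, Q.card = P.card * m := by
    rw [Finset.sum_congr rfl fun Q hQ => (hPmono Q hQ).1, Finset.sum_const, smul_eq_mul]
  calc m * (t + 1) ≤ m * P.card := Nat.mul_le_mul_left m hν
    _ = P.card * m := Nat.mul_comm _ _
    _ = ∑ Q ∈ P, Q.card := hsumcard.symm
    _ = (P.biUnion id).card := (Finset.card_biUnion hPdisj).symm
    _ ≤ (Finset.univ : Finset V).card := Finset.card_le_card (Finset.subset_univ _)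
    _ = Fintype.card V := Finset.card_univ
end

section
/- Let c ≥ 1 and let k_1, …, k_c ≥ 2 be integers. There exists a c-coloring of the complete graph on a vertex set of size (k_1 − 1)(k_2 − 1)⋯(k_c − 1) containing no monochromatic K_{k_i} of color i for any i ∈ {1,…,c}, such that every one-vertex extension of the coloring contains a monochromatic K_{k_i} of color i for some i. -/
section Aux

variable {c : ℕ}

/-- Vertices as tuples of coordinates. -/
noncomputable def AuxF (k : Fin c → ℕ) (u : Fin (∏ i, (k i - 1))) : ∀ i, Fin (k i - 1) :=
  finPiFinEquiv.symm u

open Classical in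
/-- The set of coordinates where two vertices differ. -/
noncomputable def AuxD (k : Fin c → ℕ) (u v : Fin (∏ i, (k i - 1))) : Finset (Fin c) :=
  Finset.univ.filter fun i => AuxF k u i ≠ AuxF k v i

/-- The coloring: the first coordinate where two vertices differ. -/
noncomputable def AuxChi (hc : 1 ≤ c) (k : Fin c → ℕ) (u v : Fin (∏ i, (k i - 1))) : Fin c :=
  if h : (AuxD k u v).Nonempty then (AuxD k u v).min' h else ⟨0, hc⟩

lemma AuxF_injective (k : Fin c → ℕ) : Function.Injective (AuxF k) :=
  (finPiFinEquiv.symm).injective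

lemma AuxD_comm (k : Fin c → ℕ) (u v : Fin (∏ i, (k i - 1))) :
    AuxD k u v = AuxD k v u := by
  simp only [AuxD]
  congr 1
  ext i
  exact ne_comm

lemma AuxChi_comm (hc : 1 ≤ c) (k : Fin c → ℕ) (u v : Fin (∏ i, (k i - 1))) :
    AuxChi hc k u v = AuxChi hc k v u := by
  simp only [AuxChi, AuxD_comm k u v]

lemma AuxD_nonempty (k : Fin c → ℕ) {u v : Fin (∏ i, (k i - 1))} (h : u ≠ v) :
    (AuxD k u v).Nonempty := by
  classical
  by_contra hne
  apply h
  apply AuxF_injective k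
  funext i
  by_contra hi
  exact hne ⟨i, by simp [AuxD, hi]⟩

lemma AuxChi_mem (hc : 1 ≤ c) (k : Fin c → ℕ) {u v : Fin (∏ i, (k i - 1))} (h : u ≠ v) :
    AuxF k u (AuxChi hc k u v) ≠ AuxF k v (AuxChi hc k u v) := by
  classical
  have hne := AuxD_nonempty k h
  have : AuxChi hc k u v ∈ AuxD k u v := by
    rw [AuxChi, dif_pos hne]
    exact Finset.min'_mem _ _
  simpa [AuxD] using this

lemma AuxChi_eq (hc : 1 ≤ c) (k : Fin c → ℕ) {u v : Fin (∏ i, (k i - 1))} {i : Fin c}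
    (hlt : ∀ j, j < i → AuxF k u j = AuxF k v j) (hi : AuxF k u i ≠ AuxF k v i) :
    AuxChi hc k u v = i := by
  classical
  have hmem : i ∈ AuxD k u v := by simp [AuxD, hi]
  have hne : (AuxD k u v).Nonempty := ⟨i, hmem⟩
  rw [AuxChi, dif_pos hne]
  refine le_antisymm (Finset.min'_le _ _ hmem) ?_
  by_contra hlt'
  push_neg at hlt'
  have hmem' := Finset.min'_mem (AuxD k u v) hne
  simp only [AuxD, Finset.mem_filter] at hmem'
  exact hmem'.2 (hlt _ hlt')

end Aux

/-- For `c ≥ 1` and `k_1, …, k_c ≥ 2` there is a symmetric `c`-coloring of the complete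
graph on `(k_1 - 1)(k_2 - 1)⋯(k_c - 1)` vertices with no monochromatic `K_{k_i}` of color
`i` for any `i`, such that every one-vertex extension contains a monochromatic `K_{k_i}` of
color `i` for some `i`. -/
theorem sat_many_colors_upper_bound (c : ℕ) (hc : 1 ≤ c) (k : Fin c → ℕ) (hk : ∀ i, 2 ≤ k i) :
    ∃ χ : Fin (∏ i, (k i - 1)) → Fin (∏ i, (k i - 1)) → Fin c,
      (∀ u v, χ u v = χ v u) ∧
      (∀ i, ¬ ∃ S : Finset (Fin (∏ i, (k i - 1))), S.card = k i ∧ MonoClique χ i S) ∧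
      (∀ χ' : Option (Fin (∏ i, (k i - 1))) → Option (Fin (∏ i, (k i - 1))) → Fin c,
        (∀ u v, χ' u v = χ' v u) →
        (∀ u v, χ' (some u) (some v) = χ u v) →
        ∃ i, ∃ S : Finset (Option (Fin (∏ i, (k i - 1)))), S.card = k i ∧ MonoClique χ' i S) := by
  classical
  refine ⟨AuxChi hc k, AuxChi_comm hc k, ?_, ?_⟩
  · -- no monochromatic K_{k i}
    rintro i ⟨S, hcard, hmono⟩
    have hinj : Set.InjOn (fun u => AuxF k u i) S := by
      intro u hu v hv huv
      by_contra hne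
      have := hmono u hu v hv hne
      exact AuxChi_mem hc k hne (this ▸ huv)
    have hle : S.card ≤ Fintype.card (Fin (k i - 1)) :=
      Finset.card_le_card_of_injOn _ (fun _ _ => Finset.mem_univ _) hinj
    rw [hcard, Fintype.card_fin] at hle
    have := hk i
    omega
  · -- saturation
    intro χ' hsymm hagree
    by_contra hno
    push_neg at hno
    -- greedy construction of a coordinate vector g
    have key : ∀ m : ℕ, m ≤ c → ∃ g : ∀ i, Fin (k i - 1),
        ∀ i : Fin c, (i : ℕ) < m → ∀ u : Fin (∏ i, (k i - 1)),
          (∀ j : Fin c, j < i → AuxF k u j = g j) → AuxF k u i = g i →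
          χ' (some u) none ≠ i := by
      intro m
      induction m with
      | zero =>
        intro _
        exact ⟨fun i => ⟨0, by have := hk i; omega⟩, fun i hi => by omega⟩
      | succ m ih =>
        intro hm
        obtain ⟨g, hg⟩ := ih (by omega)
        set M : Fin c := ⟨m, by omega⟩ with hM
        have claim : ∃ a : Fin (k M - 1), ∀ u : Fin (∏ i, (k i - 1)),
            (∀ j : Fin c, j < M → AuxF k u j = g j) → AuxF k u M = a →
            χ' (some u) none ≠ M := by
          by_contra hcl
          push_neg at hcl
          choose u hu1 hu2 hu3 using hcl
          have huinj : Function.Injective u := by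
            intro a b hab
            have : AuxF k (u a) M = AuxF k (u b) M := by rw [hab]
            rwa [hu2 a, hu2 b] at this
          set S : Finset (Option (Fin (∏ i, (k i - 1)))) :=
            insert none (Finset.univ.image fun a => some (u a)) with hS
          refine hno M S ?_ ?_
          · have hni : (none : Option (Fin (∏ i, (k i - 1)))) ∉
                Finset.univ.image fun a => some (u a) := by simp
            rw [hS, Finset.card_insert_of_notMem hni,
              Finset.card_image_of_injective _ (fun a b h => huinj (Option.some.inj h)),
              Finset.card_univ, Fintype.card_fin]
            have := hk M
            omega
          · intro x hx y hy hxy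
            rw [hS, Finset.mem_insert] at hx hy
            rcases hx with rfl | hx
            · rcases hy with rfl | hy
              · exact absurd rfl hxy
              · obtain ⟨a, _, rfl⟩ := Finset.mem_image.mp hy
                rw [hsymm]
                exact hu3 a
            · obtain ⟨a, _, rfl⟩ := Finset.mem_image.mp hx
              rcases hy with rfl | hy
              · exact hu3 a
              · obtain ⟨b, _, rfl⟩ := Finset.mem_image.mp hy
                have hab : a ≠ b := fun h => hxy (by rw [h])
                rw [hagree]
                refine AuxChi_eq hc k (fun j hj => ?_) ?_
                · rw [hu1 a j hj, hu1 b j hj]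
                · rw [hu2 a, hu2 b]
                  exact fun h => hab (by exact_mod_cast h)
        obtain ⟨a, ha⟩ := claim
        refine ⟨Function.update g M a, ?_⟩
        intro i hi u hpre hcoord
        rcases lt_or_ge (i : ℕ) m with hlt | hge
        · have hiM : i ≠ M := by
            intro h
            have : (i : ℕ) = m := by rw [h]
            omega
          refine hg i hlt u (fun j hj => ?_) ?_
          · have hjM : j ≠ M := by
              intro h
              have h1 : (j : ℕ) = m := by rw [h]
              have h2 : (j : ℕ) < (i : ℕ) := hj
              omega
            rw [hpre j hj, Function.update_of_ne hjM]
          · rw [hcoord, Function.update_of_ne hiM]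
        · have hval : (i : ℕ) = m := by omega
          have hiM : i = M := Fin.ext (by rw [hval])
          rw [hiM]
          rw [hiM] at hpre hcoord
          refine ha u (fun j hj => ?_) ?_
          · rw [hpre j hj, Function.update_of_ne (ne_of_lt hj)]
          · rw [hcoord, Function.update_self]
    obtain ⟨g, hg⟩ := key c le_rfl
    set u : Fin (∏ i, (k i - 1)) := finPiFinEquiv g with hu
    have hfu : AuxF k u = g := by
      rw [AuxF, hu, Equiv.symm_apply_apply]
    set i := χ' (some u) none with hi
    exact hg i i.isLt u (fun j _ => by rw [hfu]) (by rw [hfu]) rfl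
end

section
/- Let k ≥ 2 and c ≥ 2 be integers. There exists a natural number N with 1 ≤ N ≤ 48·k²·c^(k²) and a c-coloring of the complete graph on a vertex set of size N that is (k,k,…,k)-semisaturated, i.e., every one-vertex extension of the coloring contains, in some color i, a monochromatic K_k of color i containing the new vertex. -/
/-- The key property: symmetric coloring such that every vertex-coloring `f`
admits a color `i` and a mono-`i` clique of size `m` all of whose vertices have `f`-value `i`. -/
def SatCol (c m : ℕ) {β : Type*} (χ : β → β → Fin c) : Prop :=
  (∀ u v, χ u v = χ v u) ∧
  ∀ f : β → Fin c, ∃ i, ∃ S : Finset β, S.card = m ∧ (∀ v ∈ S, f v = i) ∧ MonoClique χ i S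

lemma satCol_transfer {c m : ℕ} {β γ : Type*} (e : β ≃ γ) (χ : γ → γ → Fin c)
    (h : SatCol c m χ) : SatCol c m (fun u v => χ (e u) (e v)) := by
  constructor
  · intro u v; exact h.1 _ _
  · intro f
    obtain ⟨i, S, hcard, hf, hmono⟩ := h.2 (fun x => f (e.symm x))
    refine ⟨i, S.map e.symm.toEmbedding, by simp [hcard], ?_, ?_⟩
    · intro v hv
      simp only [Finset.mem_map, Equiv.coe_toEmbedding] at hv
      obtain ⟨s, hs, rfl⟩ := hv
      exact hf s hs
    · intro u hu v hv huv
      simp only [Finset.mem_map, Equiv.coe_toEmbedding] at hu hv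
      obtain ⟨a, ha, rfl⟩ := hu
      obtain ⟨b, hb, rfl⟩ := hv
      have hab : a ≠ b := fun h => huv (by rw [h])
      simpa using hmono a ha b hb hab

lemma satCol_one {c : ℕ} (hc : 0 < c) :
    SatCol c 1 (fun (_ _ : Fin 1) => (⟨0, hc⟩ : Fin c)) := by
  refine ⟨fun _ _ => rfl, fun f => ⟨f 0, {0}, rfl, ?_, ?_⟩⟩
  · intro v hv
    simp only [Finset.mem_singleton] at hv
    subst hv; rfl
  · intro u hu v hv huv
    simp only [Finset.mem_singleton] at hu hv
    subst hu; subst hv; exact absurd rfl huv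

section Slope

variable {c : ℕ} (q : ℕ) [Fact (Nat.Prime q)]

/-- Coloring of the affine plane over `ZMod q` by (reduced) slope. -/
def slopeColor (hc : 0 < c) (P Q : ZMod q × ZMod q) : Fin c :=
  if P.1 = Q.1 then ⟨0, hc⟩
  else ⟨(((P.2 - Q.2) / (P.1 - Q.1)).val) % c, Nat.mod_lt _ hc⟩

lemma slopeColor_symm (hc : 0 < c) (P Q : ZMod q × ZMod q) :
    slopeColor q hc P Q = slopeColor q hc Q P := by
  unfold slopeColor
  by_cases h : P.1 = Q.1
  · rw [if_pos h, if_pos h.symm]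
  · rw [if_neg h, if_neg (Ne.symm h)]
    have h2 : (P.2 - Q.2) / (P.1 - Q.1) = (Q.2 - P.2) / (Q.1 - P.1) := by
      rw [← neg_div_neg_eq, neg_sub, neg_sub]
    apply Fin.ext
    show ((P.2 - Q.2) / (P.1 - Q.1)).val % c = ((Q.2 - P.2) / (Q.1 - P.1)).val % c
    rw [h2]

lemma pair_exists (hc : 0 < c) (hcq : c < q) (f : ZMod q × ZMod q → Fin c) :
    ∃ u v, u ≠ v ∧ slopeColor q hc u v = f u ∧ f v = f u := by
  haveI : NeZero q := ⟨(Fact.out : Nat.Prime q).ne_zero⟩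
  by_contra hcon
  push_neg at hcon
  have key : ∀ i : Fin c,
      (Finset.univ.filter (fun P : ZMod q × ZMod q => f P = i)).card ≤ q := by
    intro i
    have hinj : Set.InjOn (fun P : ZMod q × ZMod q => P.2 - ((i : ℕ) : ZMod q) * P.1)
        (Finset.univ.filter (fun P : ZMod q × ZMod q => f P = i)) := by
      intro P hP Q hQ hφ
      simp only [Finset.coe_filter, Set.mem_setOf_eq] at hP hQ
      by_contra hne
      by_cases h1 : P.1 = Q.1
      · apply hne
        have : P.2 = Q.2 := by
          have := hφ
          simp only at this
          rw [h1] at this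
          linear_combination this
        exact Prod.ext h1 this
      · have hd : P.1 - Q.1 ≠ 0 := sub_ne_zero.mpr h1
        have hslope : (P.2 - Q.2) / (P.1 - Q.1) = ((i : ℕ) : ZMod q) := by
          have h2 : P.2 - Q.2 = ((i : ℕ) : ZMod q) * (P.1 - Q.1) := by
            linear_combination hφ
          rw [h2, mul_div_assoc, div_self hd, mul_one]
        have hval : (((i : ℕ) : ZMod q)).val = (i : ℕ) :=
          ZMod.val_cast_of_lt (lt_trans i.isLt hcq)
        have hcol : slopeColor q hc P Q = i := by
          unfold slopeColor
          rw [if_neg h1]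
          apply Fin.ext
          show ((P.2 - Q.2) / (P.1 - Q.1)).val % c = (i : ℕ)
          rw [hslope, hval, Nat.mod_eq_of_lt i.isLt]
        exact hcon P Q hne (by rw [hcol, hP.2]) (by rw [hQ.2, hP.2])
    calc (Finset.univ.filter (fun P : ZMod q × ZMod q => f P = i)).card
        ≤ (Finset.univ : Finset (ZMod q)).card :=
          Finset.card_le_card_of_injOn _ (fun _ _ => Finset.mem_univ _) hinj
      _ = q := by simp [ZMod.card]
  have hsum : (Finset.univ : Finset (ZMod q × ZMod q)).card
      = ∑ i : Fin c, (Finset.univ.filter (fun P : ZMod q × ZMod q => f P = i)).card :=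
    Finset.card_eq_sum_card_fiberwise (fun x _ => Finset.mem_univ (f x))
  have hbig : q * q ≤ c * q := by
    calc q * q = (Finset.univ : Finset (ZMod q × ZMod q)).card := by
          simp [Finset.card_univ, ZMod.card]
      _ = ∑ i : Fin c, (Finset.univ.filter (fun P : ZMod q × ZMod q => f P = i)).card := hsum
      _ ≤ ∑ _i : Fin c, q := Finset.sum_le_sum (fun i _ => key i)
      _ = c * q := by simp [Finset.sum_const, Finset.card_univ, mul_comm]
  have hq0 : 0 < q := (Fact.out : Nat.Prime q).pos
  have : q ≤ c := Nat.le_of_mul_le_mul_right hbig hq0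
  omega

lemma satCol_step {β : Type*} {m : ℕ} (hm : 1 ≤ m) (hc : 0 < c) (hcq : c < q)
    (χ : β → β → Fin c) (h : SatCol c m χ) :
    SatCol c (m + 1) (fun (u v : (ZMod q × ZMod q) × β) =>
      if u.1 = v.1 then χ u.2 v.2 else slopeColor q hc u.1 v.1) := by
  classical
  constructor
  · intro u v
    dsimp only
    by_cases h1 : u.1 = v.1
    · rw [if_pos h1, if_pos h1.symm, h.1]
    · rw [if_neg h1, if_neg (Ne.symm h1), slopeColor_symm]
  · intro f
    choose g S hcard hf hmono using fun t => h.2 (fun x => f (t, x))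
    obtain ⟨t, t', htt', hslope, hgt'⟩ := pair_exists q hc hcq g
    have hne : (S t').Nonempty := Finset.card_pos.mp (by rw [hcard]; omega)
    obtain ⟨w, hw⟩ := hne
    refine ⟨g t, insert (t', w) ((S t).map ⟨fun x => (t, x), Prod.mk_right_injective t⟩), ?_, ?_, ?_⟩
    · rw [Finset.card_insert_of_notMem, Finset.card_map, hcard]
      simp only [Finset.mem_map, Function.Embedding.coeFn_mk]
      rintro ⟨x, -, hx⟩
      exact htt' (by simpa using congrArg Prod.fst hx)
    · intro v hv
      rcases Finset.mem_insert.mp hv with rfl | hv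
      · rw [hf t' w hw, hgt']
      · simp only [Finset.mem_map, Function.Embedding.coeFn_mk] at hv
        obtain ⟨x, hx, rfl⟩ := hv
        exact hf t x hx
    · intro u hu v hv huv
      dsimp only
      rcases Finset.mem_insert.mp hu with rfl | hu <;>
        rcases Finset.mem_insert.mp hv with h2 | h2
      · exact absurd h2.symm huv
      · simp only [Finset.mem_map, Function.Embedding.coeFn_mk] at h2
        obtain ⟨x, hx, rfl⟩ := h2
        have hne2 : t' ≠ t := Ne.symm htt'
        rw [if_neg hne2, slopeColor_symm, hslope]
      · subst h2
        simp only [Finset.mem_map, Function.Embedding.coeFn_mk] at hu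
        obtain ⟨x, hx, rfl⟩ := hu
        rw [if_neg htt', hslope]
      · simp only [Finset.mem_map, Function.Embedding.coeFn_mk] at hu h2
        obtain ⟨x, hx, rfl⟩ := hu
        obtain ⟨y, hy, rfl⟩ := h2
        have hxy : x ≠ y := fun hxy => huv (by rw [hxy])
        rw [if_pos rfl]
        exact hmono t x hx y hy hxy

lemma satCol_exists (hc : 0 < c) (hcq : c < q) (j : ℕ) :
    ∃ N : ℕ, ∃ χ : Fin N → Fin N → Fin c,
      1 ≤ N ∧ N ≤ (q * q) ^ j ∧ SatCol c (j + 1) χ := by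
  haveI : NeZero q := ⟨(Fact.out : Nat.Prime q).ne_zero⟩
  induction j with
  | zero => exact ⟨1, _, le_refl 1, by simp, satCol_one hc⟩
  | succ j ih =>
    obtain ⟨N, χ, hN1, hNle, hsat⟩ := ih
    have hstep := satCol_step q (Nat.le_add_left 1 j) hc hcq χ hsat
    have hcardEq : Fintype.card ((ZMod q × ZMod q) × Fin N) = q * q * N := by
      simp [ZMod.card, mul_assoc]
    let e : Fin (q * q * N) ≃ (ZMod q × ZMod q) × Fin N :=
      (Fintype.equivFinOfCardEq hcardEq).symm
    refine ⟨q * q * N, _, ?_, ?_, satCol_transfer e _ hstep⟩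
    · have hq0 : 0 < q := (Fact.out : Nat.Prime q).pos
      exact Nat.one_le_iff_ne_zero.mpr (by positivity)
    · calc q * q * N ≤ q * q * (q * q) ^ j := Nat.mul_le_mul_left _ hNle
        _ = (q * q) ^ (j + 1) := by ring

end Slope

/-- For `k ≥ 2` and `c ≥ 2` there is some `N` with `1 ≤ N ≤ 48·k²·c^(k²)` and a symmetric
`c`-coloring of the complete graph on `N` vertices that is `(k,…,k)`-semisaturated: every
one-vertex extension contains, in some color `i`, a monochromatic `K_k` of color `i`
containing the new vertex `none`. -/
theorem semisat_random_upper_bound (k c : ℕ) (hk : 2 ≤ k) (hc : 2 ≤ c) :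
    ∃ N : ℕ, 1 ≤ N ∧ N ≤ 48 * k ^ 2 * c ^ (k ^ 2) ∧
      ∃ χ : Fin N → Fin N → Fin c,
        (∀ u v, χ u v = χ v u) ∧
        (∀ χ' : Option (Fin N) → Option (Fin N) → Fin c,
          (∀ u v, χ' u v = χ' v u) →
          (∀ u v, χ' (some u) (some v) = χ u v) →
          ∃ i, ∃ S : Finset (Option (Fin N)), none ∈ S ∧ S.card = k ∧ MonoClique χ' i S) := by
  obtain ⟨q, hq, hcq, hq2c⟩ := Nat.exists_prime_lt_and_le_two_mul c (by omega)
  haveI : Fact (Nat.Prime q) := ⟨hq⟩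
  obtain ⟨m, rfl⟩ : ∃ m, k = m + 2 := ⟨k - 2, by omega⟩
  obtain ⟨N, χ, hN1, hNle, hsat⟩ := satCol_exists q (by omega) hcq m
  refine ⟨N, hN1, ?_, χ, hsat.1, ?_⟩
  · have h0 : q * q ≤ 2 * c * (2 * c) := Nat.mul_le_mul hq2c hq2c
    have h00 : 2 * 2 ≤ c * c := Nat.mul_le_mul hc hc
    have h1 : q * q ≤ c ^ 4 := by nlinarith [h0, h00]
    have h2 : N ≤ c ^ (4 * m) := by
      calc N ≤ (q * q) ^ m := hNle
        _ ≤ (c ^ 4) ^ m := Nat.pow_le_pow_left h1 m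
        _ = c ^ (4 * m) := by rw [← pow_mul]
    have h3 : 4 * m ≤ (m + 2) ^ 2 := by nlinarith
    calc N ≤ c ^ (4 * m) := h2
      _ ≤ c ^ ((m + 2) ^ 2) := Nat.pow_le_pow_right (by omega) h3
      _ ≤ 48 * (m + 2) ^ 2 * c ^ ((m + 2) ^ 2) := Nat.le_mul_of_pos_left _ (by positivity)
  · intro χ' hsym hagree
    obtain ⟨i, S, hcard, hf, hmono⟩ := hsat.2 (fun v => χ' none (some v))
    refine ⟨i, insert none (S.map ⟨some, Option.some_injective _⟩), Finset.mem_insert_self _ _,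
      ?_, ?_⟩
    · rw [Finset.card_insert_of_notMem, Finset.card_map, hcard]
      simp
    · intro u hu v hv huv
      rcases Finset.mem_insert.mp hu with rfl | hu <;>
        rcases Finset.mem_insert.mp hv with h2 | h2
      · exact absurd h2.symm huv
      · simp only [Finset.mem_map, Function.Embedding.coeFn_mk] at h2
        obtain ⟨b, hb, rfl⟩ := h2
        exact hf b hb
      · subst h2
        simp only [Finset.mem_map, Function.Embedding.coeFn_mk] at hu
        obtain ⟨a, ha, rfl⟩ := hu
        rw [hsym]
        exact hf a ha
      · simp only [Finset.mem_map, Function.Embedding.coeFn_mk] at hu h2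
        obtain ⟨a, ha, rfl⟩ := hu
        obtain ⟨b, hb, rfl⟩ := h2
        have hab : a ≠ b := fun h => huv (by rw [h])
        rw [hagree]
        exact hmono a ha b hb hab
end

section
/- Let k ≥ 2 and n ≥ 4k² be integers. Then there exists a family F of k-element subsets of an n-element set such that any two distinct members of F intersect in at most one element, and 16·k²·|F| ≥ n² (i.e., F contains at least n²/(16k²) pairwise edge-disjoint copies of K_k inside K_n). -/
section EDC

variable {k n p : ℕ}

/-- encode a grid point into `Fin n` -/
def edcEnc (hkpn : k * p ≤ n) [NeZero p] (i : Fin k) (v : ZMod p) : Fin n :=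
  ⟨i.val * p + v.val, by
    have h1 : i.val + 1 ≤ k := i.isLt
    have h2 : v.val < p := ZMod.val_lt v
    calc i.val * p + v.val < (i.val + 1) * p := by
          have h3 : (i.val + 1) * p = i.val * p + p := by ring
          omega
      _ ≤ k * p := Nat.mul_le_mul_right p h1
      _ ≤ n := hkpn⟩

theorem edcEnc_inj (hkpn : k * p ≤ n) [NeZero p] (i j : Fin k) (v w : ZMod p)
    (h : edcEnc hkpn i v = edcEnc hkpn j w) : i = j ∧ v = w := by
  have h' : i.val * p + v.val = j.val * p + w.val := congrArg Fin.val h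
  have hv : v.val < p := ZMod.val_lt v
  have hw : w.val < p := ZMod.val_lt w
  have hij : i.val = j.val := by
    rcases Nat.lt_trichotomy i.val j.val with h1 | h1 | h1
    · exfalso
      have h2 : i.val + 1 ≤ j.val := h1
      have := Nat.mul_le_mul_right p h2
      have h3 : (i.val + 1) * p = i.val * p + p := by ring
      omega
    · exact h1
    · exfalso
      have h2 : j.val + 1 ≤ i.val := h1
      have := Nat.mul_le_mul_right p h2
      have h3 : (j.val + 1) * p = j.val * p + p := by ring
      omega
  rw [hij] at h'
  exact ⟨Fin.ext hij, ZMod.val_injective p (Nat.add_left_cancel h')⟩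

/-- the line through a grid -/
def edcLine (p : ℕ) (ab : ZMod p × ZMod p) (i : Fin k) : ZMod p :=
  ab.1 * (i.val : ZMod p) + ab.2

def edcF (hkpn : k * p ≤ n) [NeZero p] (ab : ZMod p × ZMod p) : Finset (Fin n) :=
  Finset.image (fun i => edcEnc hkpn i (edcLine p ab i)) Finset.univ

theorem edcLine_inj [Fact p.Prime] (hkp : k < p) (ab cd : ZMod p × ZMod p)
    (i j : Fin k) (hij : i ≠ j) (h1 : edcLine p ab i = edcLine p cd i)
    (h2 : edcLine p ab j = edcLine p cd j) : ab = cd := by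
  have hcast : ∀ i : Fin k, ((i.val : ZMod p)).val = i.val := fun i =>
    ZMod.val_cast_of_lt (lt_trans i.isLt hkp)
  have hcij : (i.val : ZMod p) ≠ (j.val : ZMod p) := by
    intro h
    have := congrArg ZMod.val h
    rw [hcast i, hcast j] at this
    exact hij (Fin.ext this)
  unfold edcLine at h1 h2
  have e3 : (ab.1 - cd.1) * ((i.val : ZMod p) - (j.val : ZMod p)) = 0 := by
    linear_combination h1 - h2
  rcases mul_eq_zero.mp e3 with h | h
  · have ha : ab.1 = cd.1 := by linear_combination h
    have hb : ab.2 = cd.2 := by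
      rw [ha] at h1
      exact add_left_cancel h1
    exact Prod.ext ha hb
  · exact absurd (sub_eq_zero.mp h) hcij

theorem edcF_dec (hkpn : k * p ≤ n) [NeZero p] (ab : ZMod p × ZMod p) (x : Fin n)
    (hx : x ∈ edcF hkpn ab) : ∃ i, x = edcEnc hkpn i (edcLine p ab i) := by
  rw [edcF, Finset.mem_image] at hx
  obtain ⟨i, _, hi⟩ := hx
  exact ⟨i, hi.symm⟩

end EDC

/-- For `k ≥ 2` and `n ≥ 4k²` there is a family `F` of `k`-element subsets of an
`n`-element set, any two distinct members of which intersect in at most one element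
(i.e. pairwise edge-disjoint copies of `K_k` in `K_n`), with `16·k²·|F| ≥ n²`. -/
theorem edge_disjoint_cliques (k n : ℕ) (hk : 2 ≤ k) (hn : 4 * k ^ 2 ≤ n) :
    ∃ F : Finset (Finset (Fin n)),
      (∀ S ∈ F, S.card = k) ∧
      (∀ S ∈ F, ∀ T ∈ F, S ≠ T → (S ∩ T).card ≤ 1) ∧
      n ^ 2 ≤ 16 * k ^ 2 * F.card := by
  have hk0 : 0 < k := by omega
  set t := n / (4 * k) with ht
  have hkt : k ≤ t := (Nat.le_div_iff_mul_le (by positivity)).mpr (by nlinarith)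
  obtain ⟨p, hp, htp, hp2t⟩ := Nat.exists_prime_lt_and_le_two_mul t (by omega)
  haveI : Fact p.Prime := ⟨hp⟩
  have hkp : k < p := lt_of_le_of_lt hkt htp
  have hppos : 0 < p := hp.pos
  have hmod := Nat.div_add_mod n (4 * k)
  rw [← ht] at hmod
  have h4kt : 4 * k * t ≤ n := Nat.le.intro hmod
  have hmodlt : n % (4 * k) < 4 * k := Nat.mod_lt _ (by positivity)
  have hkpn : k * p ≤ n := by
    calc k * p ≤ k * (2 * t) := Nat.mul_le_mul_left _ hp2t
      _ = 2 * (k * t) := by ring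
      _ ≤ 4 * (k * t) := Nat.mul_le_mul_right _ (by norm_num)
      _ = 4 * k * t := by ring
      _ ≤ n := h4kt
  have hn4kp : n ≤ 4 * k * p := by
    calc n = 4 * k * t + n % (4 * k) := hmod.symm
      _ ≤ 4 * k * t + 4 * k := by omega
      _ = 4 * k * (t + 1) := by ring
      _ ≤ 4 * k * p := Nat.mul_le_mul_left _ (by omega)
  refine ⟨Finset.image (edcF hkpn) Finset.univ, ?_, ?_, ?_⟩
  · intro S hS
    rw [Finset.mem_image] at hS
    obtain ⟨ab, _, rfl⟩ := hS
    rw [edcF]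
    rw [Finset.card_image_of_injective _
      (fun i j hij => (edcEnc_inj hkpn i j _ _ hij).1)]
    simp
  · intro S hS T hT hST
    rw [Finset.mem_image] at hS hT
    obtain ⟨ab, _, rfl⟩ := hS
    obtain ⟨cd, _, rfl⟩ := hT
    have habcd : ab ≠ cd := fun h => hST (by rw [h])
    rw [Finset.card_le_one]
    intro x hx y hy
    rw [Finset.mem_inter] at hx hy
    obtain ⟨i, hi⟩ := edcF_dec hkpn ab x hx.1
    obtain ⟨i', hi'⟩ := edcF_dec hkpn cd x hx.2
    obtain ⟨j, hj⟩ := edcF_dec hkpn ab y hy.1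
    obtain ⟨j', hj'⟩ := edcF_dec hkpn cd y hy.2
    obtain ⟨hii', hli⟩ := edcEnc_inj hkpn i i' _ _ (hi.symm.trans hi')
    obtain ⟨hjj', hlj⟩ := edcEnc_inj hkpn j j' _ _ (hj.symm.trans hj')
    subst hii'; subst hjj'
    by_cases hij : i = j
    · rw [hi, hj, hij]
    · exact absurd (edcLine_inj hkp ab cd i j hij hli hlj) habcd
  · have hfinj : Function.Injective (edcF (p := p) hkpn) := by
      intro ab cd h
      have key : ∀ i : Fin k, edcLine p ab i = edcLine p cd i := by
        intro i
        have hmem : edcEnc hkpn i (edcLine p ab i) ∈ edcF hkpn cd := by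
          rw [← h, edcF]
          exact Finset.mem_image_of_mem _ (Finset.mem_univ i)
        obtain ⟨j, hj⟩ := edcF_dec hkpn cd _ hmem
        obtain ⟨hij, hl⟩ := edcEnc_inj hkpn i j _ _ hj
        rw [← hij] at hl
        exact hl
      exact edcLine_inj hkp ab cd ⟨0, by omega⟩ ⟨1, by omega⟩
        (by simp [Fin.ext_iff]) (key _) (key _)
    have hcard : (Finset.image (edcF hkpn) (Finset.univ : Finset (ZMod p × ZMod p))).card
        = p * p := by
      rw [Finset.card_image_of_injective _ hfinj, Finset.card_univ, Fintype.card_prod,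
        ZMod.card]
    rw [hcard]
    calc n ^ 2 ≤ (4 * k * p) ^ 2 := Nat.pow_le_pow_left hn4kp 2
      _ = 16 * k ^ 2 * (p * p) := by ring
end

section
/- Let k ≥ 2 and l ≥ 3 be integers. Every finite poset that is (k,l)-semisaturated has at least min(2k + l − 5, k + 3l − 7) elements. -/
/-- `S` is a set of pairwise comparable elements under the relation `r`. -/
def MonoChain {β : Type*} (r : β → β → Prop) (S : Finset β) : Prop :=
  ∀ x ∈ S, ∀ y ∈ S, r x y ∨ r y x

/-- `S` is a set of pairwise incomparable elements under the relation `r`. -/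
def MonoAntichain {β : Type*} (r : β → β → Prop) (S : Finset β) : Prop :=
  ∀ x ∈ S, ∀ y ∈ S, x ≠ y → ¬ r x y ∧ ¬ r y x

/-- The poset given by the order `le` on `α` is `(k,l)`-semisaturated: every one-element
extension (a partial order `r` on `Option α` restricting to `le` on `α`) contains a
`k`-chain or an `l`-antichain containing the new element `none`. -/
def PosetSemiSat {α : Type*} (le : α → α → Prop) (k l : ℕ) : Prop :=
  ∀ r : Option α → Option α → Prop,
    (∀ x, r x x) → (∀ x y, r x y → r y x → x = y) → (∀ x y z, r x y → r y z → r x z) →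
    (∀ x y : α, r (some x) (some y) ↔ le x y) →
    ∃ S : Finset (Option α), none ∈ S ∧
      ((S.card = k ∧ MonoChain r S) ∨ (S.card = l ∧ MonoAntichain r S))

section Helpers
variable {α : Type} [PartialOrder α]

set_option linter.unusedSectionVars false

private lemma card_eraseNone_none_mem {s : Finset (Option α)} (h : none ∈ s) :
    s.eraseNone.card + 1 = s.card := by
  classical
  have h1 : (s.eraseNone.map Function.Embedding.some).card = (s.erase none).card := by
    rw [Finset.map_some_eraseNone]
  rw [Finset.card_map] at h1
  have h2 : 0 < s.card := Finset.card_pos.mpr ⟨_, h⟩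
  rw [h1, Finset.card_erase_of_mem h]
  omega

private lemma chain_top : ∀ S : Finset α, S.Nonempty →
    (∀ x ∈ S, ∀ y ∈ S, x ≤ y ∨ y ≤ x) → ∃ t ∈ S, ∀ s ∈ S, s ≤ t := by
  classical
  intro S
  induction S using Finset.induction_on with
  | empty => intro h; simp at h
  | @insert a s ha ih =>
    intro _ hc
    by_cases hs : s.Nonempty
    · obtain ⟨t, ht, htop⟩ := ih hs
        (fun x hx y hy => hc _ (Finset.mem_insert_of_mem hx) _ (Finset.mem_insert_of_mem hy))
      rcases hc a (Finset.mem_insert_self a s) t (Finset.mem_insert_of_mem ht) with h1 | h1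
      · refine ⟨t, Finset.mem_insert_of_mem ht, ?_⟩
        intro x hx
        rcases Finset.mem_insert.1 hx with rfl | hx
        · exact h1
        · exact htop x hx
      · refine ⟨a, Finset.mem_insert_self a s, ?_⟩
        intro x hx
        rcases Finset.mem_insert.1 hx with rfl | hx
        · exact le_refl _
        · exact (htop x hx).trans h1
    · rw [Finset.not_nonempty_iff_eq_empty] at hs; subst hs
      refine ⟨a, Finset.mem_insert_self a _, ?_⟩
      intro x hx
      rcases Finset.mem_insert.1 hx with rfl | hx
      · exact le_refl _
      · exact absurd hx (Finset.notMem_empty x)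

private lemma chain_bot : ∀ S : Finset α, S.Nonempty →
    (∀ x ∈ S, ∀ y ∈ S, x ≤ y ∨ y ≤ x) → ∃ t ∈ S, ∀ s ∈ S, t ≤ s := by
  intro S hne hc
  obtain ⟨t, ht, htop⟩ := chain_top (α := αᵒᵈ) S hne (fun x hx y hy => (hc x hx y hy).symm)
  exact ⟨t, ht, htop⟩

private lemma chain_inter_antichain [DecidableEq α] (C A : Finset α)
    (hC : ∀ x ∈ C, ∀ y ∈ C, x ≤ y ∨ y ≤ x)
    (hA : ∀ x ∈ A, ∀ y ∈ A, x ≠ y → ¬ x ≤ y ∧ ¬ y ≤ x) : (C ∩ A).card ≤ 1 := by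
  refine Finset.card_le_one.mpr ?_
  intro x hx y hy
  rw [Finset.mem_inter] at hx hy
  by_contra hne
  rcases hC x hx.1 y hy.1 with h | h
  · exact (hA x hx.2 y hy.2 hne).1 h
  · exact (hA x hx.2 y hy.2 hne).2 h

private lemma insert_top_chain [DecidableEq α] {S : Finset α} {y : α}
    (hSc : ∀ a ∈ S, ∀ b ∈ S, a ≤ b ∨ b ≤ a) (h : ∀ s ∈ S, s ≤ y) :
    ∀ a ∈ insert y S, ∀ b ∈ insert y S, a ≤ b ∨ b ≤ a := by
  classical
  intro a ha b hb
  rcases Finset.mem_insert.1 ha with ha' | ha'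
  · subst ha'
    rcases Finset.mem_insert.1 hb with hb' | hb'
    · subst hb'; exact Or.inl le_rfl
    · exact Or.inr (h b hb')
  · rcases Finset.mem_insert.1 hb with hb' | hb'
    · subst hb'; exact Or.inl (h a ha')
    · exact hSc a ha' b hb'

private lemma insert_bot_chain [DecidableEq α] {S : Finset α} {y : α}
    (hSc : ∀ a ∈ S, ∀ b ∈ S, a ≤ b ∨ b ≤ a) (h : ∀ s ∈ S, y ≤ s) :
    ∀ a ∈ insert y S, ∀ b ∈ insert y S, a ≤ b ∨ b ≤ a := by
  classical
  intro a ha b hb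
  rcases Finset.mem_insert.1 ha with ha' | ha'
  · subst ha'
    rcases Finset.mem_insert.1 hb with hb' | hb'
    · subst hb'; exact Or.inl le_rfl
    · exact Or.inl (h b hb')
  · rcases Finset.mem_insert.1 hb with hb' | hb'
    · subst hb'; exact Or.inr (h a ha')
    · exact hSc a ha' b hb'

private lemma apply_ext {k l : ℕ}
    (hsat : PosetSemiSat (fun x y : α => x ≤ y) k l)
    (Dn Up : α → Prop)
    (hD : ∀ x y, x ≤ y → Dn y → Dn x)
    (hU : ∀ x y, x ≤ y → Up x → Up y)
    (hDU : ∀ x y, Dn x → Up y → x ≤ y)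
    (hdisj : ∀ x, Dn x → Up x → False) :
    (∃ S : Finset α, S.card + 1 = k ∧ (∀ x ∈ S, ∀ y ∈ S, x ≤ y ∨ y ≤ x) ∧
      (∀ x ∈ S, Dn x ∨ Up x)) ∨
    (∃ S : Finset α, S.card + 1 = l ∧ (∀ x ∈ S, ∀ y ∈ S, x ≠ y → ¬x ≤ y ∧ ¬y ≤ x) ∧
      (∀ x ∈ S, ¬Dn x ∧ ¬Up x)) := by
  classical
  let r : Option α → Option α → Prop := fun o p =>
    Option.elim o (Option.elim p True Up) (fun x => Option.elim p (Dn x) (fun y => x ≤ y))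
  have h1 : ∀ x, r x x := by
    rintro (_ | x)
    · trivial
    · exact le_refl x
  have h2 : ∀ x y, r x y → r y x → x = y := by
    rintro (_ | x) (_ | y) hxy hyx
    · rfl
    · exact absurd (hdisj y hyx hxy) not_false
    · exact absurd (hdisj x hxy hyx) not_false
    · exact congrArg some (le_antisymm hxy hyx)
  have h3 : ∀ x y z, r x y → r y z → r x z := by
    rintro (_ | x) (_ | y) (_ | z) hxy hyz
    · trivial
    · exact hyz
    · trivial
    · exact hU y z hyz hxy
    · exact hxy
    · exact hDU x z hxy hyz
    · exact hD x y hxy hyz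
    · exact le_trans hxy hyz
  have h4 : ∀ x y : α, r (some x) (some y) ↔ x ≤ y := fun x y => Iff.rfl
  obtain ⟨S, hnone, hS⟩ := hsat r h1 h2 h3 h4
  rcases hS with ⟨hcard, hmc⟩ | ⟨hcard, hma⟩
  · left
    refine ⟨S.eraseNone, by rw [card_eraseNone_none_mem hnone, hcard], ?_, ?_⟩
    · intro x hx y hy
      exact hmc (some x) (Finset.mem_eraseNone.1 hx) (some y) (Finset.mem_eraseNone.1 hy)
    · intro x hx
      exact hmc (some x) (Finset.mem_eraseNone.1 hx) none hnone
  · right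
    refine ⟨S.eraseNone, by rw [card_eraseNone_none_mem hnone, hcard], ?_, ?_⟩
    · intro x hx y hy hne
      exact hma (some x) (Finset.mem_eraseNone.1 hx) (some y) (Finset.mem_eraseNone.1 hy)
        (fun h => hne (Option.some_injective α h))
    · intro x hx
      exact hma (some x) (Finset.mem_eraseNone.1 hx) none hnone (Option.some_ne_none x)

end Helpers

/-- For `k ≥ 2` and `l ≥ 3`, every finite poset that is `(k,l)`-semisaturated has at least
`min(2k + l - 5, k + 3l - 7)` elements. -/
theorem poset_semisat_lower_bound {α : Type} [Fintype α] [PartialOrder α]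
    (k l : ℕ) (hk : 2 ≤ k) (hl : 3 ≤ l)
    (hsat : PosetSemiSat (fun x y : α => x ≤ y) k l) :
    min (2 * k + l - 5) (k + 3 * l - 7) ≤ Fintype.card α := by
  classical
  -- `Htop x`: x is the top of a chain of at least k-1 elements
  set Htop : α → Prop := fun x => ∃ S : Finset α,
    (∀ a ∈ S, ∀ b ∈ S, a ≤ b ∨ b ≤ a) ∧ x ∈ S ∧ (∀ s ∈ S, s ≤ x) ∧ k ≤ S.card + 1 with hHtop
  set Lbot : α → Prop := fun x => ∃ S : Finset α,
    (∀ a ∈ S, ∀ b ∈ S, a ≤ b ∨ b ≤ a) ∧ x ∈ S ∧ (∀ s ∈ S, x ≤ s) ∧ k ≤ S.card + 1 with hLbot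
  -- Step 1: an antichain A1 of size l-1, all of whose elements satisfy Htop
  obtain ⟨A1, hA1card, hA1anti, hA1⟩ :
      ∃ A1 : Finset α, A1.card + 1 = l ∧
        (∀ x ∈ A1, ∀ y ∈ A1, x ≠ y → ¬x ≤ y ∧ ¬y ≤ x) ∧ (∀ x ∈ A1, Htop x) := by
    have := apply_ext hsat (fun x => ¬ Htop x) (fun _ => False)
      (by
        intro x y hxy hny hx
        apply hny
        obtain ⟨S, hSc, hxS, hStop, hScard⟩ := hx
        refine ⟨insert y S, ?_, Finset.mem_insert_self _ _, ?_, ?_⟩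
        · exact insert_top_chain hSc (fun s hs => (hStop s hs).trans hxy)
        · intro s hs
          rcases Finset.mem_insert.1 hs with hs' | hs'
          · subst hs'; exact le_refl _
          · exact (hStop s hs').trans hxy
        · exact le_trans hScard (by
            have := Finset.card_le_card (Finset.subset_insert y S); omega))
      (fun x y _ h => h.elim) (fun x y _ h => h.elim) (fun x _ h => h.elim)
    rcases this with ⟨S, hScard, hSc, hSall⟩ | ⟨S, hScard, hSa, hSall⟩
    · exfalso
      have hne : S.Nonempty := Finset.card_pos.1 (by omega)
      obtain ⟨t, htS, htop⟩ := chain_top S hne hSc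
      rcases hSall t htS with h | h
      · exact h ⟨S, hSc, htS, htop, le_of_eq hScard.symm⟩
      · exact h
    · exact ⟨S, hScard, hSa, fun x hx => not_not.1 (hSall x hx).1⟩
  -- Step 2: an antichain A2 of size l-1, all of whose elements satisfy Lbot
  obtain ⟨A2, hA2card, hA2anti, hA2⟩ :
      ∃ A2 : Finset α, A2.card + 1 = l ∧
        (∀ x ∈ A2, ∀ y ∈ A2, x ≠ y → ¬x ≤ y ∧ ¬y ≤ x) ∧ (∀ x ∈ A2, Lbot x) := by
    have := apply_ext hsat (fun _ => False) (fun x => ¬ Lbot x)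
      (fun x y _ h => h.elim)
      (by
        intro x y hxy hnx hy
        apply hnx
        obtain ⟨S, hSc, hxS, hSbot, hScard⟩ := hy
        refine ⟨insert x S, ?_, Finset.mem_insert_self _ _, ?_, ?_⟩
        · exact insert_bot_chain hSc (fun s hs => hxy.trans (hSbot s hs))
        · intro s hs
          rcases Finset.mem_insert.1 hs with hs' | hs'
          · subst hs'; exact le_refl _
          · exact hxy.trans (hSbot s hs')
        · exact le_trans hScard (by
            have := Finset.card_le_card (Finset.subset_insert x S); omega))
      (fun x y h _ => h.elim) (fun x h _ => h.elim)
    rcases this with ⟨S, hScard, hSc, hSall⟩ | ⟨S, hScard, hSa, hSall⟩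
    · exfalso
      have hne : S.Nonempty := Finset.card_pos.1 (by omega)
      obtain ⟨t, htS, hbot⟩ := chain_bot S hne hSc
      rcases hSall t htS with h | h
      · exact h
      · exact h ⟨S, hSc, htS, hbot, le_of_eq hScard.symm⟩
    · exact ⟨S, hScard, hSa, fun x hx => not_not.1 (hSall x hx).2⟩
  have hn : ∀ T : Finset α, T.card ≤ Fintype.card α := by
    intro T
    simpa using Finset.card_le_univ T
  by_cases hc : ∀ x ∈ A2, ∀ y ∈ A1, x ≤ y
  · -- Every element of A2 is below every element of A1
    have hdisj12 : ∀ z, z ∈ A1 → z ∈ A2 → False := by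
      intro z h1 h2
      have h2lt : 1 < A2.card := by omega
      obtain ⟨x, hxA2, hxz⟩ := Finset.exists_mem_ne h2lt z
      exact (hA2anti x hxA2 z h2 hxz).1 (hc x hxA2 z h1)
    have hA1A2 : A1 ∩ A2 = ∅ := by
      ext t
      simp only [Finset.mem_inter, Finset.notMem_empty, iff_false, not_and]
      exact fun h1 h2 => absurd (hdisj12 t h1 h2) not_false
    have := apply_ext hsat (fun t => ∃ x ∈ A2, t ≤ x) (fun t => ∃ y ∈ A1, y ≤ t)
      (fun a b hab ⟨x, hx, hbx⟩ => ⟨x, hx, hab.trans hbx⟩)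
      (fun a b hab ⟨y, hy, hya⟩ => ⟨y, hy, hya.trans hab⟩)
      (fun a b ⟨x, hx, hax⟩ ⟨y, hy, hyb⟩ => (hax.trans (hc x hx y hy)).trans hyb)
      (by
        rintro t ⟨x, hx, htx⟩ ⟨y, hy, hyt⟩
        have hyx : y ≤ x := hyt.trans htx
        have hxy : x ≤ y := hc x hx y hy
        have : x = y := le_antisymm hxy hyx
        subst this
        exact hdisj12 x hy hx)
    rcases this with ⟨W, hWcard, hWc, hWall⟩ | ⟨A7, hA7card, hA7anti, hA7all⟩
    · -- chain case
      set Wd := W.filter (fun t => ∃ x ∈ A2, t ≤ x) with hWd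
      set Wu := W.filter (fun t => ¬ ∃ x ∈ A2, t ≤ x) with hWu
      have hsplit : Wd.card + Wu.card = W.card :=
        Finset.card_filter_add_card_filter_not _
      have hWdchain : ∀ x ∈ Wd, ∀ y ∈ Wd, x ≤ y ∨ y ≤ x := fun x hx y hy =>
        hWc x (Finset.mem_filter.1 hx).1 y (Finset.mem_filter.1 hy).1
      have hWuchain : ∀ x ∈ Wu, ∀ y ∈ Wu, x ≤ y ∨ y ≤ x := fun x hx y hy =>
        hWc x (Finset.mem_filter.1 hx).1 y (Finset.mem_filter.1 hy).1
      have hWuUp : ∀ t ∈ Wu, ∃ y ∈ A1, y ≤ t := by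
        intro t ht
        have h1 := Finset.mem_filter.1 ht
        exact (hWall t h1.1).resolve_left h1.2
      by_cases hbig : k ≤ 2 * Wd.card + 1
      · -- use the lower part
        have hWdne : Wd.Nonempty := Finset.card_pos.1 (by omega)
        obtain ⟨w, hwWd, hwtop⟩ := chain_top Wd hWdne hWdchain
        obtain ⟨x', hx'A2, hwx'⟩ := (Finset.mem_filter.1 hwWd).2
        obtain ⟨S', hS'c, hx'S', hS'ge, hS'card⟩ := hA2 x' hx'A2
        set G := Wd ∪ S' with hG
        have hGchain : ∀ x ∈ G, ∀ y ∈ G, x ≤ y ∨ y ≤ x := by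
          intro x hx y hy
          rcases Finset.mem_union.1 hx with hx | hx <;> rcases Finset.mem_union.1 hy with hy | hy
          · exact hWdchain x hx y hy
          · exact Or.inl (((hwtop x hx).trans hwx').trans (hS'ge y hy))
          · exact Or.inr (((hwtop y hy).trans hwx').trans (hS'ge x hx))
          · exact hS'c x hx y hy
        have hGint : Wd ∩ S' ⊆ {x'} := by
          intro t ht
          have h1 := Finset.mem_inter.1 ht
          have : t ≤ x' := (hwtop t h1.1).trans hwx'
          have : t = x' := le_antisymm this (hS'ge t h1.2)
          simp [this]
        have hGint1 : (Wd ∩ S').card ≤ 1 := by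
          have := Finset.card_le_card hGint
          simpa using this
        have e0 : G.card + (Wd ∩ S').card = Wd.card + S'.card :=
          Finset.card_union_add_card_inter _ _
        have e1 : (G ∪ A1).card + (G ∩ A1).card = G.card + A1.card :=
          Finset.card_union_add_card_inter _ _
        have e2 : (G ∩ A1).card ≤ 1 := chain_inter_antichain G A1 hGchain hA1anti
        have e3 : ((G ∪ A1) ∪ A2).card + ((G ∪ A1) ∩ A2).card = (G ∪ A1).card + A2.card :=
          Finset.card_union_add_card_inter _ _
        have e4 : (G ∪ A1) ∩ A2 = (G ∩ A2) ∪ (A1 ∩ A2) := Finset.union_inter_distrib_right _ _ _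
        have e5 : ((G ∪ A1) ∩ A2).card ≤ 1 := by
          rw [e4, hA1A2, Finset.union_empty]
          exact chain_inter_antichain G A2 hGchain hA2anti
        have e6 := hn ((G ∪ A1) ∪ A2)
        omega
      · -- use the upper part
        have hWune : Wu.Nonempty := Finset.card_pos.1 (by omega)
        obtain ⟨u, huWu, hubot⟩ := chain_bot Wu hWune hWuchain
        obtain ⟨y', hy'A1, hy'u⟩ := hWuUp u huWu
        obtain ⟨T, hTc, hy'T, hTle, hTcard⟩ := hA1 y' hy'A1
        set G := T ∪ Wu with hG
        have hGchain : ∀ x ∈ G, ∀ y ∈ G, x ≤ y ∨ y ≤ x := by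
          intro x hx y hy
          rcases Finset.mem_union.1 hx with hx | hx <;> rcases Finset.mem_union.1 hy with hy | hy
          · exact hTc x hx y hy
          · exact Or.inl (((hTle x hx).trans hy'u).trans (hubot y hy))
          · exact Or.inr (((hTle y hy).trans hy'u).trans (hubot x hx))
          · exact hWuchain x hx y hy
        have hGint : T ∩ Wu ⊆ {y'} := by
          intro t ht
          have h1 := Finset.mem_inter.1 ht
          have h2 : y' ≤ t := hy'u.trans (hubot t h1.2)
          have : t = y' := le_antisymm (hTle t h1.1) h2
          simp [this]
        have hGint1 : (T ∩ Wu).card ≤ 1 := by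
          have := Finset.card_le_card hGint
          simpa using this
        have e0 : G.card + (T ∩ Wu).card = T.card + Wu.card :=
          Finset.card_union_add_card_inter _ _
        have e1 : (G ∪ A1).card + (G ∩ A1).card = G.card + A1.card :=
          Finset.card_union_add_card_inter _ _
        have e2 : (G ∩ A1).card ≤ 1 := chain_inter_antichain G A1 hGchain hA1anti
        have e3 : ((G ∪ A1) ∪ A2).card + ((G ∪ A1) ∩ A2).card = (G ∪ A1).card + A2.card :=
          Finset.card_union_add_card_inter _ _
        have e4 : (G ∪ A1) ∩ A2 = (G ∩ A2) ∪ (A1 ∩ A2) := Finset.union_inter_distrib_right _ _ _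
        have e5 : ((G ∪ A1) ∩ A2).card ≤ 1 := by
          rw [e4, hA1A2, Finset.union_empty]
          exact chain_inter_antichain G A2 hGchain hA2anti
        have e6 := hn ((G ∪ A1) ∪ A2)
        omega
    · -- antichain case: a third antichain disjoint from A1 and A2
      have hA7A1 : A7 ∩ A1 = ∅ := by
        ext t
        simp only [Finset.mem_inter, Finset.notMem_empty, iff_false, not_and]
        intro h7 h1
        exact (hA7all t h7).2 ⟨t, h1, le_refl t⟩
      have hA7A2 : A7 ∩ A2 = ∅ := by
        ext t
        simp only [Finset.mem_inter, Finset.notMem_empty, iff_false, not_and]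
        intro h7 h2
        exact (hA7all t h7).1 ⟨t, h2, le_refl t⟩
      have hA2ne : A2.Nonempty := Finset.card_pos.1 (by omega)
      obtain ⟨x0, hx0⟩ := hA2ne
      obtain ⟨X, hXc, hx0X, hXge, hXcard⟩ := hA2 x0 hx0
      have e1 : (A1 ∪ A2).card + (A1 ∩ A2).card = A1.card + A2.card :=
        Finset.card_union_add_card_inter _ _
      have e2 : ((A1 ∪ A2) ∪ A7).card + ((A1 ∪ A2) ∩ A7).card = (A1 ∪ A2).card + A7.card :=
        Finset.card_union_add_card_inter _ _
      have e3 : (A1 ∪ A2) ∩ A7 = (A1 ∩ A7) ∪ (A2 ∩ A7) := Finset.union_inter_distrib_right _ _ _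
      have e3' : (A1 ∪ A2) ∩ A7 = ∅ := by
        rw [e3, Finset.inter_comm A1 A7, hA7A1, Finset.inter_comm A2 A7, hA7A2,
          Finset.union_empty]
      have e4 : (X ∪ ((A1 ∪ A2) ∪ A7)).card + (X ∩ ((A1 ∪ A2) ∪ A7)).card
          = X.card + ((A1 ∪ A2) ∪ A7).card := Finset.card_union_add_card_inter _ _
      have e5 : X ∩ ((A1 ∪ A2) ∪ A7) = ((X ∩ (A1 ∪ A2)) ∪ (X ∩ A7)) :=
        Finset.inter_union_distrib_left _ _ _
      have e5' : X ∩ (A1 ∪ A2) = (X ∩ A1) ∪ (X ∩ A2) := Finset.inter_union_distrib_left _ _ _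
      have f1 : (X ∩ A1).card ≤ 1 := chain_inter_antichain X A1 hXc hA1anti
      have f2 : (X ∩ A2).card ≤ 1 := chain_inter_antichain X A2 hXc hA2anti
      have f3 : (X ∩ A7).card ≤ 1 := chain_inter_antichain X A7 hXc hA7anti
      have f4 : (X ∩ ((A1 ∪ A2) ∪ A7)).card ≤ 3 := by
        rw [e5, e5']
        calc ((X ∩ A1 ∪ X ∩ A2) ∪ X ∩ A7).card
            ≤ (X ∩ A1 ∪ X ∩ A2).card + (X ∩ A7).card := Finset.card_union_le _ _
          _ ≤ ((X ∩ A1).card + (X ∩ A2).card) + (X ∩ A7).card := by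
              have := Finset.card_union_le (X ∩ A1) (X ∩ A2); omega
          _ ≤ 3 := by omega
      have e6 := hn (X ∪ ((A1 ∪ A2) ∪ A7))
      have e7 : (A1 ∩ A2).card = 0 := by rw [hA1A2]; rfl
      have e8 : ((A1 ∪ A2) ∩ A7).card = 0 := by rw [e3']; rfl
      omega
  · -- some x ∈ A2 is not below some y ∈ A1 : two disjoint long chains
    push_neg at hc
    obtain ⟨x, hxA2, y, hyA1, hxy⟩ := hc
    obtain ⟨X, hXc, hxX, hXge, hXcard⟩ := hA2 x hxA2
    obtain ⟨Y, hYc, hyY, hYle, hYcard⟩ := hA1 y hyA1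
    have hXY : X ∩ Y = ∅ := by
      ext t
      simp only [Finset.mem_inter, Finset.notMem_empty, iff_false, not_and]
      intro htX htY
      exact hxy ((hXge t htX).trans (hYle t htY))
    have e1 : (X ∪ Y).card + (X ∩ Y).card = X.card + Y.card :=
      Finset.card_union_add_card_inter _ _
    have e1' : (X ∩ Y).card = 0 := by rw [hXY]; rfl
    have e2 : ((X ∪ Y) ∪ A1).card + ((X ∪ Y) ∩ A1).card = (X ∪ Y).card + A1.card :=
      Finset.card_union_add_card_inter _ _
    have e3 : (X ∪ Y) ∩ A1 = (X ∩ A1) ∪ (Y ∩ A1) := Finset.union_inter_distrib_right _ _ _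
    have f1 : (X ∩ A1).card ≤ 1 := chain_inter_antichain X A1 hXc hA1anti
    have f2 : (Y ∩ A1).card ≤ 1 := chain_inter_antichain Y A1 hYc hA1anti
    have f3 : ((X ∪ Y) ∩ A1).card ≤ 2 := by
      rw [e3]
      have := Finset.card_union_le (X ∩ A1) (Y ∩ A1)
      omega
    have e4 := hn ((X ∪ Y) ∪ A1)
    omega
end

section
/- Let k ≥ 2 and l ≥ 3 be integers. There exists a finite poset with exactly min(2k + l − 5, k + 3l − 7) elements that is (k,l)-semisaturated. -/
set_option maxHeartbeats 1000000

namespace SemisatAux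

def toS {n : ℕ} (T : Finset ℕ) (h : ∀ m ∈ T, m < n) : Finset (Option (Fin n)) :=
  insert none ((T.attachFin h).map ⟨some, Option.some_injective _⟩)

theorem none_mem_toS {n : ℕ} (T : Finset ℕ) (h : ∀ m ∈ T, m < n) : none ∈ toS T h :=
  Finset.mem_insert_self _ _

theorem toS_card {n : ℕ} (T : Finset ℕ) (h : ∀ m ∈ T, m < n) :
    (toS T h).card = T.card + 1 := by
  unfold toS
  rw [Finset.card_insert_of_notMem (by simp), Finset.card_map, Finset.card_attachFin]

theorem mem_toS {n : ℕ} {T : Finset ℕ} {h : ∀ m ∈ T, m < n} {x : Option (Fin n)} :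
    x ∈ toS T h ↔ x = none ∨ ∃ a : Fin n, a.val ∈ T ∧ some a = x := by
  simp [toS, Finset.mem_attachFin]

/-- Construction A: bottom chain of size `K` (indices `< K`), middle antichain of size
`L` (indices in `[K, K+L)`), top chain of size `K` (indices in `[K+L, 2K+L)`), ordered
as the ordinal sum chain ⊕ antichain ⊕ chain. -/
def leA (K L : ℕ) (i j : Fin (2*K + L)) : Prop :=
  i.val = j.val ∨ (i.val < j.val ∧ ¬(K ≤ i.val ∧ j.val < K + L))

theorem semisatAaux (K L : ℕ) :
    ∃ le : Fin (2*K + L) → Fin (2*K + L) → Prop,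
      (∀ x, le x x) ∧ (∀ x y, le x y → le y x → x = y) ∧
      (∀ x y z, le x y → le y z → le x z) ∧
      PosetSemiSat le (K+2) (L+1) := by
  refine ⟨leA K L, ?_, ?_, ?_, ?_⟩
  · intro x; exact Or.inl rfl
  · intro x y h1 h2; apply Fin.val_injective; simp only [leA] at h1 h2; omega
  · intro x y z h1 h2; simp only [leA] at h1 h2 ⊢; omega
  · intro r hrefl hanti htrans hiff
    by_cases hble : ∃ a : Fin (2*K + L), K ≤ a.val ∧ a.val < K + L ∧ r (some a) none
    · -- some middle element below v : chain = bottom chain + a + v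
      obtain ⟨a, ha1, ha2, ha3⟩ := hble
      have hT : ∀ m ∈ insert a.val (Finset.range K), m < 2*K + L := by
        intro m hm
        simp only [Finset.mem_insert, Finset.mem_range] at hm
        have := a.isLt; omega
      refine ⟨toS _ hT, none_mem_toS _ _, Or.inl ⟨?_, ?_⟩⟩
      · rw [toS_card, Finset.card_insert_of_notMem (by simp; omega), Finset.card_range]
      · have key : ∀ b : Fin (2*K + L),
            b.val ∈ insert a.val (Finset.range K) → r (some b) none := by
          intro b hb
          simp only [Finset.mem_insert, Finset.mem_range] at hb
          rcases hb with hb | hb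
          · have hba : b = a := Fin.val_injective hb
            rw [hba]; exact ha3
          · refine htrans _ (some a) _ ((hiff b a).2 ?_) ha3
            simp only [leA]; omega
        intro x hx y hy
        rw [mem_toS] at hx hy
        rcases hx with rfl | ⟨b, hb, rfl⟩
        · rcases hy with rfl | ⟨c, hc, rfl⟩
          · exact Or.inl (hrefl none)
          · exact Or.inr (key c hc)
        · rcases hy with rfl | ⟨c, hc, rfl⟩
          · exact Or.inl (key b hb)
          · rw [hiff, hiff]
            simp only [Finset.mem_insert, Finset.mem_range] at hb hc
            simp only [leA]; omega
    · by_cases habv : ∃ a : Fin (2*K + L), K ≤ a.val ∧ a.val < K + L ∧ r none (some a)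
      · -- some middle element above v : chain = v + a + top chain
        obtain ⟨a, ha1, ha2, ha3⟩ := habv
        have hT : ∀ m ∈ insert a.val (Finset.Ico (K+L) (2*K + L)), m < 2*K + L := by
          intro m hm
          simp only [Finset.mem_insert, Finset.mem_Ico] at hm
          have := a.isLt; omega
        refine ⟨toS _ hT, none_mem_toS _ _, Or.inl ⟨?_, ?_⟩⟩
        · rw [toS_card, Finset.card_insert_of_notMem (by simp [Finset.mem_Ico]; omega),
            Nat.card_Ico]
          omega
        · have key : ∀ b : Fin (2*K + L),
              b.val ∈ insert a.val (Finset.Ico (K+L) (2*K + L)) → r none (some b) := by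
            intro b hb
            simp only [Finset.mem_insert, Finset.mem_Ico] at hb
            rcases hb with hb | hb
            · have hba : b = a := Fin.val_injective hb
              rw [hba]; exact ha3
            · refine htrans _ (some a) _ ha3 ((hiff a b).2 ?_)
              simp only [leA]; omega
          intro x hx y hy
          rw [mem_toS] at hx hy
          rcases hx with rfl | ⟨b, hb, rfl⟩
          · rcases hy with rfl | ⟨c, hc, rfl⟩
            · exact Or.inl (hrefl none)
            · exact Or.inl (key c hc)
          · rcases hy with rfl | ⟨c, hc, rfl⟩
            · exact Or.inr (key b hb)
            · rw [hiff, hiff]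
              simp only [Finset.mem_insert, Finset.mem_Ico] at hb hc
              simp only [leA]; omega
      · -- middle antichain all incomparable to v : antichain = middle ∪ {v}
        push_neg at hble habv
        have hT : ∀ m ∈ Finset.Ico K (K+L), m < 2*K + L := by
          intro m hm; simp only [Finset.mem_Ico] at hm; omega
        refine ⟨toS _ hT, none_mem_toS _ _, Or.inr ⟨?_, ?_⟩⟩
        · rw [toS_card, Nat.card_Ico]; omega
        · intro x hx y hy hxy
          rw [mem_toS] at hx hy
          rcases hx with rfl | ⟨b, hb, rfl⟩
          · rcases hy with rfl | ⟨c, hc, rfl⟩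
            · exact absurd rfl hxy
            · simp only [Finset.mem_Ico] at hc
              exact ⟨habv c hc.1 hc.2, hble c hc.1 hc.2⟩
          · rcases hy with rfl | ⟨c, hc, rfl⟩
            · simp only [Finset.mem_Ico] at hb
              exact ⟨hble b hb.1 hb.2, habv b hb.1 hb.2⟩
            · have hne : b.val ≠ c.val := fun h => hxy (congrArg some (Fin.val_injective h))
              rw [hiff, hiff]
              simp only [Finset.mem_Ico] at hb hc
              simp only [leA]; omega

/-- Construction B: chain c_0 < ... < c_P (indices ≤ P), antichain X = [P+1, P+1+M),
antichain Y = [P+1+M, P+1+2M), antichain W = [P+1+2M, P+1+3M).  X is incomparable to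
c_0 and below the rest of the chain and W; W is incomparable to c_P and above the rest
of the chain and X; Y is incomparable to everything. -/
def leB (P M : ℕ) (i j : Fin (P+1 + 3*M)) : Prop :=
  i.val = j.val ∨
  (i.val < j.val ∧ j.val < P+1) ∨
  (P+1 ≤ i.val ∧ i.val < P+1+M ∧ 1 ≤ j.val ∧ j.val < P+1) ∨
  (P+1 ≤ i.val ∧ i.val < P+1+M ∧ P+1+2*M ≤ j.val) ∨
  (i.val < P ∧ P+1+2*M ≤ j.val)

theorem semisatBaux (P M : ℕ) (hM : 1 ≤ M) :
    ∃ le : Fin (P+1 + 3*M) → Fin (P+1 + 3*M) → Prop,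
      (∀ x, le x x) ∧ (∀ x y, le x y → le y x → x = y) ∧
      (∀ x y z, le x y → le y z → le x z) ∧
      PosetSemiSat le (P+2) (M+2) := by
  refine ⟨leB P M, ?_, ?_, ?_, ?_⟩
  · intro x; exact Or.inl rfl
  · intro x y h1 h2; apply Fin.val_injective; simp only [leB] at h1 h2; omega
  · intro x y z h1 h2; simp only [leB] at h1 h2 ⊢; omega
  · intro r hrefl hanti htrans hiff
    by_cases hyb : ∃ y : Fin (P+1 + 3*M),
        P+1+M ≤ y.val ∧ y.val < P+1+2*M ∧ r (some y) none
    · -- some Y-element is below v; then nothing is above v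
      obtain ⟨y, hy1, hy2, hy3⟩ := hyb
      have habv_none : ∀ a : Fin (P+1 + 3*M), ¬ r none (some a) := by
        intro a ha
        have h1 : r (some y) (some a) := htrans _ none _ hy3 ha
        have h2 := (hiff y a).1 h1
        simp only [leB] at h2
        have hay : a = y := Fin.val_injective (by omega)
        rw [hay] at ha
        exact absurd (hanti none (some y) ha hy3) (by simp)
      by_cases hwb : ∃ w : Fin (P+1 + 3*M),
          (P+1+2*M ≤ w.val ∨ w.val = P) ∧ r (some w) none
      · -- chain: c_0 < ... < c_{P-1} < w ≤ v
        obtain ⟨w, hw, hwble⟩ := hwb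
        have hT : ∀ m ∈ insert w.val (Finset.range P), m < P+1 + 3*M := by
          intro m hm
          simp only [Finset.mem_insert, Finset.mem_range] at hm
          have := w.isLt; omega
        refine ⟨toS _ hT, none_mem_toS _ _, Or.inl ⟨?_, ?_⟩⟩
        · rw [toS_card, Finset.card_insert_of_notMem (by simp; omega), Finset.card_range]
        · have key : ∀ b : Fin (P+1 + 3*M),
              b.val ∈ insert w.val (Finset.range P) → r (some b) none := by
            intro b hb
            simp only [Finset.mem_insert, Finset.mem_range] at hb
            rcases hb with hb | hb
            · have hbw : b = w := Fin.val_injective hb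
              rw [hbw]; exact hwble
            · refine htrans _ (some w) _ ((hiff b w).2 ?_) hwble
              simp only [leB]; omega
          intro x hx y' hy'
          rw [mem_toS] at hx hy'
          rcases hx with rfl | ⟨b, hb, rfl⟩
          · rcases hy' with rfl | ⟨c, hc, rfl⟩
            · exact Or.inl (hrefl none)
            · exact Or.inr (key c hc)
          · rcases hy' with rfl | ⟨c, hc, rfl⟩
            · exact Or.inl (key b hb)
            · rw [hiff, hiff]
              simp only [Finset.mem_insert, Finset.mem_range] at hb hc
              simp only [leB]; omega
      · -- antichain: {v} ∪ W ∪ {c_P}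
        push_neg at hwb
        have hT : ∀ m ∈ insert P (Finset.Ico (P+1+2*M) (P+1+3*M)), m < P+1 + 3*M := by
          intro m hm
          simp only [Finset.mem_insert, Finset.mem_Ico] at hm
          omega
        refine ⟨toS _ hT, none_mem_toS _ _, Or.inr ⟨?_, ?_⟩⟩
        · rw [toS_card, Finset.card_insert_of_notMem (by simp [Finset.mem_Ico]; omega),
            Nat.card_Ico]
          omega
        · intro x hx y' hy' hxy
          rw [mem_toS] at hx hy'
          have hmem : ∀ b : Fin (P+1 + 3*M),
              b.val ∈ insert P (Finset.Ico (P+1+2*M) (P+1+3*M)) →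
              ¬ r none (some b) ∧ ¬ r (some b) none := by
            intro b hb
            simp only [Finset.mem_insert, Finset.mem_Ico] at hb
            exact ⟨habv_none b, hwb b (by omega)⟩
          rcases hx with rfl | ⟨b, hb, rfl⟩
          · rcases hy' with rfl | ⟨c, hc, rfl⟩
            · exact absurd rfl hxy
            · exact ⟨(hmem c hc).1, (hmem c hc).2⟩
          · rcases hy' with rfl | ⟨c, hc, rfl⟩
            · exact ⟨(hmem b hb).2, (hmem b hb).1⟩
            · have hne : b.val ≠ c.val := fun h => hxy (congrArg some (Fin.val_injective h))
              rw [hiff, hiff]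
              simp only [Finset.mem_insert, Finset.mem_Ico] at hb hc
              simp only [leB]; omega
    · by_cases hya : ∃ y : Fin (P+1 + 3*M),
          P+1+M ≤ y.val ∧ y.val < P+1+2*M ∧ r none (some y)
      · -- some Y-element is above v; then nothing is below v
        obtain ⟨y, hy1, hy2, hy3⟩ := hya
        have hble_none : ∀ a : Fin (P+1 + 3*M), ¬ r (some a) none := by
          intro a ha
          have h1 : r (some a) (some y) := htrans _ none _ ha hy3
          have h2 := (hiff a y).1 h1
          simp only [leB] at h2
          have hay : a = y := Fin.val_injective (by omega)
          rw [hay] at ha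
          exact absurd (hanti none (some y) hy3 ha) (by simp)
        by_cases hxa : ∃ x : Fin (P+1 + 3*M),
            (x.val = 0 ∨ (P+1 ≤ x.val ∧ x.val < P+1+M)) ∧ r none (some x)
        · -- chain: v ≤ x < c_1 < ... < c_P
          obtain ⟨x, hx, hxabv⟩ := hxa
          have hT : ∀ m ∈ insert x.val (Finset.Ico 1 (P+1)), m < P+1 + 3*M := by
            intro m hm
            simp only [Finset.mem_insert, Finset.mem_Ico] at hm
            have := x.isLt; omega
          refine ⟨toS _ hT, none_mem_toS _ _, Or.inl ⟨?_, ?_⟩⟩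
          · rw [toS_card, Finset.card_insert_of_notMem (by simp [Finset.mem_Ico]; omega),
              Nat.card_Ico]
            omega
          · have key : ∀ b : Fin (P+1 + 3*M),
                b.val ∈ insert x.val (Finset.Ico 1 (P+1)) → r none (some b) := by
              intro b hb
              simp only [Finset.mem_insert, Finset.mem_Ico] at hb
              rcases hb with hb | hb
              · have hbx : b = x := Fin.val_injective hb
                rw [hbx]; exact hxabv
              · refine htrans _ (some x) _ hxabv ((hiff x b).2 ?_)
                simp only [leB]; omega
            intro z hz y' hy'
            rw [mem_toS] at hz hy'
            rcases hz with rfl | ⟨b, hb, rfl⟩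
            · rcases hy' with rfl | ⟨c, hc, rfl⟩
              · exact Or.inl (hrefl none)
              · exact Or.inl (key c hc)
            · rcases hy' with rfl | ⟨c, hc, rfl⟩
              · exact Or.inr (key b hb)
              · rw [hiff, hiff]
                simp only [Finset.mem_insert, Finset.mem_Ico] at hb hc
                simp only [leB]; omega
        · -- antichain: {v} ∪ X ∪ {c_0}
          push_neg at hxa
          have hT : ∀ m ∈ insert 0 (Finset.Ico (P+1) (P+1+M)), m < P+1 + 3*M := by
            intro m hm
            simp only [Finset.mem_insert, Finset.mem_Ico] at hm
            omega
          refine ⟨toS _ hT, none_mem_toS _ _, Or.inr ⟨?_, ?_⟩⟩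
          · rw [toS_card, Finset.card_insert_of_notMem (by simp),
              Nat.card_Ico]
            omega
          · intro z hz y' hy' hxy
            rw [mem_toS] at hz hy'
            have hmem : ∀ b : Fin (P+1 + 3*M),
                b.val ∈ insert 0 (Finset.Ico (P+1) (P+1+M)) →
                ¬ r none (some b) ∧ ¬ r (some b) none := by
              intro b hb
              simp only [Finset.mem_insert, Finset.mem_Ico] at hb
              exact ⟨hxa b (by omega), hble_none b⟩
            rcases hz with rfl | ⟨b, hb, rfl⟩
            · rcases hy' with rfl | ⟨c, hc, rfl⟩
              · exact absurd rfl hxy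
              · exact ⟨(hmem c hc).1, (hmem c hc).2⟩
            · rcases hy' with rfl | ⟨c, hc, rfl⟩
              · exact ⟨(hmem b hb).2, (hmem b hb).1⟩
              · have hne : b.val ≠ c.val := fun h => hxy (congrArg some (Fin.val_injective h))
                rw [hiff, hiff]
                simp only [Finset.mem_insert, Finset.mem_Ico] at hb hc
                simp only [leB]; omega
      · -- all Y-elements incomparable to v
        push_neg at hyb hya
        by_cases hcj : ∃ c : Fin (P+1 + 3*M),
            c.val < P+1 ∧ ¬ r (some c) none ∧ ¬ r none (some c)
        · -- antichain: {v} ∪ Y ∪ {c}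
          obtain ⟨c, hc1, hc2, hc3⟩ := hcj
          have hT : ∀ m ∈ insert c.val (Finset.Ico (P+1+M) (P+1+2*M)), m < P+1 + 3*M := by
            intro m hm
            simp only [Finset.mem_insert, Finset.mem_Ico] at hm
            have := c.isLt; omega
          refine ⟨toS _ hT, none_mem_toS _ _, Or.inr ⟨?_, ?_⟩⟩
          · rw [toS_card, Finset.card_insert_of_notMem (by simp [Finset.mem_Ico]; omega),
              Nat.card_Ico]
            omega
          · intro z hz y' hy' hxy
            rw [mem_toS] at hz hy'
            have hmem : ∀ b : Fin (P+1 + 3*M),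
                b.val ∈ insert c.val (Finset.Ico (P+1+M) (P+1+2*M)) →
                ¬ r none (some b) ∧ ¬ r (some b) none := by
              intro b hb
              simp only [Finset.mem_insert, Finset.mem_Ico] at hb
              rcases hb with hb | hb
              · have hbc : b = c := Fin.val_injective hb
                rw [hbc]; exact ⟨hc3, hc2⟩
              · exact ⟨hya b hb.1 hb.2, hyb b hb.1 hb.2⟩
            rcases hz with rfl | ⟨b, hb, rfl⟩
            · rcases hy' with rfl | ⟨c', hc', rfl⟩
              · exact absurd rfl hxy
              · exact ⟨(hmem c' hc').1, (hmem c' hc').2⟩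
            · rcases hy' with rfl | ⟨c', hc', rfl⟩
              · exact ⟨(hmem b hb).2, (hmem b hb).1⟩
              · have hne : b.val ≠ c'.val := fun h => hxy (congrArg some (Fin.val_injective h))
                rw [hiff, hiff]
                simp only [Finset.mem_insert, Finset.mem_Ico] at hb hc'
                simp only [leB]; omega
        · -- every chain element is comparable to v : chain = whole chain + v
          push_neg at hcj
          have hT : ∀ m ∈ Finset.range (P+1), m < P+1 + 3*M := by
            intro m hm; simp only [Finset.mem_range] at hm; omega
          refine ⟨toS _ hT, none_mem_toS _ _, Or.inl ⟨?_, ?_⟩⟩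
          · rw [toS_card, Finset.card_range]
          · have key : ∀ b : Fin (P+1 + 3*M), b.val ∈ Finset.range (P+1) →
                r (some b) none ∨ r none (some b) := by
              intro b hb
              simp only [Finset.mem_range] at hb
              by_cases hbb : r (some b) none
              · exact Or.inl hbb
              · exact Or.inr (hcj b hb hbb)
            intro z hz y' hy'
            rw [mem_toS] at hz hy'
            rcases hz with rfl | ⟨b, hb, rfl⟩
            · rcases hy' with rfl | ⟨c, hc, rfl⟩
              · exact Or.inl (hrefl none)
              · rcases key c hc with h | h
                · exact Or.inr h
                · exact Or.inl h
            · rcases hy' with rfl | ⟨c, hc, rfl⟩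
              · rcases key b hb with h | h
                · exact Or.inl h
                · exact Or.inr h
              · rw [hiff, hiff]
                simp only [Finset.mem_range] at hb hc
                simp only [leB]; omega

end SemisatAux

/-- For `k ≥ 2` and `l ≥ 3`, there is a finite poset with exactly
`min(2k + l - 5, k + 3l - 7)` elements that is `(k,l)`-semisaturated. -/
theorem poset_semisat_upper_bound (k l : ℕ) (hk : 2 ≤ k) (hl : 3 ≤ l) :
    ∃ le : Fin (min (2 * k + l - 5) (k + 3 * l - 7)) →
           Fin (min (2 * k + l - 5) (k + 3 * l - 7)) → Prop,
      (∀ x, le x x) ∧ (∀ x y, le x y → le y x → x = y) ∧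
      (∀ x y z, le x y → le y z → le x z) ∧
      PosetSemiSat le k l := by
  rcases le_total (2 * k + l - 5) (k + 3 * l - 7) with h | h
  · rw [min_eq_left h]
    have e : 2 * k + l - 5 = 2*(k-2) + (l-1) := by omega
    rw [e]
    obtain ⟨le, h1, h2, h3, h4⟩ := SemisatAux.semisatAaux (k-2) (l-1)
    refine ⟨le, h1, h2, h3, ?_⟩
    have ek : (k-2) + 2 = k := by omega
    have el : (l-1) + 1 = l := by omega
    rwa [ek, el] at h4
  · rw [min_eq_right h]
    have e : k + 3 * l - 7 = (k-2)+1 + 3*(l-2) := by omega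
    rw [e]
    obtain ⟨le, h1, h2, h3, h4⟩ := SemisatAux.semisatBaux (k-2) (l-2) (by omega)
    refine ⟨le, h1, h2, h3, ?_⟩
    have ek : (k-2) + 2 = k := by omega
    have el : (l-2) + 2 = l := by omega
    rwa [ek, el] at h4
end

section
/- Let k, l ≥ 2 be integers and let (P, ≤) be a finite poset with fewer than (k−1)(l−1) elements that contains no k-chain and no l-antichain. Then there exists a one-element extension of (P, ≤) that still contains no k-chain and no l-antichain. (Consequently, every (k,l)-saturated poset has exactly (k−1)(l−1) elements.) -/
open Finset
open scoped Classical

section Helpers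
variable {β : Type*} {r : β → β → Prop}

lemma monoChain_subset {S T : Finset β} (h : MonoChain r S) (hTS : T ⊆ S) : MonoChain r T :=
  fun x hx y hy => h x (hTS hx) y (hTS hy)

lemma monoAntichain_subset {S T : Finset β} (h : MonoAntichain r S) (hTS : T ⊆ S) :
    MonoAntichain r T :=
  fun x hx y hy hne => h x (hTS hx) y (hTS hy) hne

lemma card_le_of_no_size {m : ℕ} (hm : 1 ≤ m)
    (h : ¬ ∃ S : Finset β, S.card = m ∧ MonoChain r S) :
    ∀ S : Finset β, MonoChain r S → S.card ≤ m - 1 := by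
  intro S hS
  by_contra hc
  push_neg at hc
  have : m ≤ S.card := by omega
  obtain ⟨T, hTS, hT⟩ := Finset.exists_subset_card_eq this
  exact h ⟨T, hT, monoChain_subset hS hTS⟩

lemma anti_card_le_of_no_size {m : ℕ} (hm : 1 ≤ m)
    (h : ¬ ∃ S : Finset β, S.card = m ∧ MonoAntichain r S) :
    ∀ S : Finset β, MonoAntichain r S → S.card ≤ m - 1 := by
  intro S hS
  by_contra hc
  push_neg at hc
  have : m ≤ S.card := by omega
  obtain ⟨T, hTS, hT⟩ := Finset.exists_subset_card_eq this
  exact h ⟨T, hT, monoAntichain_subset hS hTS⟩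

lemma cons_prop {γ : Type} {m : ℕ} (p : γ → γ → Prop) (K : γ) (f' : Fin m → γ)
    (h1 : ∀ i, p K (f' i)) (h1' : ∀ i, p (f' i) K)
    (h2 : ∀ i j, i ≠ j → p (f' i) (f' j)) :
    ∀ i j : Fin (m + 1), i ≠ j →
      p ((Fin.cons K f' : Fin (m+1) → γ) i) ((Fin.cons K f' : Fin (m+1) → γ) j) := by
  intro i j hij
  induction i using Fin.cases with
  | zero =>
    induction j using Fin.cases with
    | zero => exact absurd rfl hij
    | succ j' => simpa using h1 j'
  | succ i' =>
    induction j using Fin.cases with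
    | zero => simpa using h1' i'
    | succ j' =>
      simp only [Fin.cons_succ]
      exact h2 i' j' (fun h => hij (by rw [h]))

end Helpers

section Poset
variable {α : Type} [PartialOrder α]

lemma chain_greatest {C : Finset α} (hC : MonoChain (fun x y : α => x ≤ y) C)
    (hne : C.Nonempty) : ∃ m ∈ C, ∀ x ∈ C, x ≤ m := by
  obtain ⟨m, hm, hmax⟩ := C.exists_maximal hne
  refine ⟨m, hm, fun x hx => ?_⟩
  rcases hC x hx m hm with h | h
  · exact h
  · rcases eq_or_ne x m with rfl | hne'
    · exact le_refl _
    · exact absurd (lt_of_le_of_ne h (fun e => hne' e.symm)) (fun hlt => lt_irrefl _ (hlt.trans_le (hmax hx hlt.le)))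

lemma chain_least {C : Finset α} (hC : MonoChain (fun x y : α => x ≤ y) C)
    (hne : C.Nonempty) : ∃ m ∈ C, ∀ x ∈ C, m ≤ x := by
  obtain ⟨m, hm, hmin⟩ := C.exists_minimal hne
  refine ⟨m, hm, fun x hx => ?_⟩
  rcases hC x hx m hm with h | h
  · rcases eq_or_ne x m with rfl | hne'
    · exact le_refl _
    · exact absurd (lt_of_le_of_ne h hne') (fun hlt => lt_irrefl _ (hlt.trans_le (hmin hx hlt.le)))
  · exact h

/-- A chain below `x` and a chain above `x` together have at most `k` elements. -/
lemma chain_split_bound {k : ℕ}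
    (hle : ∀ S : Finset α, MonoChain (fun x y : α => x ≤ y) S → S.card ≤ k - 1)
    (hk : 2 ≤ k) (x : α) {A B : Finset α}
    (hA : MonoChain (fun x y : α => x ≤ y) A) (hB : MonoChain (fun x y : α => x ≤ y) B)
    (hAx : ∀ a ∈ A, a ≤ x) (hBx : ∀ b ∈ B, x ≤ b) :
    A.card + B.card ≤ k := by
  have hchain : MonoChain (fun x y : α => x ≤ y) (A ∪ B) := by
    intro u hu v hv
    rcases Finset.mem_union.1 hu with hu | hu <;> rcases Finset.mem_union.1 hv with hv | hv
    · exact hA u hu v hv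
    · exact Or.inl ((hAx u hu).trans (hBx v hv))
    · exact Or.inr ((hAx v hv).trans (hBx u hu))
    · exact hB u hu v hv
  have h1 : (A ∪ B).card ≤ k - 1 := hle _ hchain
  have h2 : (A ∩ B).card ≤ 1 := by
    rw [Finset.card_le_one]
    intro a ha b hb
    have ha' := Finset.mem_inter.1 ha
    have hb' := Finset.mem_inter.1 hb
    have hax : a = x := le_antisymm (hAx a ha'.1) (hBx a ha'.2)
    have hbx : b = x := le_antisymm (hAx b hb'.1) (hBx b hb'.2)
    rw [hax, hbx]
  have := Finset.card_union_add_card_inter A B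
  omega

end Poset

section Cover
variable {α : Type} [PartialOrder α]

lemma anti_inter_card_le_one {A C : Finset α}
    (hA : MonoAntichain (fun x y : α => x ≤ y) A)
    (hC : MonoChain (fun x y : α => x ≤ y) C) : (A ∩ C).card ≤ 1 := by
  rw [Finset.card_le_one]
  intro a ha b hb
  by_contra hne
  have ha' := Finset.mem_inter.1 ha
  have hb' := Finset.mem_inter.1 hb
  have h1 := hA a ha'.1 b hb'.1 hne
  have h2 := hC a ha'.2 b hb'.2
  tauto

lemma anti_card_le_sum_inter {m : ℕ} {f : Fin m → Finset α} {A : Finset α}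
    (hcov : ∀ x ∈ A, ∃ i, x ∈ f i) :
    A.card ≤ ∑ i : Fin m, (A ∩ f i).card := by
  have hsub : A ⊆ Finset.univ.biUnion (fun i => A ∩ f i) := by
    intro x hx
    obtain ⟨i, hi⟩ := hcov x hx
    exact Finset.mem_biUnion.2 ⟨i, Finset.mem_univ _, Finset.mem_inter.2 ⟨hx, hi⟩⟩
  calc A.card ≤ (Finset.univ.biUnion (fun i => A ∩ f i)).card := Finset.card_le_card hsub
    _ ≤ ∑ i : Fin m, (A ∩ f i).card := Finset.card_biUnion_le

/-- An antichain covered by `m` chains but avoiding one of them has at most `m - 1` elements. -/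
lemma anti_card_le_of_avoid {m : ℕ} {f : Fin m → Finset α} {A : Finset α}
    (hch : ∀ i, MonoChain (fun x y : α => x ≤ y) (f i))
    (hA : MonoAntichain (fun x y : α => x ≤ y) A)
    (hcov : ∀ x ∈ A, ∃ i, x ∈ f i) (j : Fin m) (hj : A ∩ f j = ∅) :
    A.card ≤ m - 1 := by
  have h1 := anti_card_le_sum_inter (f := f) hcov
  have h2 : ∑ i : Fin m, (A ∩ f i).card
      = (A ∩ f j).card + ∑ i ∈ Finset.univ.erase j, (A ∩ f i).card :=
    (Finset.add_sum_erase _ _ (Finset.mem_univ j)).symm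
  have h3 : ∑ i ∈ Finset.univ.erase j, (A ∩ f i).card ≤ (Finset.univ.erase j).card * 1 := by
    apply Finset.sum_le_card_nsmul
    intro i _
    exact anti_inter_card_le_one hA (hch i)
  have h4 : (Finset.univ.erase j).card = m - 1 := by
    rw [Finset.card_erase_of_mem (Finset.mem_univ j), Finset.card_univ, Fintype.card_fin]
  rw [hj] at h2
  simp only [Finset.card_empty] at h2
  omega

lemma anti_inter_nonempty {m : ℕ} {f : Fin m → Finset α} {A : Finset α}
    (hch : ∀ i, MonoChain (fun x y : α => x ≤ y) (f i))
    (hA : MonoAntichain (fun x y : α => x ≤ y) A)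
    (hcov : ∀ x ∈ A, ∃ i, x ∈ f i) (hcard : A.card = m) (i : Fin m) :
    (A ∩ f i).Nonempty := by
  rw [Finset.nonempty_iff_ne_empty]
  intro h
  have := anti_card_le_of_avoid hch hA hcov i h
  have hm : 1 ≤ m := by
    rcases Nat.eq_zero_or_pos m with rfl | h'
    · exact absurd i.2 (by omega)
    · exact h'
  omega

end Cover

section Dilworth
variable {α : Type} [PartialOrder α]

/-- Dilworth's theorem (cover form): a finite set with no antichain of more than `w` elements
can be covered by `w` pairwise disjoint chains. -/
lemma dilworth : ∀ (n w : ℕ) (P : Finset α), P.card ≤ n →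
    (∀ A : Finset α, A ⊆ P → MonoAntichain (fun x y : α => x ≤ y) A → A.card ≤ w) →
    ∃ f : Fin w → Finset α,
      (∀ i, MonoChain (fun x y : α => x ≤ y) (f i)) ∧ (∀ i, f i ⊆ P) ∧
      (∀ i j, i ≠ j → Disjoint (f i) (f j)) ∧ (∀ x ∈ P, ∃ i, x ∈ f i) := by
  intro n
  induction n with
  | zero =>
    intro w P hP _
    have : P = ∅ := Finset.card_eq_zero.1 (Nat.le_zero.1 hP)
    subst this
    exact ⟨fun _ => ∅, fun i => by intro x hx; simp at hx, fun i => Finset.empty_subset _,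
      fun i j _ => Finset.disjoint_empty_left _, fun x hx => by simp at hx⟩
  | succ n IH =>
    intro w P hP hwidth
    rcases Finset.eq_empty_or_nonempty P with rfl | hne
    · exact ⟨fun _ => ∅, fun i => by intro x hx; simp at hx, fun i => Finset.empty_subset _,
        fun i j _ => Finset.disjoint_empty_left _, fun x hx => by simp at hx⟩
    obtain ⟨a, haP, hamax⟩ := P.exists_maximal hne
    -- w ≥ 1
    have hw1 : 1 ≤ w := by
      have : ({a} : Finset α).card ≤ w := by
        apply hwidth _ (by simpa using haP)
        intro x hx y hy hne'
        simp only [Finset.mem_singleton] at hx hy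
        exact absurd (hx.trans hy.symm) hne'
      simpa using this
    obtain ⟨w', rfl⟩ : ∃ w', w = w' + 1 := ⟨w - 1, by omega⟩
    set P' := P.erase a with hP'def
    have hP'card : P'.card ≤ n := by
      have := Finset.card_erase_of_mem haP
      have : P'.card = P.card - 1 := this
      have hpos : 1 ≤ P.card := Finset.card_pos.2 hne
      omega
    have hP'sub : P' ⊆ P := Finset.erase_subset _ _
    by_cases hA : ∃ A : Finset α, A ⊆ P' ∧
        MonoAntichain (fun x y : α => x ≤ y) A ∧ A.card = w' + 1
    · -- hard case
      obtain ⟨C, hCchain, hCsub, hCdisj, hCcov⟩ := IH (w' + 1) P' hP'card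
        (fun A hAs hAa => hwidth A (hAs.trans hP'sub) hAa)
      -- for each chain, the greatest element lying in some maximum antichain of P'
      have hSi : ∀ i : Fin (w' + 1), ∃ t, t ∈ C i ∧
          (∃ A : Finset α, A ⊆ P' ∧ MonoAntichain (fun x y : α => x ≤ y) A ∧
            A.card = w' + 1 ∧ t ∈ A) ∧
          (∀ x ∈ C i, (∃ A : Finset α, A ⊆ P' ∧ MonoAntichain (fun x y : α => x ≤ y) A ∧
            A.card = w' + 1 ∧ x ∈ A) → x ≤ t) := by
        intro i
        obtain ⟨A, hAsub, hAanti, hAcard⟩ := hA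
        have hcovA : ∀ x ∈ A, ∃ j, x ∈ C j := fun x hx => hCcov x (hAsub hx)
        obtain ⟨s, hs⟩ := anti_inter_nonempty hCchain hAanti hcovA hAcard i
        have hs' := Finset.mem_inter.1 hs
        set S := (C i).filter (fun x => ∃ A : Finset α, A ⊆ P' ∧
          MonoAntichain (fun x y : α => x ≤ y) A ∧ A.card = w' + 1 ∧ x ∈ A) with hSdef
        have hSne : S.Nonempty := ⟨s, Finset.mem_filter.2 ⟨hs'.2, A, hAsub, hAanti, hAcard, hs'.1⟩⟩
        have hSchain : MonoChain (fun x y : α => x ≤ y) S :=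
          monoChain_subset (hCchain i) (Finset.filter_subset _ _)
        obtain ⟨t, htS, htmax⟩ := chain_greatest hSchain hSne
        have htS' := Finset.mem_filter.1 htS
        exact ⟨t, htS'.1, htS'.2, fun x hx hxA => htmax x (Finset.mem_filter.2 ⟨hx, hxA⟩)⟩
      choose t htC htA htmax using hSi
      -- key: for i ≠ j, ¬ t i ≤ t j
      have hkey : ∀ i j : Fin (w' + 1), i ≠ j → ¬ t i ≤ t j := by
        intro i j hij hle
        obtain ⟨A, hAsub, hAanti, hAcard, htjA⟩ := htA j
        have hcovA : ∀ x ∈ A, ∃ j', x ∈ C j' := fun x hx => hCcov x (hAsub hx)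
        obtain ⟨s, hs⟩ := anti_inter_nonempty hCchain hAanti hcovA hAcard i
        have hs' := Finset.mem_inter.1 hs
        have hsti : s ≤ t i := htmax i s hs'.2 ⟨A, hAsub, hAanti, hAcard, hs'.1⟩
        have hsne : s ≠ t j := by
          intro h
          subst h
          exact (Finset.disjoint_left.1 (hCdisj i j hij)) hs'.2 (htC j)
        exact (hAanti s hs'.1 (t j) htjA hsne).1 (hsti.trans hle)
      have htne : ∀ i j : Fin (w' + 1), i ≠ j → t i ≠ t j := by
        intro i j hij h
        exact hkey i j hij (le_of_eq h)
      have htP' : ∀ i, t i ∈ P' := fun i => hCsub i (htC i)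
      -- find i0 with t i0 ≤ a
      have hi0 : ∃ i0, t i0 ≤ a := by
        by_contra hno
        push_neg at hno
        set T := insert a (Finset.univ.image t) with hTdef
        have haT : a ∉ Finset.univ.image t := by
          intro h
          obtain ⟨i, _, hi⟩ := Finset.mem_image.1 h
          exact (Finset.mem_erase.1 (htP' i)).1 (hi.symm ▸ rfl)
        have hTcard : T.card = w' + 2 := by
          rw [hTdef, Finset.card_insert_of_notMem haT, Finset.card_image_of_injective]
          · simp
          · intro i j h
            by_contra hij
            exact htne i j hij h
        have hTsub : T ⊆ P := by
          intro x hx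
          rcases Finset.mem_insert.1 hx with rfl | hx
          · exact haP
          · obtain ⟨i, _, rfl⟩ := Finset.mem_image.1 hx
            exact hP'sub (htP' i)
        have hTanti : MonoAntichain (fun x y : α => x ≤ y) T := by
          intro x hx y hy hxy
          rcases Finset.mem_insert.1 hx with rfl | hx' <;>
            rcases Finset.mem_insert.1 hy with rfl | hy'
          · exact absurd rfl hxy
          · obtain ⟨i, _, rfl⟩ := Finset.mem_image.1 hy'
            constructor
            · intro h
              exact (fun hlt => lt_irrefl _ (hlt.trans_le (hamax (hP'sub (htP' i)) hlt.le))) (lt_of_le_of_ne h hxy)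
            · exact hno i
          · obtain ⟨i, _, rfl⟩ := Finset.mem_image.1 hx'
            constructor
            · exact hno i
            · intro h
              exact (fun hlt => lt_irrefl _ (hlt.trans_le (hamax (hP'sub (htP' i)) hlt.le))) (lt_of_le_of_ne h (Ne.symm hxy))
          · obtain ⟨i, _, rfl⟩ := Finset.mem_image.1 hx'
            obtain ⟨j, _, rfl⟩ := Finset.mem_image.1 hy'
            have hij : i ≠ j := by
              intro h
              exact hxy (by rw [h])
            exact ⟨hkey i j hij, hkey j i (Ne.symm hij)⟩
        have := hwidth T hTsub hTanti
        omega
      obtain ⟨i0, hi0⟩ := hi0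
      -- K : the chain {a} ∪ {c ∈ C i0 | c ≤ t i0}
      set K := insert a ((C i0).filter (fun c => c ≤ t i0)) with hKdef
      have hKchain : MonoChain (fun x y : α => x ≤ y) K := by
        intro x hx y hy
        rcases Finset.mem_insert.1 hx with rfl | hx' <;>
          rcases Finset.mem_insert.1 hy with rfl | hy'
        · exact Or.inl le_rfl
        · exact Or.inr ((Finset.mem_filter.1 hy').2.trans hi0)
        · exact Or.inl ((Finset.mem_filter.1 hx').2.trans hi0)
        · exact hCchain i0 x (Finset.mem_filter.1 hx').1 y (Finset.mem_filter.1 hy').1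
      have hKsub : K ⊆ P := by
        intro x hx
        rcases Finset.mem_insert.1 hx with rfl | hx'
        · exact haP
        · exact hP'sub (hCsub i0 (Finset.mem_filter.1 hx').1)
      have haK : a ∈ K := Finset.mem_insert_self _ _
      -- P \ K has no (w'+1)-antichain
      have hPK : ∀ A : Finset α, A ⊆ P \ K → MonoAntichain (fun x y : α => x ≤ y) A →
          A.card ≤ w' := by
        intro A hAsub hAanti
        by_contra hc
        push_neg at hc
        obtain ⟨A', hA'sub, hA'card⟩ := Finset.exists_subset_card_eq (show w' + 1 ≤ A.card by omega)
        have hA'anti := monoAntichain_subset hAanti hA'sub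
        have hA'PK : A' ⊆ P \ K := hA'sub.trans hAsub
        have hA'P' : A' ⊆ P' := by
          intro x hx
          have hx' := Finset.mem_sdiff.1 (hA'PK hx)
          refine Finset.mem_erase.2 ⟨?_, hx'.1⟩
          intro h
          exact hx'.2 (h ▸ haK)
        have hcovA : ∀ x ∈ A', ∃ j, x ∈ C j := fun x hx => hCcov x (hA'P' hx)
        obtain ⟨s, hs⟩ := anti_inter_nonempty hCchain hA'anti hcovA hA'card i0
        have hs' := Finset.mem_inter.1 hs
        have hsti : s ≤ t i0 := htmax i0 s hs'.2 ⟨A', hA'P', hA'anti, hA'card, hs'.1⟩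
        have hsK : s ∈ K := Finset.mem_insert.2 (Or.inr (Finset.mem_filter.2 ⟨hs'.2, hsti⟩))
        exact (Finset.mem_sdiff.1 (hA'PK hs'.1)).2 hsK
      have hPKcard : (P \ K).card ≤ n := by
        have hss : P \ K ⊂ P := by
          refine Finset.ssubset_iff_of_subset (Finset.sdiff_subset) |>.2 ?_
          exact ⟨a, haP, fun h => (Finset.mem_sdiff.1 h).2 haK⟩
        have := Finset.card_lt_card hss
        omega
      obtain ⟨f', hf'chain, hf'sub, hf'disj, hf'cov⟩ := IH w' (P \ K) hPKcard hPK
      refine ⟨Fin.cons K f', ?_, ?_, ?_, ?_⟩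
      · intro i
        refine Fin.cases ?_ ?_ i
        · exact hKchain
        · intro j; exact hf'chain j
      · intro i
        refine Fin.cases ?_ ?_ i
        · exact hKsub
        · intro j; exact (hf'sub j).trans (Finset.sdiff_subset)
      · exact cons_prop (fun S T => Disjoint S T) K f'
          (fun i => Finset.disjoint_left.2 (fun x hx hx' =>
            (Finset.mem_sdiff.1 (hf'sub i hx')).2 hx))
          (fun i => Finset.disjoint_right.2 (fun x hx hx' =>
            (Finset.mem_sdiff.1 (hf'sub i hx')).2 hx))
          hf'disj
      · intro x hxP
        by_cases hxK : x ∈ K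
        · exact ⟨0, by simpa using hxK⟩
        · obtain ⟨i, hi⟩ := hf'cov x (Finset.mem_sdiff.2 ⟨hxP, hxK⟩)
          exact ⟨Fin.succ i, by simpa using hi⟩
    · -- easy case: every antichain in P' has at most w' elements
      have hwidth' : ∀ A : Finset α, A ⊆ P' → MonoAntichain (fun x y : α => x ≤ y) A →
          A.card ≤ w' := by
        intro A hAsub hAanti
        have h1 := hwidth A (hAsub.trans hP'sub) hAanti
        rcases Nat.lt_or_ge A.card (w' + 1) with h | h
        · omega
        · obtain ⟨A', hA'sub, hA'card⟩ := Finset.exists_subset_card_eq h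
          exact absurd ⟨A', hA'sub.trans hAsub, monoAntichain_subset hAanti hA'sub, hA'card⟩ hA
      obtain ⟨f', hf'chain, hf'sub, hf'disj, hf'cov⟩ := IH w' P' hP'card hwidth'
      refine ⟨Fin.cons {a} f', ?_, ?_, ?_, ?_⟩
      · intro i
        refine Fin.cases ?_ ?_ i
        · intro x hx y hy
          simp only [Fin.cons_zero, Finset.mem_singleton] at hx hy
          subst hx; subst hy; exact Or.inl le_rfl
        · intro j; exact hf'chain j
      · intro i
        refine Fin.cases ?_ ?_ i
        · simpa using haP
        · intro j; exact (hf'sub j).trans hP'sub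
      · refine cons_prop (fun S T => Disjoint S T) {a} f' ?_ ?_ hf'disj
        · intro i
          refine Finset.disjoint_left.2 (fun x hx hx' => ?_)
          simp only [Finset.mem_singleton] at hx
          subst hx
          exact (Finset.mem_erase.1 (hf'sub i hx')).1 rfl
        · intro i
          refine Finset.disjoint_right.2 (fun x hx hx' => ?_)
          simp only [Finset.mem_singleton] at hx
          subst hx
          exact (Finset.mem_erase.1 (hf'sub i hx')).1 rfl
      · intro x hxP
        by_cases hxa : x = a
        · exact ⟨0, by simp [hxa]⟩
        · obtain ⟨i, hi⟩ := hf'cov x (Finset.mem_erase.2 ⟨hxa, hxP⟩)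
          exact ⟨Fin.succ i, by simpa using hi⟩

end Dilworth

section Search
variable {α : Type} [Fintype α] [PartialOrder α]

/-- Given a chain `C` with at most `k-2` elements, find a lower set `D` and an upper set `U`
with `D < U` pointwise, covering `C`, such that any chain in `D` plus any chain in `U` has
at most `k-2` elements. -/
lemma search (k : ℕ) (hk : 2 ≤ k)
    (hle : ∀ S : Finset α, MonoChain (fun x y : α => x ≤ y) S → S.card ≤ k - 1) :
    ∀ (n : ℕ) (C : Finset α), C.card ≤ n → MonoChain (fun x y : α => x ≤ y) C →
    ∀ (Dp : Finset α) (p : ℕ),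
      (∀ z w : α, w ≤ z → z ∈ Dp → w ∈ Dp) →
      (∀ z ∈ Dp, ∀ x ∈ C, z < x) →
      (∀ A : Finset α, MonoChain (fun x y : α => x ≤ y) A → A ⊆ Dp → A.card ≤ p) →
      C.card + p ≤ k - 2 →
    ∃ D U : Finset α,
      (∀ z w : α, w ≤ z → z ∈ D → w ∈ D) ∧
      (∀ z w : α, z ≤ w → z ∈ U → w ∈ U) ∧
      (∀ x ∈ D, ∀ y ∈ U, x < y) ∧
      Dp ⊆ D ∧ (∀ x ∈ C, x ∈ D ∨ x ∈ U) ∧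
      (∀ A B : Finset α, MonoChain (fun x y : α => x ≤ y) A →
        MonoChain (fun x y : α => x ≤ y) B → A ⊆ D → B ⊆ U →
        A.card + B.card ≤ k - 2) := by
  intro n
  induction n with
  | zero =>
    intro C hCn _ Dp p hDdown _ hDbound hbudget
    have hC : C = ∅ := Finset.card_eq_zero.1 (Nat.le_zero.1 hCn)
    subst hC
    refine ⟨Dp, ∅, hDdown, by simp, by simp, Finset.Subset.refl _, by simp, ?_⟩
    intro A B hA _ hAD hB0
    have hB : B = ∅ := Finset.subset_empty.1 hB0
    have := hDbound A hA hAD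
    simp only [hB, Finset.card_empty]
    omega
  | succ n IH =>
    intro C hCn hCchain Dp p hDdown hDlt hDbound hbudget
    rcases Finset.eq_empty_or_nonempty C with rfl | hCne
    · refine ⟨Dp, ∅, hDdown, by simp, by simp, Finset.Subset.refl _, by simp, ?_⟩
      intro A B hA _ hAD hB0
      have hB : B = ∅ := Finset.subset_empty.1 hB0
      have := hDbound A hA hAD
      simp only [hB, Finset.card_empty]
      omega
    obtain ⟨x, hxC, hxleast⟩ := chain_least hCchain hCne
    have hp : p ≤ k - 2 := by
      have : 1 ≤ C.card := Finset.card_pos.2 hCne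
      omega
    by_cases hcase : ∀ B : Finset α, MonoChain (fun x y : α => x ≤ y) B →
        (∀ b ∈ B, x ≤ b) → B.card ≤ k - 2 - p
    · -- place the new element just below x
      refine ⟨Dp, Finset.univ.filter (fun y => x ≤ y), hDdown, ?_, ?_, Finset.Subset.refl _,
        ?_, ?_⟩
      · intro z w hzw hz
        simp only [Finset.mem_filter, Finset.mem_univ, true_and] at hz ⊢
        exact hz.trans hzw
      · intro a ha y hy
        simp only [Finset.mem_filter, Finset.mem_univ, true_and] at hy
        exact lt_of_lt_of_le (hDlt a ha x hxC) hy
      · intro c hc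
        refine Or.inr ?_
        simp only [Finset.mem_filter, Finset.mem_univ, true_and]
        exact hxleast c hc
      · intro A B hA hB hAD hBU
        have h1 := hDbound A hA hAD
        have h2 : B.card ≤ k - 2 - p := by
          apply hcase B hB
          intro b hb
          have := hBU hb
          simpa using this
        omega
    · -- there is a long chain above x; place recursively inside C.erase x
      push_neg at hcase
      obtain ⟨B0, hB0chain, hB0ge, hB0card⟩ := hcase
      set Dp' := Finset.univ.filter (fun z => z ≤ x) with hDp'def
      have hsub : Dp ⊆ Dp' := by
        intro z hz
        simp only [hDp'def, Finset.mem_filter, Finset.mem_univ, true_and]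
        exact le_of_lt (hDlt z hz x hxC)
      have hDp'down : ∀ z w : α, w ≤ z → z ∈ Dp' → w ∈ Dp' := by
        intro z w hwz hz
        simp only [hDp'def, Finset.mem_filter, Finset.mem_univ, true_and] at hz ⊢
        exact hwz.trans hz
      have hCerase : (C.erase x).card ≤ n := by
        have := Finset.card_erase_of_mem hxC
        have hpos : 1 ≤ C.card := Finset.card_pos.2 hCne
        omega
      have hDp'lt : ∀ z ∈ Dp', ∀ c ∈ C.erase x, z < c := by
        intro z hz c hc
        simp only [hDp'def, Finset.mem_filter, Finset.mem_univ, true_and] at hz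
        have hc' := Finset.mem_erase.1 hc
        exact lt_of_le_of_lt hz (lt_of_le_of_ne (hxleast c hc'.2) (Ne.symm hc'.1))
      have hDp'bound : ∀ A : Finset α, MonoChain (fun x y : α => x ≤ y) A → A ⊆ Dp' →
          A.card ≤ p + 1 := by
        intro A hA hAD
        have hsplit := chain_split_bound hle hk x hA hB0chain
          (fun a ha => by
            have := hAD ha
            simpa [hDp'def] using this) hB0ge
        omega
      have hbudget' : (C.erase x).card + (p + 1) ≤ k - 2 := by
        have := Finset.card_erase_of_mem hxC
        have hpos : 1 ≤ C.card := Finset.card_pos.2 hCne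
        omega
      obtain ⟨D, U, hD1, hU1, hDU, hDp'D, hcov, hbound⟩ :=
        IH (C.erase x) hCerase (monoChain_subset hCchain (Finset.erase_subset _ _))
          Dp' (p + 1) hDp'down hDp'lt hDp'bound hbudget'
      refine ⟨D, U, hD1, hU1, hDU, hsub.trans hDp'D, ?_, hbound⟩
      intro c hc
      rcases eq_or_ne c x with rfl | hne
      · exact Or.inl (hDp'D (by simp [hDp'def]))
      · exact hcov c (Finset.mem_erase.2 ⟨hne, hc⟩)

end Search

/-- If a finite poset with fewer than `(k-1)(l-1)` elements contains no `k`-chain and no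
`l`-antichain, then it has a one-element extension that still contains no `k`-chain and no
`l`-antichain. -/
theorem poset_saturation {α : Type} [Fintype α] [PartialOrder α]
    (k l : ℕ) (hk : 2 ≤ k) (hl : 2 ≤ l)
    (hcard : Fintype.card α < (k - 1) * (l - 1))
    (hchain : ¬ ∃ S : Finset α, S.card = k ∧ MonoChain (fun x y : α => x ≤ y) S)
    (hanti : ¬ ∃ S : Finset α, S.card = l ∧ MonoAntichain (fun x y : α => x ≤ y) S) :
    ∃ r : Option α → Option α → Prop,
      (∀ x, r x x) ∧ (∀ x y, r x y → r y x → x = y) ∧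
      (∀ x y z, r x y → r y z → r x z) ∧
      (∀ x y : α, r (some x) (some y) ↔ x ≤ y) ∧
      (¬ ∃ S : Finset (Option α), S.card = k ∧ MonoChain r S) ∧
      (¬ ∃ S : Finset (Option α), S.card = l ∧ MonoAntichain r S) := by
  have hchainle : ∀ S : Finset α, MonoChain (fun x y : α => x ≤ y) S → S.card ≤ k - 1 :=
    card_le_of_no_size (by omega) hchain
  have hantile : ∀ S : Finset α, MonoAntichain (fun x y : α => x ≤ y) S → S.card ≤ l - 1 :=
    anti_card_le_of_no_size (by omega) hanti
  -- Dilworth decomposition into l-1 chains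
  obtain ⟨f, hfchain, hfsub, hfdisj, hfcov⟩ := dilworth (Fintype.card α) (l - 1)
    (Finset.univ : Finset α) (by rw [Finset.card_univ]) (fun A _ hA => hantile A hA)
  have hcov' : ∀ x : α, ∃ i, x ∈ f i := fun x => hfcov x (Finset.mem_univ x)
  -- some chain has at most k-2 elements
  have hsmall : ∃ j, (f j).card ≤ k - 2 := by
    by_contra hno
    push_neg at hno
    have hsum : ∑ i : Fin (l - 1), (f i).card =
        (Finset.univ.biUnion f).card := by
      rw [Finset.card_biUnion (fun i _ j _ hij => hfdisj i j hij)]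
    have h1 : (Finset.univ.biUnion f).card ≤ Fintype.card α := by
      rw [← Finset.card_univ]
      exact Finset.card_le_card (Finset.subset_univ _)
    have h2 : (l - 1) * (k - 1) ≤ ∑ i : Fin (l - 1), (f i).card := by
      calc (l - 1) * (k - 1) = (Finset.univ : Finset (Fin (l - 1))).card * (k - 1) := by
            rw [Finset.card_univ, Fintype.card_fin]
        _ ≤ ∑ i : Fin (l - 1), (f i).card := by
            rw [← smul_eq_mul]
            exact Finset.card_nsmul_le_sum _ _ _ (fun i _ => by have := hno i; omega)
    have hcomm : (k - 1) * (l - 1) = (l - 1) * (k - 1) := Nat.mul_comm _ _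
    omega
  obtain ⟨j, hj⟩ := hsmall
  -- find the lower/upper sets for the new element
  obtain ⟨D, U, hD1, hU1, hDU, _, hcovC, hbound⟩ := search k hk hchainle (f j).card (f j)
    le_rfl (hfchain j) ∅ 0 (fun z w _ hz => by simp at hz) (fun z hz => by simp at hz)
    (fun A _ hA => by simp [Finset.subset_empty.1 hA]) (by omega)
  refine ⟨fun o₁ o₂ => match o₁, o₂ with
    | some x, some y => x ≤ y
    | some x, none => x ∈ D
    | none, some y => y ∈ U
    | none, none => True, ?_, ?_, ?_, ?_, ?_, ?_⟩
  · intro o; cases o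
    · exact trivial
    · exact le_refl _
  · intro o₁ o₂ h12 h21
    cases o₁ <;> cases o₂
    · rfl
    · exact absurd (hDU _ h21 _ h12) (lt_irrefl _)
    · exact absurd (hDU _ h12 _ h21) (lt_irrefl _)
    · exact congrArg some (le_antisymm h12 h21)
  · intro o₁ o₂ o₃ h12 h23
    cases o₁ <;> cases o₂ <;> cases o₃
    · exact trivial
    · exact h23
    · exact trivial
    · exact hU1 _ _ h23 h12
    · exact h12
    · exact le_of_lt (hDU _ h12 _ h23)
    · exact hD1 _ _ h12 h23
    · exact h12.trans h23
  · intro x y; exact Iff.rfl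
  · rintro ⟨S, hScard, hSchain⟩
    set T := Finset.univ.filter (fun a : α => some a ∈ S) with hTdef
    have hTmem : ∀ a : α, a ∈ T ↔ some a ∈ S := by
      intro a; simp [hTdef]
    have hTchain : MonoChain (fun x y : α => x ≤ y) T := by
      intro a ha b hb
      exact hSchain (some a) ((hTmem a).1 ha) (some b) ((hTmem b).1 hb)
    by_cases hnone : none ∈ S
    · have hSeq : S = insert none (T.image some) := by
        ext o
        cases o with
        | none => simp [hnone]
        | some a =>
          simp only [Finset.mem_insert, Finset.mem_image, reduceCtorEq, false_or]
          constructor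
          · intro h; exact ⟨a, (hTmem a).2 h, rfl⟩
          · rintro ⟨b, hb, hba⟩
            have : b = a := Option.some_injective α hba
            subst this
            exact (hTmem b).1 hb
      have hTcard : T.card = k - 1 := by
        have h1 : S.card = (T.image some).card + 1 := by
          rw [hSeq, Finset.card_insert_of_notMem (by simp)]
        have h2 : (T.image some).card = T.card :=
          Finset.card_image_of_injective _ (Option.some_injective α)
        omega
      set A := T.filter (fun a => a ∈ D) with hAdef
      set B := T.filter (fun a => a ∈ U) with hBdef
      have hTsub : T ⊆ A ∪ B := by
        intro a ha
        rcases hSchain (some a) ((hTmem a).1 ha) none hnone with h | h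
        · exact Finset.mem_union_left _ (Finset.mem_filter.2 ⟨ha, h⟩)
        · exact Finset.mem_union_right _ (Finset.mem_filter.2 ⟨ha, h⟩)
      have hABbound := hbound A B (monoChain_subset hTchain (Finset.filter_subset _ _))
        (monoChain_subset hTchain (Finset.filter_subset _ _))
        (fun a ha => (Finset.mem_filter.1 ha).2) (fun a ha => (Finset.mem_filter.1 ha).2)
      have : T.card ≤ A.card + B.card :=
        le_trans (Finset.card_le_card hTsub) (Finset.card_union_le _ _)
      omega
    · have hSeq : S = T.image some := by
        ext o
        cases o with
        | none => simp [hnone]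
        | some a =>
          simp only [Finset.mem_image, reduceCtorEq]
          constructor
          · intro h; exact ⟨a, (hTmem a).2 h, rfl⟩
          · rintro ⟨b, hb, hba⟩
            have : b = a := Option.some_injective α hba
            subst this
            exact (hTmem b).1 hb
      have hTcard : T.card = k := by
        have h2 : (T.image some).card = T.card :=
          Finset.card_image_of_injective _ (Option.some_injective α)
        rw [hSeq] at hScard
        omega
      have := hchainle T hTchain
      omega
  · rintro ⟨S, hScard, hSanti⟩
    set T := Finset.univ.filter (fun a : α => some a ∈ S) with hTdef
    have hTmem : ∀ a : α, a ∈ T ↔ some a ∈ S := by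
      intro a; simp [hTdef]
    have hTanti : MonoAntichain (fun x y : α => x ≤ y) T := by
      intro a ha b hb hab
      exact hSanti (some a) ((hTmem a).1 ha) (some b) ((hTmem b).1 hb)
        (fun h => hab (Option.some_injective α h))
    by_cases hnone : none ∈ S
    · have hSeq : S = insert none (T.image some) := by
        ext o
        cases o with
        | none => simp [hnone]
        | some a =>
          simp only [Finset.mem_insert, Finset.mem_image, reduceCtorEq, false_or]
          constructor
          · intro h; exact ⟨a, (hTmem a).2 h, rfl⟩
          · rintro ⟨b, hb, hba⟩
            have : b = a := Option.some_injective α hba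
            subst this
            exact (hTmem b).1 hb
      have hTcard : T.card = l - 1 := by
        have h1 : S.card = (T.image some).card + 1 := by
          rw [hSeq, Finset.card_insert_of_notMem (by simp)]
        have h2 : (T.image some).card = T.card :=
          Finset.card_image_of_injective _ (Option.some_injective α)
        omega
      have hTfj : T ∩ f j = ∅ := by
        rw [Finset.eq_empty_iff_forall_notMem]
        intro a ha
        have ha' := Finset.mem_inter.1 ha
        have hinc := hSanti (some a) ((hTmem a).1 ha'.1) none hnone (by simp)
        rcases hcovC a ha'.2 with h | h
        · exact hinc.1 h
        · exact hinc.2 h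
      have := anti_card_le_of_avoid hfchain hTanti (fun x _ => hcov' x) j hTfj
      omega
    · have hSeq : S = T.image some := by
        ext o
        cases o with
        | none => simp [hnone]
        | some a =>
          simp only [Finset.mem_image, reduceCtorEq]
          constructor
          · intro h; exact ⟨a, (hTmem a).2 h, rfl⟩
          · rintro ⟨b, hb, hba⟩
            have : b = a := Option.some_injective α hba
            subst this
            exact (hTmem b).1 hb
      have hTcard : T.card = l := by
        have h2 : (T.image some).card = T.card :=
          Finset.card_image_of_injective _ (Option.some_injective α)
        rw [hSeq] at hScard
        omega
      exact hanti ⟨T, hTcard, hTanti⟩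
end

section
/- Let k, l ≥ 2 be integers and let a : Fin m → ℝ be a sequence of length m < (k−1)(l−1) that has no increasing subsequence of length k and no decreasing subsequence of length l. Then there is a one-element extension (b, g) of a such that b has no increasing subsequence of length k and no decreasing subsequence of length l. (Consequently, every (k,l)-saturated sequence has length exactly (k−1)(l−1).) -/
/-- `a` has an increasing subsequence of length `k`. -/
def HasIncr {m : ℕ} (a : Fin m → ℝ) (k : ℕ) : Prop :=
  ∃ f : Fin k → Fin m, StrictMono f ∧ StrictMono (a ∘ f)

/-- `a` has a decreasing subsequence of length `l`. -/
def HasDecr {m : ℕ} (a : Fin m → ℝ) (l : ℕ) : Prop :=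
  ∃ f : Fin l → Fin m, StrictMono f ∧ StrictAnti (a ∘ f)

/-- There is an increasing subsequence of `a` of length `n` all of whose entries are
at positions `≤ i` and have values `≤ a i`. -/
def ChainEnd {m : ℕ} (a : Fin m → ℝ) (i : Fin m) (n : ℕ) : Prop :=
  ∃ f : Fin n → Fin m, StrictMono f ∧ StrictMono (a ∘ f) ∧ ∀ s, f s ≤ i ∧ a (f s) ≤ a i

/-- Length of the longest increasing subsequence ending at `i`. -/
noncomputable def rr {m : ℕ} (a : Fin m → ℝ) (i : Fin m) : ℕ :=
  @Nat.findGreatest (ChainEnd a i) (Classical.decPred _) m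

/-- Length of the longest decreasing subsequence ending at `i`. -/
noncomputable def dd {m : ℕ} (a : Fin m → ℝ) (i : Fin m) : ℕ :=
  rr (fun s => -(a s)) i

/-- Non-dependent `Fin.insertNth`. -/
def insertR {m : ℕ} (t' : Fin (m + 1)) (x : ℝ) (a : Fin m → ℝ) : Fin (m + 1) → ℝ :=
  Fin.insertNth t' x a

lemma insertR_same {m : ℕ} (t' : Fin (m + 1)) (x : ℝ) (a : Fin m → ℝ) :
    insertR t' x a t' = x :=
  Fin.insertNth_apply_same (α := fun _ => ℝ) t' x a

lemma insertR_succAbove {m : ℕ} (t' : Fin (m + 1)) (x : ℝ) (a : Fin m → ℝ) (j : Fin m) :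
    insertR t' x a (t'.succAbove j) = a j :=
  Fin.insertNth_apply_succAbove (α := fun _ => ℝ) t' x a j

lemma chainEnd_one {m : ℕ} (a : Fin m → ℝ) (i : Fin m) : ChainEnd a i 1 :=
  ⟨fun _ => i, Subsingleton.strictMono _, Subsingleton.strictMono _,
    fun _ => ⟨le_refl _, le_refl _⟩⟩

lemma rr_pos {m : ℕ} (a : Fin m → ℝ) (i : Fin m) : 1 ≤ rr a i := by
  letI : DecidablePred (ChainEnd a i) := Classical.decPred _
  unfold rr
  exact Nat.le_findGreatest i.pos (chainEnd_one a i)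

lemma rr_chain {m : ℕ} (a : Fin m → ℝ) (i : Fin m) : ChainEnd a i (rr a i) := by
  letI : DecidablePred (ChainEnd a i) := Classical.decPred _
  unfold rr
  exact Nat.findGreatest_spec i.pos (chainEnd_one a i)

lemma rr_lt_of_not_hasIncr {m k : ℕ} (a : Fin m → ℝ) (hinc : ¬ HasIncr a k) (i : Fin m) :
    rr a i < k := by
  by_contra h
  push_neg at h
  obtain ⟨f, hf, haf, -⟩ := rr_chain a i
  exact hinc ⟨f ∘ Fin.castLE h, hf.comp (Fin.strictMono_castLE h),
    haf.comp (Fin.strictMono_castLE h)⟩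

lemma chainEnd_extend {m : ℕ} (a : Fin m → ℝ) {i j : Fin m} (hij : i < j) (hab : a i < a j)
    {n : ℕ} (hc : ChainEnd a i n) : ChainEnd a j (n + 1) := by
  obtain ⟨f, hf, haf, hb⟩ := hc
  refine ⟨fun s => if h : (s : ℕ) < n then f ⟨(s : ℕ), h⟩ else j, ?_, ?_, ?_⟩
  · intro u v huv
    have huv' : (u : ℕ) < (v : ℕ) := huv
    dsimp only
    by_cases hv : (v : ℕ) < n
    · have hu : (u : ℕ) < n := by omega
      rw [dif_pos hu, dif_pos hv]
      exact hf (Fin.mk_lt_mk.mpr huv')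
    · have hu : (u : ℕ) < n := by have := v.isLt; omega
      rw [dif_pos hu, dif_neg hv]
      exact lt_of_le_of_lt (hb _).1 hij
  · intro u v huv
    have huv' : (u : ℕ) < (v : ℕ) := huv
    show a _ < a _
    dsimp only
    by_cases hv : (v : ℕ) < n
    · have hu : (u : ℕ) < n := by omega
      rw [dif_pos hu, dif_pos hv]
      exact haf (Fin.mk_lt_mk.mpr huv')
    · have hu : (u : ℕ) < n := by have := v.isLt; omega
      rw [dif_pos hu, dif_neg hv]
      exact lt_of_le_of_lt (hb _).2 hab
  · intro s
    dsimp only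
    by_cases hs : (s : ℕ) < n
    · rw [dif_pos hs]
      exact ⟨le_of_lt (lt_of_le_of_lt (hb _).1 hij),
        le_of_lt (lt_of_le_of_lt (hb _).2 hab)⟩
    · rw [dif_neg hs]
      exact ⟨le_refl _, le_refl _⟩

lemma rr_lt_rr {m : ℕ} (a : Fin m → ℝ) {i j : Fin m} (hij : i < j) (hab : a i < a j) :
    rr a i < rr a j := by
  have hext := chainEnd_extend a hij hab (rr_chain a i)
  have hcard : rr a i + 1 ≤ m := by
    obtain ⟨F, hFmono, -, -⟩ := hext
    simpa using Fintype.card_le_of_injective F hFmono.injective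
  have h2 : rr a i + 1 ≤ rr a j := by
    letI : DecidablePred (ChainEnd a j) := Classical.decPred _
    unfold rr
    exact Nat.le_findGreatest hcard hext
  omega

lemma hasIncr_neg_iff {m : ℕ} (a : Fin m → ℝ) (l : ℕ) :
    HasIncr (fun s => -(a s)) l ↔ HasDecr a l := by
  constructor
  · rintro ⟨f, hf, h2⟩
    refine ⟨f, hf, fun u v huv => ?_⟩
    have := h2 huv
    simpa using this
  · rintro ⟨f, hf, h2⟩
    refine ⟨f, hf, fun u v huv => ?_⟩
    have := h2 huv
    simpa using this

lemma dd_lt_of_not_hasDecr {m l : ℕ} (a : Fin m → ℝ) (hdec : ¬ HasDecr a l) (i : Fin m) :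
    dd a i < l :=
  rr_lt_of_not_hasIncr _ (fun h => hdec ((hasIncr_neg_iff a l).mp h)) i

lemma dd_lt_dd {m : ℕ} (a : Fin m → ℝ) {i j : Fin m} (hij : i < j) (hab : a j < a i) :
    dd a i < dd a j :=
  rr_lt_rr (fun s => -(a s)) hij (by simpa using hab)

lemma succAbove_val {m : ℕ} (t' : Fin (m + 1)) (j : Fin m) :
    ((t'.succAbove j : Fin (m + 1)) : ℕ)
      = if (j : ℕ) < (t' : ℕ) then (j : ℕ) else (j : ℕ) + 1 := by
  by_cases h : (j : ℕ) < (t' : ℕ)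
  · rw [Fin.succAbove_of_castSucc_lt _ _ (by simpa [Fin.lt_def] using h), if_pos h,
      Fin.coe_castSucc]
  · rw [Fin.succAbove_of_le_castSucc _ _ (by simp [Fin.le_def]; omega), if_neg h,
      Fin.val_succ]

lemma exists_sep (B A F : Finset ℝ) (h : ∀ b ∈ B, ∀ c ∈ A, b < c) :
    ∃ x : ℝ, x ∉ F ∧ (∀ b ∈ B, b < x) ∧ (∀ c ∈ A, x < c) := by
  have hF : (↑F : Set ℝ).Finite := F.finite_toSet
  rcases B.eq_empty_or_nonempty with hB | hB <;> rcases A.eq_empty_or_nonempty with hA | hA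
  · obtain ⟨x, hx⟩ := ((Set.infinite_univ (α := ℝ)).diff hF).nonempty
    exact ⟨x, by simpa using hx.2, by simp [hB], by simp [hA]⟩
  · obtain ⟨x, hx⟩ := ((Set.Iio_infinite (A.min' hA)).diff hF).nonempty
    exact ⟨x, by simpa using hx.2, by simp [hB],
      fun c hc => lt_of_lt_of_le hx.1 (A.min'_le c hc)⟩
  · obtain ⟨x, hx⟩ := ((Set.Ioi_infinite (B.max' hB)).diff hF).nonempty
    exact ⟨x, by simpa using hx.2,
      fun c hc => lt_of_le_of_lt (B.le_max' c hc) hx.1, by simp [hA]⟩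
  · have hlt : B.max' hB < A.min' hA := h _ (B.max'_mem hB) _ (A.min'_mem hA)
    obtain ⟨x, hx⟩ := ((Set.Ioo_infinite hlt).diff hF).nonempty
    exact ⟨x, by simpa using hx.2,
      fun c hc => lt_of_le_of_lt (B.le_max' c hc) hx.1.1,
      fun c hc => lt_of_lt_of_le hx.1.2 (A.min'_le c hc)⟩

lemma main_no_incr {m : ℕ} (k p : ℕ) (x : ℝ) (a : Fin m → ℝ) (t' : Fin (m + 1))
    (hp1 : 1 ≤ p) (hpk : p < k) (hinc : ¬ HasIncr a k)
    (hP1 : ∀ i : Fin m, (i : ℕ) < (t' : ℕ) → a i < x → rr a i < p)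
    (hP3 : ∀ j : Fin m, (t' : ℕ) ≤ (j : ℕ) → x < a j → p < rr a j) :
    ¬ HasIncr (insertR t' x a) k := by
  set b := insertR t' x a with hbdef
  have hbx : b t' = x := insertR_same t' x a
  have hba : ∀ j : Fin m, b (t'.succAbove j) = a j :=
    fun j => insertR_succAbove t' x a j
  rintro ⟨f, hf, hbf⟩
  by_cases hex : ∃ s, f s = t'
  · obtain ⟨s0, hs0⟩ := hex
    -- elements of the subsequence before the new element
    have hA : ∀ n : ℕ, ∀ s : Fin k, (s : ℕ) = n → s < s0 →
        ∃ j : Fin m, t'.succAbove j = f s ∧ (j : ℕ) < (t' : ℕ) ∧ a j < x ∧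
          n < rr a j := by
      intro n
      induction n with
      | zero =>
        intro s hs hss0
        have hlt : f s < t' := hs0 ▸ hf hss0
        obtain ⟨j, hj⟩ := Fin.exists_succAbove_eq hlt.ne
        have hjt : (j : ℕ) < (t' : ℕ) := by
          have h1 : ((f s : Fin (m + 1)) : ℕ) < (t' : ℕ) := hlt
          rw [← hj, succAbove_val] at h1
          split at h1 <;> omega
        have hjx : a j < x := by
          have h2 := hbf hss0
          simp only [Function.comp_apply, hs0, hbx] at h2
          rw [← hba j, hj]
          exact h2
        exact ⟨j, hj, hjt, hjx, rr_pos a j⟩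
      | succ n ih =>
        intro s hs hss0
        have hlt : f s < t' := hs0 ▸ hf hss0
        obtain ⟨j, hj⟩ := Fin.exists_succAbove_eq hlt.ne
        have hjt : (j : ℕ) < (t' : ℕ) := by
          have h1 : ((f s : Fin (m + 1)) : ℕ) < (t' : ℕ) := hlt
          rw [← hj, succAbove_val] at h1
          split at h1 <;> omega
        have hjx : a j < x := by
          have h2 := hbf hss0
          simp only [Function.comp_apply, hs0, hbx] at h2
          rw [← hba j, hj]
          exact h2
        have hnk : n < k := by have := s.isLt; omega
        have hs1s : (⟨n, hnk⟩ : Fin k) < s := by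
          rw [Fin.lt_def]
          show n < (s : ℕ)
          omega
        obtain ⟨j1, hj1, hj1t, hj1x, hj1r⟩ := ih ⟨n, hnk⟩ rfl (lt_trans hs1s hss0)
        have hjj : j1 < j := by
          rw [← Fin.succAbove_lt_succAbove_iff (p := t'), hj1, hj]
          exact hf hs1s
        have haa : a j1 < a j := by
          rw [← hba j1, ← hba j, hj1, hj]
          exact hbf hs1s
        have hmono := rr_lt_rr a hjj haa
        exact ⟨j, hj, hjt, hjx, by omega⟩
    -- elements of the subsequence after the new element
    have hB : ∀ n : ℕ, ∀ s : Fin k, (s : ℕ) = (s0 : ℕ) + 1 + n →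
        ∃ j : Fin m, t'.succAbove j = f s ∧ (t' : ℕ) ≤ (j : ℕ) ∧ x < a j ∧
          p + n < rr a j := by
      intro n
      induction n with
      | zero =>
        intro s hs
        have hss0 : s0 < s := by rw [Fin.lt_def]; omega
        have hlt : t' < f s := hs0 ▸ hf hss0
        obtain ⟨j, hj⟩ := Fin.exists_succAbove_eq hlt.ne'
        have hjt : (t' : ℕ) ≤ (j : ℕ) := by
          have h1 : (t' : ℕ) < ((f s : Fin (m + 1)) : ℕ) := hlt
          rw [← hj, succAbove_val] at h1
          split at h1 <;> omega
        have hjx : x < a j := by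
          have h2 := hbf hss0
          simp only [Function.comp_apply, hs0, hbx] at h2
          rw [← hba j, hj]
          exact h2
        exact ⟨j, hj, hjt, hjx, by have := hP3 j hjt hjx; omega⟩
      | succ n ih =>
        intro s hs
        have hss0 : s0 < s := by rw [Fin.lt_def]; omega
        have hlt : t' < f s := hs0 ▸ hf hss0
        obtain ⟨j, hj⟩ := Fin.exists_succAbove_eq hlt.ne'
        have hjt : (t' : ℕ) ≤ (j : ℕ) := by
          have h1 : (t' : ℕ) < ((f s : Fin (m + 1)) : ℕ) := hlt
          rw [← hj, succAbove_val] at h1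
          split at h1 <;> omega
        have hjx : x < a j := by
          have h2 := hbf hss0
          simp only [Function.comp_apply, hs0, hbx] at h2
          rw [← hba j, hj]
          exact h2
        have hnk : (s0 : ℕ) + 1 + n < k := by have := s.isLt; omega
        have hs1s : (⟨(s0 : ℕ) + 1 + n, hnk⟩ : Fin k) < s := by
          rw [Fin.lt_def]
          show (s0 : ℕ) + 1 + n < (s : ℕ)
          omega
        obtain ⟨j1, hj1, hj1t, hj1x, hj1r⟩ := ih ⟨(s0 : ℕ) + 1 + n, hnk⟩ rfl
        have hjj : j1 < j := by
          rw [← Fin.succAbove_lt_succAbove_iff (p := t'), hj1, hj]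
          exact hf hs1s
        have haa : a j1 < a j := by
          rw [← hba j1, ← hba j, hj1, hj]
          exact hbf hs1s
        have hmono := rr_lt_rr a hjj haa
        exact ⟨j, hj, hjt, hjx, by omega⟩
    rcases Nat.lt_or_ge ((s0 : ℕ) + 1) k with hlast | hlast
    · -- there is an element of the subsequence after the new one
      obtain ⟨j, -, -, -, hjr⟩ := hB (k - (s0 : ℕ) - 2) ⟨k - 1, by omega⟩
        (by show k - 1 = (s0 : ℕ) + 1 + (k - (s0 : ℕ) - 2); omega)
      have h2 := rr_lt_of_not_hasIncr a hinc j
      have hp_le : p ≤ (s0 : ℕ) := by omega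
      have hs0pos : 1 ≤ (s0 : ℕ) := by omega
      obtain ⟨j', -, hjt', hjx', hjr'⟩ :=
        hA ((s0 : ℕ) - 1) ⟨(s0 : ℕ) - 1, by have := s0.isLt; omega⟩ rfl
          (by rw [Fin.lt_def]; show (s0 : ℕ) - 1 < (s0 : ℕ); omega)
      have h3 := hP1 j' hjt' hjx'
      omega
    · -- the new element is the last element of the subsequence
      have hs0v : (s0 : ℕ) = k - 1 := by have := s0.isLt; omega
      obtain ⟨j, -, hjt, hjx, hjr⟩ :=
        hA (k - 2) ⟨k - 2, by omega⟩ rfl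
          (by rw [Fin.lt_def]; show k - 2 < (s0 : ℕ); omega)
      have h1 := hP1 j hjt hjx
      omega
  · push_neg at hex
    choose h hh using fun s => Fin.exists_succAbove_eq (hex s)
    refine hinc ⟨h, ?_, ?_⟩
    · intro u v huv
      rw [← Fin.succAbove_lt_succAbove_iff (p := t'), hh, hh]
      exact hf huv
    · intro u v huv
      show a (h u) < a (h v)
      rw [← hba (h u), ← hba (h v), hh, hh]
      exact hbf huv

/-- If an injective sequence of length `m < (k-1)(l-1)` has no increasing subsequence of
length `k` and no decreasing subsequence of length `l`, then it has a one-element extension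
`(b, g)` with the same property. -/
theorem sequence_saturation (k l m : ℕ) (hk : 2 ≤ k) (hl : 2 ≤ l)
    (a : Fin m → ℝ) (ha : Function.Injective a) (hm : m < (k - 1) * (l - 1))
    (hinc : ¬ HasIncr a k) (hdec : ¬ HasDecr a l) :
    ∃ (b : Fin (m + 1) → ℝ) (g : Fin m → Fin (m + 1)),
      Function.Injective b ∧ StrictMono g ∧ b ∘ g = a ∧
      ¬ HasIncr b k ∧ ¬ HasDecr b l := by
  classical
  -- basic bounds
  have hrr_lt : ∀ i, rr a i < k := rr_lt_of_not_hasIncr a hinc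
  have hdd_lt : ∀ i, dd a i < l := dd_lt_of_not_hasDecr a hdec
  -- the pair map is injective; find a missing pair (p, q)
  set φ : Fin m → ℕ × ℕ := fun i => (rr a i, dd a i) with hφdef
  have hkey : ∀ i j : Fin m, i < j → φ i ≠ φ j := by
    intro i j hij heq
    rcases lt_trichotomy (a i) (a j) with hv | hv | hv
    · have := rr_lt_rr a hij hv
      simp [hφdef, Prod.ext_iff] at heq
      omega
    · exact absurd (ha hv) (ne_of_lt hij)
    · have := dd_lt_dd a hij hv
      simp [hφdef, Prod.ext_iff] at heq
      omega
  have hφinj : Function.Injective φ := by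
    intro i j heq
    rcases lt_trichotomy i j with hij | hij | hij
    · exact absurd heq (hkey i j hij)
    · exact hij
    · exact absurd heq.symm (hkey j i hij)
  set Grid : Finset (ℕ × ℕ) := Finset.Icc 1 (k - 1) ×ˢ Finset.Icc 1 (l - 1) with hGdef
  have hGcard : Grid.card = (k - 1) * (l - 1) := by
    simp [hGdef, Nat.card_Icc]
  have hnotsub : ¬ Grid ⊆ Finset.univ.image φ := by
    intro hsub
    have h1 := Finset.card_le_card hsub
    rw [hGcard, Finset.card_image_of_injective _ hφinj, Finset.card_univ] at h1
    simp at h1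
    omega
  obtain ⟨⟨p, q⟩, hpqG, hpqnot⟩ := Finset.not_subset.mp hnotsub
  rw [hGdef, Finset.mem_product, Finset.mem_Icc, Finset.mem_Icc] at hpqG
  obtain ⟨⟨hp1', hpk'⟩, hq1', hql'⟩ := hpqG
  have hp1 : 1 ≤ p := hp1'
  have hpk : p ≤ k - 1 := hpk'
  have hq1 : 1 ≤ q := hq1'
  have hql : q ≤ l - 1 := hql'
  have hmiss : ∀ i : Fin m, ¬ (rr a i = p ∧ dd a i = q) := by
    intro i hi
    exact hpqnot (Finset.mem_image.mpr ⟨i, Finset.mem_univ i, by simp [hφdef, hi.1, hi.2]⟩)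
  -- choose the insertion position t
  set t : ℕ := Finset.univ.sup (fun i : Fin m =>
    if rr a i ≤ p ∧ dd a i ≤ q then (i : ℕ) + 1 else 0) with htdef
  have ht : t ≤ m := by
    apply Finset.sup_le
    intro i _
    split
    · exact i.isLt
    · omega
  have hBefore : ∀ i : Fin m, rr a i ≤ p → dd a i ≤ q → (i : ℕ) < t := by
    intro i h1 h2
    have := Finset.le_sup (f := fun i : Fin m =>
      if rr a i ≤ p ∧ dd a i ≤ q then (i : ℕ) + 1 else 0) (Finset.mem_univ i)
    simp only [h1, h2, and_self, if_true] at this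
    omega
  have hAfter : ∀ j : Fin m, p ≤ rr a j → q ≤ dd a j → t ≤ (j : ℕ) := by
    intro j h1 h2
    apply Finset.sup_le
    intro i _
    split_ifs with hi
    · have hij : i ≠ j := by
        rintro rfl
        exact hmiss i ⟨le_antisymm hi.1 h1, le_antisymm hi.2 h2⟩
      rcases lt_trichotomy i j with hlt | heq | hgt
      · have : (i : ℕ) < (j : ℕ) := hlt
        omega
      · exact absurd heq hij
      · exfalso
        rcases lt_trichotomy (a j) (a i) with hv | hv | hv
        · have := rr_lt_rr a hgt hv
          omega
        · exact hij (ha hv).symm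
        · have := dd_lt_dd a hgt hv
          omega
    · omega
  -- choose the inserted value x
  set Bs : Finset ℝ := (Finset.univ.filter fun i : Fin m => rr a i ≤ p ∧ q ≤ dd a i).image a
    with hBsdef
  set As : Finset ℝ := (Finset.univ.filter fun j : Fin m => p ≤ rr a j ∧ dd a j ≤ q).image a
    with hAsdef
  have hcross : ∀ b ∈ Bs, ∀ c ∈ As, b < c := by
    intro bb hbb cc hcc
    rw [hBsdef, Finset.mem_image] at hbb
    rw [hAsdef, Finset.mem_image] at hcc
    obtain ⟨i, hi, rfl⟩ := hbb
    obtain ⟨j, hj, rfl⟩ := hcc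
    rw [Finset.mem_filter] at hi hj
    have hij : i ≠ j := by
      rintro rfl
      exact hmiss i ⟨le_antisymm hi.2.1 hj.2.1, le_antisymm hj.2.2 hi.2.2⟩
    rcases lt_trichotomy (a i) (a j) with hv | hv | hv
    · exact hv
    · exact absurd (ha hv) hij
    · exfalso
      rcases lt_trichotomy i j with hlt | heq | hgt
      · have := dd_lt_dd a hlt hv
        omega
      · exact hij heq
      · have := rr_lt_rr a hgt hv
        omega
  obtain ⟨x, hxF, hxB, hxA⟩ := exists_sep Bs As (Finset.univ.image a) hcross
  have hxrange : ∀ i : Fin m, x ≠ a i := by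
    intro i hx
    exact hxF (Finset.mem_image.mpr ⟨i, Finset.mem_univ i, hx.symm⟩)
  -- the four quadrant conditions
  have hP1 : ∀ i : Fin m, (i : ℕ) < t → a i < x → rr a i < p := by
    intro i hit hax
    by_contra hcon
    push_neg at hcon
    rcases le_or_gt (dd a i) q with hd | hd
    · have : x < a i := hxA (a i) (by
        rw [hAsdef, Finset.mem_image]
        exact ⟨i, Finset.mem_filter.mpr ⟨Finset.mem_univ i, hcon, hd⟩, rfl⟩)
      linarith
    · have := hAfter i hcon (le_of_lt hd)
      omega
  have hP3 : ∀ j : Fin m, t ≤ (j : ℕ) → x < a j → p < rr a j := by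
    intro j hjt hxa
    by_contra hcon
    push_neg at hcon
    rcases le_or_gt (dd a j) q with hd | hd
    · have := hBefore j hcon hd
      omega
    · have : a j < x := hxB (a j) (by
        rw [hBsdef, Finset.mem_image]
        exact ⟨j, Finset.mem_filter.mpr ⟨Finset.mem_univ j, hcon, le_of_lt hd⟩, rfl⟩)
      linarith
  have hP2 : ∀ i : Fin m, (i : ℕ) < t → x < a i → dd a i < q := by
    intro i hit hax
    by_contra hcon
    push_neg at hcon
    rcases le_or_gt (rr a i) p with hr | hr
    · have : a i < x := hxB (a i) (by
        rw [hBsdef, Finset.mem_image]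
        exact ⟨i, Finset.mem_filter.mpr ⟨Finset.mem_univ i, hr, hcon⟩, rfl⟩)
      linarith
    · have := hAfter i (le_of_lt hr) hcon
      omega
  have hP4 : ∀ j : Fin m, t ≤ (j : ℕ) → a j < x → q < dd a j := by
    intro j hjt hxa
    by_contra hcon
    push_neg at hcon
    rcases le_or_gt (rr a j) p with hr | hr
    · have := hBefore j hr hcon
      omega
    · have : x < a j := hxA (a j) (by
        rw [hAsdef, Finset.mem_image]
        exact ⟨j, Finset.mem_filter.mpr ⟨Finset.mem_univ j, le_of_lt hr, hcon⟩, rfl⟩)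
      linarith
  -- assemble the extension
  set t' : Fin (m + 1) := ⟨t, by omega⟩ with ht'def
  have ht'val : (t' : ℕ) = t := rfl
  refine ⟨insertR t' x a, t'.succAbove, ?_, Fin.strictMono_succAbove t', ?_, ?_, ?_⟩
  · -- injectivity
    intro u v huv
    have hbx : insertR t' x a t' = x := insertR_same t' x a
    have hba : ∀ j : Fin m, insertR t' x a (t'.succAbove j) = a j :=
      fun j => insertR_succAbove t' x a j
    by_cases hu : u = t' <;> by_cases hv : v = t'
    · rw [hu, hv]
    · obtain ⟨j, rfl⟩ := Fin.exists_succAbove_eq hv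
      rw [hu, hbx, hba] at huv
      exact absurd huv (hxrange j)
    · obtain ⟨j, rfl⟩ := Fin.exists_succAbove_eq hu
      rw [hv, hbx, hba] at huv
      exact absurd huv.symm (hxrange j)
    · obtain ⟨j, rfl⟩ := Fin.exists_succAbove_eq hu
      obtain ⟨j', rfl⟩ := Fin.exists_succAbove_eq hv
      rw [hba, hba] at huv
      rw [ha huv]
  · -- b ∘ g = a
    funext i
    exact insertR_succAbove t' x a i
  · -- no increasing subsequence of length k
    exact main_no_incr k p x a t' hp1 (by omega) hinc
      (fun i hi hax => hP1 i (by rwa [ht'val] at hi) hax)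
      (fun j hj hxa => hP3 j (by rwa [ht'val] at hj) hxa)
  · -- no decreasing subsequence of length l
    intro hdecb
    obtain ⟨f, hf, hanti⟩ := hdecb
    have hnegb : (fun u => -(insertR t' x a u)) = insertR t' (-x) (fun i => -(a i)) := by
      funext u
      by_cases hu : u = t'
      · rw [hu, insertR_same, insertR_same]
      · obtain ⟨j, rfl⟩ := Fin.exists_succAbove_eq hu
        rw [insertR_succAbove, insertR_succAbove]
    have hnegA : ¬ HasIncr (fun s => -(a s)) l :=
      fun h => hdec ((hasIncr_neg_iff a l).mp h)
    have hQ1 : ∀ i : Fin m, (i : ℕ) < (t' : ℕ) → -(a i) < -x →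
        rr (fun s => -(a s)) i < q := by
      intro i hi hax
      exact hP2 i (by rwa [ht'val] at hi) (by linarith)
    have hQ3 : ∀ j : Fin m, (t' : ℕ) ≤ (j : ℕ) → -x < -(a j) →
        q < rr (fun s => -(a s)) j := by
      intro j hj hxa
      exact hP4 j (by rwa [ht'val] at hj) (by linarith)
    apply main_no_incr l q (-x) (fun i => -(a i)) t' hq1 (by omega) hnegA hQ1 hQ3
    rw [← hnegb]
    exact ⟨f, hf, fun u v huv => by simpa using hanti huv⟩
end

section
/- Let k, l ≥ 2 be integers. Every sequence a : Fin m → ℝ (injective) that is (k,l)-semisaturated satisfies m ≥ min(2k + l − 5, 2l + k − 5). -/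
/-- The injective sequence `a` of length `m` is `(k,l)`-semisaturated: for every one-element
extension `(b, g)` of `a`, the sequence `b` has an increasing subsequence of length `k` or a
decreasing subsequence of length `l` whose index set contains the new position. -/
def SeqSemiSat {m : ℕ} (a : Fin m → ℝ) (k l : ℕ) : Prop :=
  ∀ (b : Fin (m + 1) → ℝ) (g : Fin m → Fin (m + 1)),
    Function.Injective b → StrictMono g → b ∘ g = a →
    ∀ j : Fin (m + 1), j ∉ Set.range g →
      (∃ f : Fin k → Fin (m + 1), StrictMono f ∧ StrictMono (b ∘ f) ∧ j ∈ Set.range f) ∨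
      (∃ f : Fin l → Fin (m + 1), StrictMono f ∧ StrictAnti (b ∘ f) ∧ j ∈ Set.range f)

section Aux

variable {m : ℕ}

/-- `s` is the index set of an increasing subsequence. -/
def IncChain (a : Fin m → ℝ) (s : Finset (Fin m)) : Prop :=
  ∀ ⦃i⦄, i ∈ s → ∀ ⦃j⦄, j ∈ s → i < j → a i < a j

/-- `s` is the index set of a decreasing subsequence. -/
def DecChain (a : Fin m → ℝ) (s : Finset (Fin m)) : Prop :=
  ∀ ⦃i⦄, i ∈ s → ∀ ⦃j⦄, j ∈ s → i < j → a j < a i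

lemma inter_card_le_one {a : Fin m → ℝ} {s t : Finset (Fin m)}
    (hs : IncChain a s) (ht : DecChain a t) : (s ∩ t).card ≤ 1 := by
  apply Finset.card_le_one.mpr
  intro i hi j hj
  rw [Finset.mem_inter] at hi hj
  rcases lt_trichotomy i j with h | h | h
  · exact absurd (hs hi.1 hj.1 h) (not_lt.mpr (ht hi.2 hj.2 h).le)
  · exact h
  · exact absurd (hs hj.1 hi.1 h) (not_lt.mpr (ht hj.2 hi.2 h).le)

lemma toIncChain {n : ℕ} {a : Fin m → ℝ} {e : Fin n → Fin m} {P : ℝ → Prop}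
    (he : StrictMono e) (hae : StrictMono (a ∘ e)) (hP : ∀ i, P (a (e i))) :
    ∃ s : Finset (Fin m), s.card = n ∧ IncChain a s ∧ ∀ i ∈ s, P (a i) := by
  refine ⟨Finset.image e Finset.univ, ?_, ?_, ?_⟩
  · rw [Finset.card_image_of_injective _ he.injective, Finset.card_univ, Fintype.card_fin]
  · intro i hi j hj hij
    obtain ⟨p, _, rfl⟩ := Finset.mem_image.mp hi
    obtain ⟨q, _, rfl⟩ := Finset.mem_image.mp hj
    exact hae (he.lt_iff_lt.mp hij)
  · intro i hi
    obtain ⟨p, _, rfl⟩ := Finset.mem_image.mp hi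
    exact hP p

lemma toDecChain {n : ℕ} {a : Fin m → ℝ} {e : Fin n → Fin m} {P : ℝ → Prop}
    (he : StrictMono e) (hae : StrictAnti (a ∘ e)) (hP : ∀ i, P (a (e i))) :
    ∃ s : Finset (Fin m), s.card = n ∧ DecChain a s ∧ ∀ i ∈ s, P (a i) := by
  refine ⟨Finset.image e Finset.univ, ?_, ?_, ?_⟩
  · rw [Finset.card_image_of_injective _ he.injective, Finset.card_univ, Fintype.card_fin]
  · intro i hi j hj hij
    obtain ⟨p, _, rfl⟩ := Finset.mem_image.mp hi
    obtain ⟨q, _, rfl⟩ := Finset.mem_image.mp hj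
    exact hae (he.lt_iff_lt.mp hij)
  · intro i hi
    obtain ⟨p, _, rfl⟩ := Finset.mem_image.mp hi
    exact hP p

/-- Inserting a new value `w` at the front: either an increasing `(k-1)`-chain with all values
above `w`, or a decreasing `(l-1)`-chain with all values below `w`. -/
lemma front_insert {a : Fin m → ℝ} (ha : Function.Injective a) {k l : ℕ}
    (hsat : SeqSemiSat a k l) {k' l' : ℕ} (hk : k = k' + 1) (hl : l = l' + 1)
    {w : ℝ} (hw : w ∉ Set.range a) :
    (∃ s : Finset (Fin m), s.card = k' ∧ IncChain a s ∧ ∀ i ∈ s, w < a i) ∨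
    (∃ s : Finset (Fin m), s.card = l' ∧ DecChain a s ∧ ∀ i ∈ s, a i < w) := by
  subst hk; subst hl
  set b : Fin (m+1) → ℝ := Fin.cons w a with hb
  have hb0 : b 0 = w := rfl
  have hbs : ∀ i : Fin m, b i.succ = a i := by
    intro i; rw [hb]; simp
  have hbinj : Function.Injective b := by
    intro i j hij
    rcases Fin.eq_zero_or_eq_succ i with rfl | ⟨i', rfl⟩ <;>
      rcases Fin.eq_zero_or_eq_succ j with rfl | ⟨j', rfl⟩
    · rfl
    · rw [hb0, hbs] at hij; exact absurd ⟨j', hij.symm⟩ hw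
    · rw [hb0, hbs] at hij; exact absurd ⟨i', hij⟩ hw
    · rw [hbs, hbs] at hij; rw [ha hij]
  have hcomp : b ∘ Fin.succ = a := funext hbs
  have hj0 : (0 : Fin (m+1)) ∉ Set.range (Fin.succ : Fin m → Fin (m+1)) := by
    rintro ⟨i, hi⟩; exact Fin.succ_ne_zero i hi
  rcases hsat b Fin.succ hbinj Fin.strictMono_succ hcomp 0 hj0 with
    ⟨f, hf, hbf, j0, hj0f⟩ | ⟨f, hf, hbf, j0, hj0f⟩
  · left
    have hf0 : f 0 = 0 := by
      have h1 : f 0 ≤ f j0 := hf.monotone (Fin.zero_le j0)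
      rw [hj0f] at h1
      exact le_antisymm h1 (Fin.zero_le _)
    have hne : ∀ i : Fin k', f i.succ ≠ 0 := by
      intro i h
      have h2 : f 0 < f i.succ := hf (Fin.succ_pos i)
      rw [hf0, h] at h2
      exact lt_irrefl _ h2
    set e : Fin k' → Fin m := fun i => (f i.succ).pred (hne i) with he
    have hkey : ∀ i, a (e i) = b (f i.succ) := by
      intro i
      have h3 : (e i).succ = f i.succ := Fin.succ_pred _ _
      rw [← hbs (e i), h3]
    have hemono : StrictMono e := by
      intro i j hij
      exact Fin.pred_lt_pred_iff.mpr (hf (Fin.succ_lt_succ_iff.mpr hij))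
    have haemono : StrictMono (a ∘ e) := by
      intro i j hij
      show a (e i) < a (e j)
      rw [hkey i, hkey j]
      exact hbf (Fin.succ_lt_succ_iff.mpr hij)
    refine toIncChain (P := fun x => w < x) hemono haemono (fun i => ?_)
    rw [hkey i]
    have h4 : b (f 0) < b (f i.succ) := hbf (Fin.succ_pos i)
    rwa [hf0, hb0] at h4
  · right
    have hf0 : f 0 = 0 := by
      have h1 : f 0 ≤ f j0 := hf.monotone (Fin.zero_le j0)
      rw [hj0f] at h1
      exact le_antisymm h1 (Fin.zero_le _)
    have hne : ∀ i : Fin l', f i.succ ≠ 0 := by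
      intro i h
      have h2 : f 0 < f i.succ := hf (Fin.succ_pos i)
      rw [hf0, h] at h2
      exact lt_irrefl _ h2
    set e : Fin l' → Fin m := fun i => (f i.succ).pred (hne i) with he
    have hkey : ∀ i, a (e i) = b (f i.succ) := by
      intro i
      have h3 : (e i).succ = f i.succ := Fin.succ_pred _ _
      rw [← hbs (e i), h3]
    have hemono : StrictMono e := by
      intro i j hij
      exact Fin.pred_lt_pred_iff.mpr (hf (Fin.succ_lt_succ_iff.mpr hij))
    have haeanti : StrictAnti (a ∘ e) := by
      intro i j hij
      show a (e j) < a (e i)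
      rw [hkey i, hkey j]
      exact hbf (Fin.succ_lt_succ_iff.mpr hij)
    refine toDecChain (P := fun x => x < w) hemono haeanti (fun i => ?_)
    rw [hkey i]
    have h4 : b (f i.succ) < b (f 0) := hbf (Fin.succ_pos i)
    rwa [hf0, hb0] at h4

/-- Inserting a new value `w` at the back: either an increasing `(k-1)`-chain with all values
below `w`, or a decreasing `(l-1)`-chain with all values above `w`. -/
lemma back_insert {a : Fin m → ℝ} (ha : Function.Injective a) {k l : ℕ}
    (hsat : SeqSemiSat a k l) {k' l' : ℕ} (hk : k = k' + 1) (hl : l = l' + 1)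
    {w : ℝ} (hw : w ∉ Set.range a) :
    (∃ s : Finset (Fin m), s.card = k' ∧ IncChain a s ∧ ∀ i ∈ s, a i < w) ∨
    (∃ s : Finset (Fin m), s.card = l' ∧ DecChain a s ∧ ∀ i ∈ s, w < a i) := by
  subst hk; subst hl
  set b : Fin (m+1) → ℝ := Fin.snoc a w with hb
  have hbl : b (Fin.last m) = w := by rw [hb]; simp
  have hbs : ∀ i : Fin m, b i.castSucc = a i := by
    intro i; rw [hb]; simp
  have hbinj : Function.Injective b := by
    intro i j hij
    rcases Fin.eq_castSucc_or_eq_last i with ⟨i', rfl⟩ | rfl <;>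
      rcases Fin.eq_castSucc_or_eq_last j with ⟨j', rfl⟩ | rfl
    · rw [hbs, hbs] at hij; rw [ha hij]
    · rw [hbl, hbs] at hij; exact absurd ⟨i', hij⟩ hw
    · rw [hbl, hbs] at hij; exact absurd ⟨j', hij.symm⟩ hw
    · rfl
  have hcomp : b ∘ Fin.castSucc = a := funext hbs
  have hjl : (Fin.last m) ∉ Set.range (Fin.castSucc : Fin m → Fin (m+1)) := by
    rintro ⟨i, hi⟩; exact (Fin.castSucc_lt_last i).ne hi
  rcases hsat b Fin.castSucc hbinj Fin.strictMono_castSucc hcomp (Fin.last m) hjl with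
    ⟨f, hf, hbf, j0, hj0f⟩ | ⟨f, hf, hbf, j0, hj0f⟩
  · left
    have hfl : f (Fin.last k') = Fin.last m := by
      have h1 : f j0 ≤ f (Fin.last k') := hf.monotone (Fin.le_last j0)
      rw [hj0f] at h1
      exact le_antisymm (Fin.le_last _) h1
    have hne : ∀ i : Fin k', f i.castSucc ≠ Fin.last m := by
      intro i h
      have h2 : f i.castSucc < f (Fin.last k') := hf (Fin.castSucc_lt_last i)
      rw [hfl, h] at h2
      exact lt_irrefl _ h2
    set e : Fin k' → Fin m := fun i => (f i.castSucc).castPred (hne i) with he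
    have hkey : ∀ i, a (e i) = b (f i.castSucc) := by
      intro i
      have h3 : (e i).castSucc = f i.castSucc := Fin.castSucc_castPred _ _
      rw [← hbs (e i), h3]
    have hemono : StrictMono e := by
      intro i j hij
      exact Fin.castPred_lt_castPred_iff.mpr (hf (Fin.castSucc_lt_castSucc_iff.mpr hij))
    have haemono : StrictMono (a ∘ e) := by
      intro i j hij
      show a (e i) < a (e j)
      rw [hkey i, hkey j]
      exact hbf (Fin.castSucc_lt_castSucc_iff.mpr hij)
    refine toIncChain (P := fun x => x < w) hemono haemono (fun i => ?_)
    rw [hkey i]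
    have h4 : b (f i.castSucc) < b (f (Fin.last k')) := hbf (Fin.castSucc_lt_last i)
    rwa [hfl, hbl] at h4
  · right
    have hfl : f (Fin.last l') = Fin.last m := by
      have h1 : f j0 ≤ f (Fin.last l') := hf.monotone (Fin.le_last j0)
      rw [hj0f] at h1
      exact le_antisymm (Fin.le_last _) h1
    have hne : ∀ i : Fin l', f i.castSucc ≠ Fin.last m := by
      intro i h
      have h2 : f i.castSucc < f (Fin.last l') := hf (Fin.castSucc_lt_last i)
      rw [hfl, h] at h2
      exact lt_irrefl _ h2
    set e : Fin l' → Fin m := fun i => (f i.castSucc).castPred (hne i) with he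
    have hkey : ∀ i, a (e i) = b (f i.castSucc) := by
      intro i
      have h3 : (e i).castSucc = f i.castSucc := Fin.castSucc_castPred _ _
      rw [← hbs (e i), h3]
    have hemono : StrictMono e := by
      intro i j hij
      exact Fin.castPred_lt_castPred_iff.mpr (hf (Fin.castSucc_lt_castSucc_iff.mpr hij))
    have haeanti : StrictAnti (a ∘ e) := by
      intro i j hij
      show a (e j) < a (e i)
      rw [hkey i, hkey j]
      exact hbf (Fin.castSucc_lt_castSucc_iff.mpr hij)
    refine toDecChain (P := fun x => w < x) hemono haeanti (fun i => ?_)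
    rw [hkey i]
    have h4 : b (f (Fin.last l')) < b (f i.castSucc) := hbf (Fin.castSucc_lt_last i)
    rwa [hfl, hbl] at h4

/-- There is `w` just above `v`: above `v`, below every value of `a` exceeding `v`, and not a
value of `a`. -/
lemma exists_sep_above (a : Fin m → ℝ) (v : ℝ) :
    ∃ w, v < w ∧ (∀ i, v < a i → w < a i) ∧ w ∉ Set.range a := by
  classical
  set S : Finset ℝ := (Finset.univ.image a).filter (fun x => v < x) with hS
  by_cases hne : S.Nonempty
  · have hv : v < S.min' hne := (Finset.mem_filter.mp (S.min'_mem hne)).2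
    refine ⟨(v + S.min' hne) / 2, by linarith, ?_, ?_⟩
    · intro i hi
      have h1 : a i ∈ S := Finset.mem_filter.mpr
        ⟨Finset.mem_image_of_mem a (Finset.mem_univ i), hi⟩
      have h2 := S.min'_le _ h1
      linarith
    · rintro ⟨i, hi⟩
      by_cases h : v < a i
      · have h1 : a i ∈ S := Finset.mem_filter.mpr
          ⟨Finset.mem_image_of_mem a (Finset.mem_univ i), h⟩
        have h2 := S.min'_le _ h1
        linarith
      · push_neg at h; linarith
  · have hall : ∀ i, a i ≤ v := by
      intro i
      by_contra h
      push_neg at h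
      exact hne ⟨a i, Finset.mem_filter.mpr ⟨Finset.mem_image_of_mem a (Finset.mem_univ i), h⟩⟩
    refine ⟨v + 1, by linarith, fun i hi => absurd hi (not_lt.mpr (hall i)), ?_⟩
    rintro ⟨i, hi⟩
    have := hall i
    linarith

/-- There is `w` just below `u`: below `u`, above every value of `a` under `u`, and not a
value of `a`. -/
lemma exists_sep_below (a : Fin m → ℝ) (u : ℝ) :
    ∃ w, w < u ∧ (∀ i, a i < u → a i < w) ∧ w ∉ Set.range a := by
  classical
  set S : Finset ℝ := (Finset.univ.image a).filter (fun x => x < u) with hS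
  by_cases hne : S.Nonempty
  · have hv : S.max' hne < u := (Finset.mem_filter.mp (S.max'_mem hne)).2
    refine ⟨(u + S.max' hne) / 2, by linarith, ?_, ?_⟩
    · intro i hi
      have h1 : a i ∈ S := Finset.mem_filter.mpr
        ⟨Finset.mem_image_of_mem a (Finset.mem_univ i), hi⟩
      have h2 := S.le_max' _ h1
      linarith
    · rintro ⟨i, hi⟩
      by_cases h : a i < u
      · have h1 : a i ∈ S := Finset.mem_filter.mpr
          ⟨Finset.mem_image_of_mem a (Finset.mem_univ i), h⟩
        have h2 := S.le_max' _ h1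
        linarith
      · push_neg at h; linarith
  · have hall : ∀ i, u ≤ a i := by
      intro i
      by_contra h
      push_neg at h
      exact hne ⟨a i, Finset.mem_filter.mpr ⟨Finset.mem_image_of_mem a (Finset.mem_univ i), h⟩⟩
    refine ⟨u - 1, by linarith, fun i hi => absurd hi (not_lt.mpr (hall i)), ?_⟩
    rintro ⟨i, hi⟩
    have := hall i
    linarith

lemma card_triple {α : Type*} [DecidableEq α] (A B C : Finset α) :
    A.card + B.card + C.card ≤
      (A ∪ B ∪ C).card + (A ∩ B).card + (A ∩ C).card + (B ∩ C).card := by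
  have h1 := Finset.card_union_add_card_inter A B
  have h2 := Finset.card_union_add_card_inter (A ∪ B) C
  have h3 : ((A ∪ B) ∩ C) ⊆ (A ∩ C) ∪ (B ∩ C) := by
    intro x hx
    simp only [Finset.mem_inter, Finset.mem_union] at hx ⊢
    tauto
  have h4 := Finset.card_le_card h3
  have h5 := Finset.card_union_le (A ∩ C) (B ∩ C)
  omega

end Aux

/-- For `k, l ≥ 2`, every injective `(k,l)`-semisaturated sequence of length `m` satisfies
`m ≥ min(2k + l - 5, 2l + k - 5)`. -/
theorem sequence_semisat_lower_bound (k l m : ℕ) (hk : 2 ≤ k) (hl : 2 ≤ l)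
    (a : Fin m → ℝ) (ha : Function.Injective a) (hsat : SeqSemiSat a k l) :
    min (2 * k + l - 5) (2 * l + k - 5) ≤ m := by
  classical
  obtain ⟨k', rfl⟩ : ∃ k', k = k' + 1 := ⟨k - 1, by omega⟩
  obtain ⟨l', rfl⟩ : ∃ l', l = l' + 1 := ⟨l - 1, by omega⟩
  have hk' : 1 ≤ k' := by omega
  have hl' : 1 ≤ l' := by omega
  -- existence of an increasing chain of size k'
  have hex : ∃ s : Finset (Fin m), s.card = k' ∧ IncChain a s := by
    obtain ⟨c, hc⟩ := (Set.finite_range a).bddBelow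
    have hwlt : ∀ i, c - 1 < a i := fun i => lt_of_lt_of_le (by linarith) (hc ⟨i, rfl⟩)
    have hw : c - 1 ∉ Set.range a := by
      rintro ⟨i, hi⟩
      have := hwlt i
      rw [hi] at this
      exact lt_irrefl _ this
    rcases front_insert ha hsat rfl rfl hw with ⟨s, h1, h2, _⟩ | ⟨s, h1, h2, h3⟩
    · exact ⟨s, h1, h2⟩
    · obtain ⟨i, hi⟩ := Finset.card_pos.mp (by omega : 0 < s.card)
      exact absurd (hwlt i) (not_lt.mpr (h3 i hi).le)
  set C : Finset (Finset (Fin m)) :=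
    Finset.univ.filter (fun s => s.card = k' ∧ IncChain a s) with hCdef
  have hmemC : ∀ s : Finset (Fin m), s ∈ C ↔ s.card = k' ∧ IncChain a s := by
    intro s
    simp [hCdef]
  have hCne : C.Nonempty := by
    obtain ⟨s, h1, h2⟩ := hex
    exact ⟨s, (hmemC s).mpr ⟨h1, h2⟩⟩
  have hSne : ∀ s ∈ C, (s.image a).Nonempty := by
    intro s hs
    obtain ⟨h1, _⟩ := (hmemC s).mp hs
    exact Finset.Nonempty.image (Finset.card_pos.mp (by omega)) a
  set lof : Finset (Fin m) → ℝ :=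
    fun s => if h : (s.image a).Nonempty then (s.image a).min' h else 0 with hlof
  set hif : Finset (Fin m) → ℝ :=
    fun s => if h : (s.image a).Nonempty then (s.image a).max' h else 0 with hhif
  obtain ⟨sv, hsvC, hsvmax⟩ := C.exists_max_image lof hCne
  obtain ⟨su, hsuC, hsumin⟩ := C.exists_min_image hif hCne
  obtain ⟨hsvcard, hsvinc⟩ := (hmemC sv).mp hsvC
  obtain ⟨hsucard, hsuinc⟩ := (hmemC su).mp hsuC
  set v : ℝ := lof sv with hv
  set u : ℝ := hif su with hu
  have hv_eq : v = (sv.image a).min' (hSne sv hsvC) := by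
    rw [hv, hlof]
    exact dif_pos _
  have hu_eq : u = (su.image a).max' (hSne su hsuC) := by
    rw [hu, hhif]
    exact dif_pos _
  obtain ⟨xv, hxvmem, hxv⟩ : ∃ x ∈ sv, a x = v := by
    have := (sv.image a).min'_mem (hSne sv hsvC)
    rw [← hv_eq] at this
    obtain ⟨x, hx, hax⟩ := Finset.mem_image.mp this
    exact ⟨x, hx, hax⟩
  obtain ⟨xu, hxumem, hxu⟩ : ∃ x ∈ su, a x = u := by
    have := (su.image a).max'_mem (hSne su hsuC)
    rw [← hu_eq] at this
    obtain ⟨x, hx, hax⟩ := Finset.mem_image.mp this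
    exact ⟨x, hx, hax⟩
  have hv_le : ∀ i ∈ sv, v ≤ a i := by
    intro i hi
    rw [hv_eq]
    exact Finset.min'_le _ _ (Finset.mem_image_of_mem a hi)
  have hu_ge : ∀ i ∈ su, a i ≤ u := by
    intro i hi
    rw [hu_eq]
    exact Finset.le_max' _ _ (Finset.mem_image_of_mem a hi)
  -- decreasing chain D with values ≤ v
  obtain ⟨D, hDcard, hDdec, hDle⟩ :
      ∃ D : Finset (Fin m), D.card = l' ∧ DecChain a D ∧ ∀ i ∈ D, a i ≤ v := by
    obtain ⟨w, hw1, hw2, hw3⟩ := exists_sep_above a v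
    rcases front_insert ha hsat rfl rfl hw3 with ⟨s, h1, h2, h3⟩ | ⟨D, h1, h2, h3⟩
    · exfalso
      have hsC : s ∈ C := (hmemC s).mpr ⟨h1, h2⟩
      have hle : lof s ≤ v := hsvmax s hsC
      have hne := hSne s hsC
      have hlofeq : lof s = (s.image a).min' hne := dif_pos _
      obtain ⟨x, hx, hax⟩ := Finset.mem_image.mp ((s.image a).min'_mem hne)
      have h5 := h3 x hx
      rw [hax] at h5
      rw [hlofeq] at hle
      linarith
    · refine ⟨D, h1, h2, fun i hi => ?_⟩
      by_contra h
      push_neg at h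
      exact absurd (h3 i hi) (not_lt.mpr (hw2 i h).le)
  -- decreasing chain D' with values ≥ u
  obtain ⟨D', hD'card, hD'dec, hD'ge⟩ :
      ∃ D' : Finset (Fin m), D'.card = l' ∧ DecChain a D' ∧ ∀ i ∈ D', u ≤ a i := by
    obtain ⟨w, hw1, hw2, hw3⟩ := exists_sep_below a u
    rcases back_insert ha hsat rfl rfl hw3 with ⟨s, h1, h2, h3⟩ | ⟨D', h1, h2, h3⟩
    · exfalso
      have hsC : s ∈ C := (hmemC s).mpr ⟨h1, h2⟩
      have hle : u ≤ hif s := hsumin s hsC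
      have hne := hSne s hsC
      have hhifeq : hif s = (s.image a).max' hne := dif_pos _
      obtain ⟨x, hx, hax⟩ := Finset.mem_image.mp ((s.image a).max'_mem hne)
      have h5 := h3 x hx
      rw [hax] at h5
      rw [hhifeq] at hle
      linarith
    · refine ⟨D', h1, h2, fun i hi => ?_⟩
      by_contra h
      push_neg at h
      exact absurd (h3 i hi) (not_lt.mpr (hw2 i h).le)
  have hmcard : ∀ T : Finset (Fin m), T.card ≤ m := by
    intro T
    have := Finset.card_le_card (Finset.subset_univ T)
    simpa using this
  have hminle : min (2 * (k' + 1) + (l' + 1) - 5) (2 * (l' + 1) + (k' + 1) - 5)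
      ≤ min (2 * k' + l' - 2) (2 * l' + k' - 2) := by omega
  rcases lt_trichotomy u v with hlt | heq | hgt
  · -- u < v : sv, su disjoint, plus D
    have hdisj : (sv ∩ su).card = 0 := by
      rw [Finset.card_eq_zero, Finset.eq_empty_iff_forall_notMem]
      intro i hi
      rw [Finset.mem_inter] at hi
      have h1 := hv_le i hi.1
      have h2 := hu_ge i hi.2
      linarith
    have h1 := inter_card_le_one hsvinc hDdec
    have h2 := inter_card_le_one hsuinc hDdec
    have h3 := card_triple sv su D
    have h4 := hmcard (sv ∪ su ∪ D)
    have : 2 * k' + l' - 2 ≤ m := by omega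
    omega
  · -- u = v : concatenate sv and su into a long increasing chain, plus D
    have hxeq : xu = xv := ha (by rw [hxu, hxv, heq])
    have hxv_le : ∀ p ∈ sv, xv ≤ p := by
      intro p hp
      by_contra h
      push_neg at h
      have := hsvinc hp hxvmem h
      rw [hxv] at this
      exact absurd (hv_le p hp) (not_le.mpr this)
    have hxu_ge : ∀ p ∈ su, p ≤ xu := by
      intro p hp
      by_contra h
      push_neg at h
      have := hsuinc hxumem hp h
      rw [hxu] at this
      exact absurd (hu_ge p hp) (not_le.mpr this)
    have hJinc : IncChain a (sv ∪ su) := by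
      intro i hi j hj hij
      rcases Finset.mem_union.mp hi with hi' | hi' <;>
        rcases Finset.mem_union.mp hj with hj' | hj'
      · exact hsvinc hi' hj' hij
      · exfalso
        have h1 := hxv_le i hi'
        have h2 := hxu_ge j hj'
        rw [hxeq] at h2
        exact absurd (lt_of_le_of_lt h1 hij) (not_lt.mpr h2)
      · have h1 := hu_ge i hi'
        have h2 := hv_le j hj'
        refine lt_of_le_of_ne (by linarith) (fun h => ?_)
        exact absurd (ha h) (ne_of_lt hij)
      · exact hsuinc hi' hj' hij
    have hinter : (sv ∩ su).card ≤ 1 := by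
      apply Finset.card_le_one.mpr
      intro i hi j hj
      rw [Finset.mem_inter] at hi hj
      have e1 : a i = v := le_antisymm (heq ▸ hu_ge i hi.2) (hv_le i hi.1)
      have e2 : a j = v := le_antisymm (heq ▸ hu_ge j hj.2) (hv_le j hj.1)
      exact ha (e1.trans e2.symm)
    have h1 := Finset.card_union_add_card_inter sv su
    have h2 := Finset.card_union_add_card_inter (sv ∪ su) D
    have h3 := inter_card_le_one hJinc hDdec
    have h4 := hmcard (sv ∪ su ∪ D)
    have : 2 * k' + l' - 2 ≤ m := by omega
    omega
  · -- v < u : D, D' disjoint, plus sv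
    have hdisj : (D ∩ D').card = 0 := by
      rw [Finset.card_eq_zero, Finset.eq_empty_iff_forall_notMem]
      intro i hi
      rw [Finset.mem_inter] at hi
      have h1 := hDle i hi.1
      have h2 := hD'ge i hi.2
      linarith
    have h1 := inter_card_le_one hsvinc hDdec
    have h2 := inter_card_le_one hsvinc hD'dec
    have h3 := card_triple D D' sv
    have h4 := hmcard (D ∪ D' ∪ sv)
    have hDD' : (D ∩ sv).card ≤ 1 := by
      rw [Finset.inter_comm]; exact h1
    have hDD'2 : (D' ∩ sv).card ≤ 1 := by
      rw [Finset.inter_comm]; exact h2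
    have : 2 * l' + k' - 2 ≤ m := by omega
    omega
end
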